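/- arXiv:1106.1498 — 12 statements merged into one kernel-verified Lean document; each statement's English description precedes it below -/
import Mathlib

section
/- The number of m-ballot paths of size n (lattice paths from (0,0) to (mn,n) using unit north and east steps that never go below the line x = m·y) equals (1/(mn+1))·C((m+1)n, n). -/
/-!
Raney's cycle lemma: if integers `x₀, …, x_{L-1}` sum to `1`, exactly one of their `L` cyclic
rotations has all partial sums positive. Weight an east step by `1` and a north step by `-m`; a word
of length `L = (m+1)n + 1` with `n` north steps then has total weight `1`. Hence rotating dominating
words (all prefixes of positive weight) is a bijection from `Fin L × {dominating words}` onto all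
`choose L n` words, so `L · #dominating = choose L n`. A dominating word starts with an east step,
and deleting it is a bijection onto the `m`-ballot paths of size `n`. Finally
`choose ((m+1)n) n · L = choose L n · (mn + 1)`.
-/

open Finset

theorem not_lt_of_forall_lt_add {L : ℕ} {f : ℕ → ℤ} (hf : ∀ k, f (k + L) = f k + 1)
    {a b : ℕ} (hab : a < b) (hbL : b < L + a)
    (ha : ∀ k, 0 < k → k ≤ L → f a < f (a + k)) (hb : ∀ k, 0 < k → k ≤ L → f b < f (b + k)) :
    False := by
  have hlt : f a < f b := by
    simpa [Nat.add_sub_cancel' hab.le] using ha (b - a) (by omega) (by omega)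
  have hgt : f b < f a + 1 := by
    simpa [show b + (a + L - b) = a + L by omega, hf] using hb (a + L - b) (by omega) (by omega)
  omega

theorem existsUnique_lt_forall_lt_add {L : ℕ} (hL : 0 < L) {f : ℕ → ℤ}
    (hf : ∀ k, f (k + L) = f k + 1) :
    ∃! t, t < L ∧ ∀ k, 0 < k → k ≤ L → f t < f (t + k) := by
  obtain ⟨a, ha, hmin⟩ := exists_min_image (range L) f ⟨0, mem_range.2 hL⟩
  -- `t` is the last place in `[0, L)` where `f` attains its minimum.
  obtain ⟨t, ht, htmax⟩ :
      ∃ t ∈ (range L).filter (f · = f a), ∀ y ∈ (range L).filter (f · = f a), y ≤ t :=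
    have hne : ((range L).filter (f · = f a)).Nonempty := ⟨a, mem_filter.2 ⟨ha, rfl⟩⟩
    ⟨_, max'_mem _ hne, le_max' _⟩
  obtain ⟨htL, hta⟩ := mem_filter.1 ht
  rw [mem_range] at htL
  have htP : ∀ k, 0 < k → k ≤ L → f t < f (t + k) := fun k hk hkL => by
    rcases lt_or_ge (t + k) L with h | h
    · have hle := hmin _ (mem_range.2 h)
      have hne : f (t + k) ≠ f a := fun he =>
        absurd (htmax (t + k) (mem_filter.2 ⟨mem_range.2 h, he⟩)) (by omega)
      omega
    · have := hmin (t + k - L) (mem_range.2 (by omega))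
      rw [show t + k = t + k - L + L by omega, hf]
      omega
  refine ⟨t, ⟨htL, htP⟩, fun b ⟨hbL, hbP⟩ => le_antisymm ?_ ?_⟩
  · exact not_lt.1 fun h => not_lt_of_forall_lt_add hf h (by omega) htP hbP
  · exact not_lt.1 fun h => not_lt_of_forall_lt_add hf h (by omega) hbP htP

section CyclicPrefixSum

open Fin.NatCast

variable {M : Type*} [AddCommMonoid M] {L : ℕ} [NeZero L]

/-- The cast `ℕ → Fin L` reduces mod `L`, so this sums the `L`-periodic extension of `x`. -/
def cyclicPrefixSum (x : Fin L → M) (k : ℕ) : M :=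
  ∑ i ∈ range k, x i

theorem cyclicPrefixSum_add (x : Fin L → M) (j k : ℕ) :
    cyclicPrefixSum x (j + k) =
      cyclicPrefixSum x j + cyclicPrefixSum (fun i => x (i + (j : Fin L))) k := by
  rw [cyclicPrefixSum, sum_range_add]
  congr 1
  exact sum_congr rfl fun i _ => by rw [Nat.cast_add, add_comm]

theorem cyclicPrefixSum_period (x : Fin L → M) : cyclicPrefixSum x L = ∑ i, x i :=
  (Fin.sum_univ_eq_sum_range (fun i => x i) L).symm.trans (by simp)

theorem cyclicPrefixSum_add_period (x : Fin L → M) (k : ℕ) :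
    cyclicPrefixSum x (k + L) = cyclicPrefixSum x k + ∑ i, x i := by
  rw [add_comm k, cyclicPrefixSum_add, cyclicPrefixSum_period, add_comm]
  simp

theorem existsUnique_forall_cyclicPrefixSum_pos (x : Fin L → ℤ) (hx : ∑ i, x i = 1) :
    ∃! j : Fin L, ∀ k, 0 < k → k ≤ L → 0 < cyclicPrefixSum (fun i => x (i + j)) k := by
  have hP (j : Fin L) (k : ℕ) : 0 < cyclicPrefixSum (fun i => x (i + j)) k ↔
      cyclicPrefixSum x j < cyclicPrefixSum x (j + k) := by
    rw [cyclicPrefixSum_add, Fin.cast_val_eq_self, lt_add_iff_pos_right]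
  obtain ⟨t, ⟨htL, ht⟩, huniq⟩ := existsUnique_lt_forall_lt_add (NeZero.pos L)
    fun k => (cyclicPrefixSum_add_period x k).trans (by rw [hx])
  refine ⟨⟨t, htL⟩, fun k hk hkL => (hP _ k).2 (ht k hk hkL), fun j hj => Fin.ext ?_⟩
  exact huniq j ⟨j.isLt, fun k hk hkL => (hP j k).1 (hj k hk hkL)⟩

theorem cyclicPrefixSum_succ_of_le {N : ℕ} (x : Fin (N + 1) → M) {k : ℕ} (hk : k ≤ N) :
    cyclicPrefixSum x (k + 1) =
      x 0 + ∑ i ∈ univ.filter (fun i : Fin N => (i : ℕ) < k), x i.succ := by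
  rw [cyclicPrefixSum, sum_range_succ', add_comm, Nat.cast_zero]
  congr 1
  refine (sum_nbij (fun i => i.val) (fun i hi => by simpa using hi) Fin.val_injective.injOn
    (fun a ha => ⟨⟨a, (mem_range.1 ha).trans_le hk⟩, by simpa using ha, rfl⟩) fun i _ => ?_).symm
  rw [← Fin.val_succ, Fin.cast_val_eq_self]

end CyclicPrefixSum

section BoolWords

variable {ι : Type*}

def boolFunEquivFinset [Fintype ι] [DecidableEq ι] : (ι → Bool) ≃ Finset ι where
  toFun v := univ.filter (v · = true)
  invFun s i := decide (i ∈ s)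
  left_inv v := by ext i; simp
  right_inv s := by ext i; simp

theorem card_boolFun_card_filter_eq [Fintype ι] (n : ℕ) :
    Nat.card {v : ι → Bool // #(univ.filter (v · = true)) = n} = (Fintype.card ι).choose n := by
  classical
  calc _ = Nat.card {s : Finset ι // #s = n} :=
        Nat.card_congr (boolFunEquivFinset.subtypeEquiv fun _ => Iff.rfl)
    _ = _ := by rw [Nat.card_eq_fintype_card, Fintype.card_finset_len]

theorem card_filter_comp_equiv [Fintype ι] (v : ι → Bool) (e : ι ≃ ι) :
    #(univ.filter fun i => v (e i) = true) = #(univ.filter (v · = true)) :=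
  card_equiv e (by simp)

def stepWeight (m : ℕ) (b : Bool) : ℤ := if b then -m else 1

theorem stepWeight_pos_iff (m : ℕ) (b : Bool) : 0 < stepWeight m b ↔ b = false := by
  cases b <;> simp [stepWeight]

theorem sum_stepWeight (m : ℕ) (s : Finset ι) (v : ι → Bool) :
    ∑ i ∈ s, stepWeight m (v i) = #(s.filter (v · = false)) - m * #(s.filter (v · = true)) := by
  simp only [stepWeight, sum_ite, sum_const, Bool.not_eq_true, nsmul_eq_mul, smul_neg, mul_one]
  ring

end BoolWords

section Dominating

def IsDominating {L : ℕ} [NeZero L] (m : ℕ) (v : Fin L → Bool) : Prop :=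
  ∀ k, 0 < k → k ≤ L → 0 < cyclicPrefixSum (fun i => stepWeight m (v i)) k

theorem IsDominating.apply_zero {L : ℕ} [NeZero L] {m : ℕ} {v : Fin L → Bool}
    (hv : IsDominating m v) : v 0 = false := by
  have h := hv 1 one_pos NeZero.one_le
  simpa [cyclicPrefixSum, stepWeight_pos_iff] using h

variable {m n : ℕ}

theorem sum_stepWeight_eq_one {v : Fin ((m + 1) * n + 1) → Bool}
    (hv : #(univ.filter (v · = true)) = n) : ∑ i, stepWeight m (v i) = 1 := by
  have hcard := card_filter_add_card_filter_not (s := univ) (v · = true)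
  simp only [Bool.not_eq_true, hv, card_univ, Fintype.card_fin] at hcard
  rw [sum_stepWeight, hv]
  zify at hcard
  linear_combination hcard

theorem existsUnique_isDominating_rotate {u : Fin ((m + 1) * n + 1) → Bool}
    (hu : #(univ.filter (u · = true)) = n) : ∃! j, IsDominating m fun i => u (i + j) :=
  existsUnique_forall_cyclicPrefixSum_pos _ (sum_stepWeight_eq_one hu)

variable (m n) in
theorem mul_card_isDominating :
    ((m + 1) * n + 1) * Nat.card {v : Fin ((m + 1) * n + 1) → Bool //
      #(univ.filter (v · = true)) = n ∧ IsDominating m v} = ((m + 1) * n + 1).choose n := by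
  set L := (m + 1) * n + 1
  let D := {v : Fin L → Bool // #(univ.filter (v · = true)) = n ∧ IsDominating m v}
  let W := {v : Fin L → Bool // #(univ.filter (v · = true)) = n}
  let rotate (p : Fin L × D) : W :=
    ⟨fun i => p.2.1 (i - p.1), (card_filter_comp_equiv _ (Equiv.subRight p.1)).trans p.2.2.1⟩
  have hrotate (p : Fin L × D) : (fun i => (rotate p).1 (i + p.1)) = p.2.1 := by
    ext; simp [rotate]
  have hbij : Function.Bijective rotate := by
    refine ⟨fun p q h => ?_, fun u => ?_⟩
    · have hj : p.1 = q.1 := (existsUnique_isDominating_rotate (rotate p).2).unique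
        (by rw [hrotate]; exact p.2.2.2) (by rw [h, hrotate]; exact q.2.2.2)
      exact Prod.ext hj (Subtype.ext (by rw [← hrotate p, ← hrotate q, h, hj]))
    · obtain ⟨j, hj, -⟩ := existsUnique_isDominating_rotate u.2
      exact ⟨(j, ⟨fun i => u.1 (i + j),
        (card_filter_comp_equiv _ (Equiv.addRight j)).trans u.2, hj⟩), by ext; simp [rotate]⟩
  have hcard := Nat.card_eq_of_bijective rotate hbij
  rwa [Nat.card_prod, Nat.card_eq_fintype_card (α := Fin L), Fintype.card_fin,
    card_boolFun_card_filter_eq, Fintype.card_fin] at hcard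

end Dominating

section Ballot

variable {N : ℕ}

def IsBallot (m : ℕ) (w : Fin N → Bool) : Prop :=
  ∀ k ≤ N, m * #(univ.filter fun i : Fin N => (i : ℕ) < k ∧ w i = true) ≤
    #(univ.filter fun i : Fin N => (i : ℕ) < k ∧ w i = false)

theorem card_filter_cons_false (w : Fin N → Bool) :
    #(univ.filter ((Fin.cons false w : Fin (N + 1) → Bool) · = true)) =
      #(univ.filter (w · = true)) := by
  rw [card_filter, card_filter, Fin.sum_univ_succ]
  simp

theorem isDominating_cons_false_iff (m : ℕ) (w : Fin N → Bool) :
    IsDominating m (Fin.cons false w : Fin (N + 1) → Bool) ↔ IsBallot m w := by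
  have key (k : ℕ) (hk : k ≤ N) :
      0 < cyclicPrefixSum
          (fun i => stepWeight m ((Fin.cons false w : Fin (N + 1) → Bool) i)) (k + 1) ↔
        m * #(univ.filter fun i : Fin N => (i : ℕ) < k ∧ w i = true) ≤
          #(univ.filter fun i : Fin N => (i : ℕ) < k ∧ w i = false) := by
    rw [cyclicPrefixSum_succ_of_le _ hk]
    simp only [Fin.cons_zero, Fin.cons_succ, sum_stepWeight, filter_filter]
    simp only [stepWeight, Bool.false_eq_true, if_false]
    omega
  refine ⟨fun h k hk => (key k hk).1 (h (k + 1) k.succ_pos (by omega)), fun h k hk hkL => ?_⟩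
  obtain ⟨k, rfl⟩ := Nat.exists_eq_add_one.2 hk
  exact (key k (by omega)).2 (h k (by omega))

theorem card_isBallot_eq_card_isDominating (m n : ℕ) :
    Nat.card {w : Fin N → Bool // #(univ.filter (w · = true)) = n ∧ IsBallot m w} =
      Nat.card {v : Fin (N + 1) → Bool //
        #(univ.filter (v · = true)) = n ∧ IsDominating m v} := by
  refine Nat.card_eq_of_bijective (fun w => ⟨Fin.cons false w.1,
    (card_filter_cons_false w.1).trans w.2.1, (isDominating_cons_false_iff m w.1).2 w.2.2⟩)
    ⟨fun w w' h => Subtype.ext <|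
        Fin.cons_right_injective (α := fun _ => Bool) false (congrArg Subtype.val h),
      fun v => ?_⟩
  have hv : Fin.cons false (Fin.tail v.1) = v.1 := by
    rw [← v.2.2.apply_zero, Fin.cons_self_tail]
  refine ⟨⟨Fin.tail v.1, ?_, ?_⟩, Subtype.ext hv⟩
  · rw [← card_filter_cons_false, hv, v.2.1]
  · rw [← isDominating_cons_false_iff, hv]
    exact v.2.2

theorem mul_card_isBallot (m n : ℕ) :
    (m * n + 1) * Nat.card {w : Fin ((m + 1) * n) → Bool //
      #(univ.filter (w · = true)) = n ∧ IsBallot m w} = ((m + 1) * n).choose n := by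
  have h := Nat.choose_mul_succ_eq ((m + 1) * n) n
  rw [← mul_card_isDominating, ← card_isBallot_eq_card_isDominating,
    show (m + 1) * n + 1 - n = m * n + 1 by rw [add_mul, one_mul]; omega] at h
  exact Nat.eq_of_mul_eq_mul_right (by positivity : 0 < (m + 1) * n + 1) (by rw [h]; ring)

end Ballot

theorem mBallot_count_general (m n : ℕ) :
    (Nat.card {w : Fin ((m+1)*n) → Bool //
      (Finset.univ.filter fun i => w i = true).card = n ∧
      ∀ k ≤ (m+1)*n,
        m * (Finset.univ.filter fun i : Fin ((m+1)*n) => (i : ℕ) < k ∧ w i = true).card ≤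
          (Finset.univ.filter fun i : Fin ((m+1)*n) => (i : ℕ) < k ∧ w i = false).card} : ℚ)
    = 1/((m : ℚ)*n+1) * (Nat.choose ((m+1)*n) n : ℚ) := by
  have h := mul_card_isBallot m n
  unfold IsBallot at h
  rw [← h]
  push_cast
  field_simp

/-- The number of `m`-ballot paths of size `n` (paths from (0,0) to (mn,n) with unit north
and east steps, never going below the line x = m·y) equals (1/(mn+1))·C((m+1)n, n).
A path is encoded as a function `Fin ((m+1)*n) → Bool`, `true` = north step, `false` = east
step. The condition that every vertex (x,y) satisfies x ≥ m·y says that every prefix has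
(number of east steps) ≥ m · (number of north steps). -/
theorem mBallot_count (m n : ℕ) (hm : 1 ≤ m) :
    (Nat.card {w : Fin ((m+1)*n) → Bool //
      (Finset.univ.filter fun i => w i = true).card = n ∧
      ∀ k ≤ (m+1)*n,
        m * (Finset.univ.filter fun i : Fin ((m+1)*n) => (i : ℕ) < k ∧ w i = true).card ≤
          (Finset.univ.filter fun i : Fin ((m+1)*n) => (i : ℕ) < k ∧ w i = false).card} : ℚ)
    = 1/((m : ℚ)*n+1) * (Nat.choose ((m+1)*n) n : ℚ) :=
  mBallot_count_general m n
end

section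
/- For all integers m > i ≥ 1 and 1 ≤ p ≤ m−i, the sum over j from 0 to m−i−2 of (1/(j+1))·C(j+1, p)·C(m−i−j−1, p−1)·(j+1−p(2j+i−m+2))/(m−i−j−1) equals (m−i−1) if p = 1 and 0 otherwise. -/
/-- For integers m > i ≥ 1 and 1 ≤ p ≤ m−i,
∑_{j=0}^{m−i−2} (1/(j+1))·C(j+1,p)·C(m−i−j−1,p−1)·(j+1−p(2j+i−m+2))/(m−i−j−1)
equals m−i−1 if p = 1 and 0 otherwise. -/
theorem zeilberger_sum (m i p : ℕ) (hi : 1 ≤ i) (him : i < m) (hp : 1 ≤ p) (hpm : p ≤ m - i) :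
    ∑ j ∈ Finset.range (m - i - 1),
      (1/((j : ℚ)+1)) * (Nat.choose (j+1) p : ℚ) * (Nat.choose (m - i - j - 1) (p-1) : ℚ) *
        (((j : ℚ) + 1 - (p : ℚ) * (2*(j : ℚ) + (i : ℚ) - (m : ℚ) + 2)) /
          ((m : ℚ) - (i : ℚ) - (j : ℚ) - 1))
      = if p = 1 then (m : ℚ) - (i : ℚ) - 1 else 0 := by
  set n := m - i with hn
  have hmiQ : (m : ℚ) - (i : ℚ) = (n : ℚ) := by
    rw [hn, Nat.cast_sub him.le]
  have hn1 : 1 ≤ n := by omega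
  have key : ∀ j ∈ Finset.range (n-1),
      (1/((j : ℚ)+1)) * (Nat.choose (j+1) p : ℚ) * (Nat.choose (n - j - 1) (p-1) : ℚ) *
        (((j : ℚ) + 1 - (p : ℚ) * (2*(j : ℚ) + (i : ℚ) - (m : ℚ) + 2)) /
          ((m : ℚ) - (i : ℚ) - (j : ℚ) - 1))
      = (fun j => (Nat.choose j p : ℚ) * (Nat.choose (n-1-j) (p-1) : ℚ)) (j+1)
        - (fun j => (Nat.choose j p : ℚ) * (Nat.choose (n-1-j) (p-1) : ℚ)) j := by
    intro j hj
    simp only [Finset.mem_range] at hj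
    simp only []
    set d := n - 1 - j with hd
    have hd1 : 1 ≤ d := by omega
    have hdn : n - j - 1 = d := by omega
    have hdn2 : n - 1 - (j+1) = d - 1 := by omega
    rw [hdn, hdn2]
    have hdq : (d : ℚ) + j + 1 = (n : ℚ) := by exact_mod_cast congrArg (Nat.cast (R := ℚ)) (by omega : d + j + 1 = n)
    have hQ : (m : ℚ) - (i : ℚ) - (j : ℚ) - 1 = (d : ℚ) := by rw [hmiQ]; linarith
    have hdne : (d : ℚ) ≠ 0 := by positivity
    have hjne : (j : ℚ) + 1 ≠ 0 := by positivity
    rw [hQ]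
    by_cases hp1 : p = 1
    · subst hp1
      simp only [Nat.choose_one_right, Nat.sub_self, Nat.choose_zero_right, Nat.cast_one,
        Nat.cast_add, Nat.cast_one]
      field_simp
      linear_combination hQ
    · have hp2 : 2 ≤ p := by omega
      by_cases hjp : p ≤ j + 1
      · have e1 : (j+1) * Nat.choose j (p-1) = Nat.choose (j+1) p * p := by
          have h := Nat.add_one_mul_choose_eq j (p-1)
          have hpp : p - 1 + 1 = p := by omega
          simp only [Nat.succ_eq_add_one, hpp] at h
          exact h
        have e2 : Nat.choose j p * p = Nat.choose j (p-1) * (j - (p-1)) := by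
          have h := Nat.choose_succ_right_eq j (p-1)
          have hpp : p - 1 + 1 = p := by omega
          simp only [Nat.succ_eq_add_one, hpp] at h
          exact h
        have e3 : d * Nat.choose (d-1) (p-2) = Nat.choose d (p-1) * (p-1) := by
          have h := Nat.add_one_mul_choose_eq (d-1) (p-2)
          have h1 : d - 1 + 1 = d := by omega
          have h2 : p - 2 + 1 = p - 1 := by omega
          simp only [Nat.succ_eq_add_one, h1, h2] at h
          exact h
        have e4 : Nat.choose d (p-1) = Nat.choose (d-1) (p-2) + Nat.choose (d-1) (p-1) := by
          have h := Nat.choose_succ_succ (d-1) (p-2)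
          have h1 : d - 1 + 1 = d := by omega
          have h2 : p - 2 + 1 = p - 1 := by omega
          simp only [Nat.succ_eq_add_one, h1, h2] at h
          exact h
        have hpne : (p : ℚ) ≠ 0 := by positivity
        have q1 : ((j:ℚ)+1) * (Nat.choose j (p-1) : ℚ) = (Nat.choose (j+1) p : ℚ) * p := by
          exact_mod_cast congrArg (Nat.cast (R := ℚ)) e1
        have q2 : (Nat.choose j p : ℚ) * p = (Nat.choose j (p-1) : ℚ) * ((j:ℚ) + 1 - p) := by
          have h := congrArg (Nat.cast (R := ℚ)) e2
          push_cast [Nat.cast_sub (by omega : p - 1 ≤ j), Nat.cast_sub (by omega : 1 ≤ p)] at h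
          linarith
        have q3 : (d:ℚ) * (Nat.choose (d-1) (p-2) : ℚ) = (Nat.choose d (p-1) : ℚ) * ((p:ℚ)-1) := by
          have h := congrArg (Nat.cast (R := ℚ)) e3
          push_cast [Nat.cast_sub (by omega : 1 ≤ p)] at h
          linarith
        have q4 : (Nat.choose d (p-1) : ℚ) = (Nat.choose (d-1) (p-2) : ℚ) + (Nat.choose (d-1) (p-1) : ℚ) := by
          exact_mod_cast congrArg (Nat.cast (R := ℚ)) e4
        have hX : (Nat.choose (j+1) p : ℚ) = ((j:ℚ)+1) * (Nat.choose j (p-1) : ℚ) / p := by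
          field_simp; linarith [q1]
        have hZ : (Nat.choose j p : ℚ) = (Nat.choose j (p-1) : ℚ) * ((j:ℚ) + 1 - p) / p := by
          field_simp; linarith [q2]
        have hW : (Nat.choose (d-1) (p-2) : ℚ) = (Nat.choose d (p-1) : ℚ) * ((p:ℚ)-1) / d := by
          field_simp; linarith [q3]
        have hY : (Nat.choose (d-1) (p-1) : ℚ)
            = (Nat.choose d (p-1) : ℚ) - (Nat.choose d (p-1) : ℚ) * ((p:ℚ)-1) / d := by
          rw [← hW]; linarith [q4]
        rw [hX, hZ, hY]
        have hnum : (j : ℚ) + 1 - (p : ℚ) * (2*(j : ℚ) + (i : ℚ) - (m : ℚ) + 2)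
            = (1 - (p:ℚ)) * ((j:ℚ)+1) + (p:ℚ) * d := by
          rw [show (2*(j : ℚ) + (i : ℚ) - (m : ℚ) + 2) = 2*(j:ℚ) + 2 - ((m:ℚ) - i) by ring,
            hmiQ]
          linear_combination (-(p:ℚ)) * hdq
        rw [hnum]
        field_simp
        ring
      · have hz1 : Nat.choose (j+1) p = 0 := Nat.choose_eq_zero_of_lt (by omega)
        have hz2 : Nat.choose j p = 0 := Nat.choose_eq_zero_of_lt (by omega)
        simp [hz1, hz2]
  rw [Finset.sum_congr rfl key,
    Finset.sum_range_sub (fun j => (Nat.choose j p : ℚ) * (Nat.choose (n-1-j) (p-1) : ℚ))]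
  have h0 : Nat.choose 0 p = 0 := Nat.choose_eq_zero_of_lt (by omega)
  rw [Nat.sub_self]
  by_cases hp1 : p = 1
  · subst hp1
    simp [h0, Nat.choose_one_right, hmiQ]
    push_cast [Nat.cast_sub hn1]
    ring
  · have : Nat.choose 0 (p-1) = 0 := Nat.choose_eq_zero_of_lt (by omega)
    simp [h0, this, hp1]
end

section
/- Let Λ be the operator on formal power series H(z;u) ∈ ℚ[u][[z]] defined by ΛH(z;u) = (1+u)(1+zu)·(H(z;u)−H(z;0))/u. Writing w = 1+zu, for every integer p ≥ 1 one has: Λ(1/wᵖ) = (1−z)/w^{p−1} − z·Σ_{a=0}^{p−2} 1/wᵃ − w; Λ(1) = 0; and Λ(wᵖ) = (z−1)w + z·Σ_{a=2}^{p} wᵃ + w^{p+1}. -/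
/-! Since `u` is not a zero divisor, `Λ H = G` is equivalent to `u·G = (1+u)·w·(H − H(z;0))`.
Specialising `u = 0` sends `w` to `1`, hence also `1/w` to `1`, so `H(z;0) = 1` for each of
`1/wᵖ`, `1` and `wᵖ`. Each identity is then a geometric-sum identity in a commutative ring,
using only `w = 1 + z·u` and, for `1/w`, `w·(1/w) = 1`. -/

open Polynomial PowerSeries

/-- w = 1 + zu, as a power series in z with coefficients in ℚ[u]. -/
noncomputable def w : PowerSeries (Polynomial ℚ) :=
  1 + PowerSeries.X * PowerSeries.C Polynomial.X

/-- The operator Λ : H(z;u) ↦ (1+u)(1+zu)(H(z;u) − H(z;0))/u, acting on ℚ[u][[z]].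
Division by u is performed coefficientwise via exact polynomial division. -/
noncomputable def Lam (H : PowerSeries (Polynomial ℚ)) : PowerSeries (Polynomial ℚ) :=
  PowerSeries.C (1 + Polynomial.X) * w *
    PowerSeries.mk fun n =>
      (PowerSeries.coeff n H
        - Polynomial.C ((PowerSeries.coeff n H).eval 0)) /ₘ Polynomial.X

section GeometricIdentities

variable {R : Type*} [CommRing R]

theorem mul_sub_one_inv_pow_eq {v vi z u : R} (hv : v = 1 + z * u) (hvi : v * vi = 1) (q : ℕ) :
    (1 + u) * v * (vi ^ (q + 1) - 1) =
      u * ((1 - z) * vi ^ q - z * ∑ a ∈ Finset.range q, vi ^ a - v) := by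
  have hgeom : (∑ a ∈ Finset.range q, vi ^ a) * (vi - 1) = vi ^ q - 1 := geom_sum_mul vi q
  linear_combination ((1 + u) * vi ^ q + ∑ a ∈ Finset.range q, vi ^ a) * hvi
    - v * hgeom - (vi ^ q + ∑ a ∈ Finset.range q, vi ^ a) * hv

theorem mul_sub_one_pow_eq {v z u : R} (hv : v = 1 + z * u) (q : ℕ) :
    (1 + u) * v * (v ^ (q + 1) - 1) =
      u * ((z - 1) * v + z * ∑ a ∈ Finset.Icc 2 (q + 1), v ^ a + v ^ (q + 2)) := by
  have hgeom : (∑ a ∈ Finset.Icc 2 (q + 1), v ^ a) * (v - 1) = v ^ (q + 2) - v ^ 2 := by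
    rw [← Finset.Ico_add_one_right_eq_Icc, geom_sum_Ico_mul v (by omega)]
    ring
  linear_combination (∑ a ∈ Finset.Icc 2 (q + 1), v ^ a + v) * hv - hgeom

end GeometricIdentities

noncomputable def evalZeroC : ℚ[X] →+* ℚ[X] :=
  Polynomial.C.comp (Polynomial.evalRingHom 0)

theorem C_X_mul_Lam (H : PowerSeries ℚ[X]) :
    PowerSeries.C Polynomial.X * Lam H =
      PowerSeries.C (1 + Polynomial.X) * w * (H - PowerSeries.map evalZeroC H) := by
  rw [Lam, mul_left_comm]
  congr 1
  ext n : 1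
  set q := coeff n H
  have hdiv : Polynomial.X * ((q - Polynomial.C (q.eval 0)) /ₘ Polynomial.X) =
      q - Polynomial.C (q.eval 0) := by
    simpa [Polynomial.modByMonic_X] using
      Polynomial.modByMonic_add_div (q - Polynomial.C (q.eval 0)) Polynomial.X
  rw [PowerSeries.coeff_C_mul, coeff_mk, hdiv, map_sub, PowerSeries.coeff_map]
  rfl

theorem Lam_eq_of_C_X_mul_eq {H G : PowerSeries ℚ[X]}
    (h : PowerSeries.C Polynomial.X * G =
      PowerSeries.C (1 + Polynomial.X) * w * (H - PowerSeries.map evalZeroC H)) :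
    Lam H = G := by
  have hu : (PowerSeries.C Polynomial.X : PowerSeries ℚ[X]) ≠ 0 :=
    (map_ne_zero_iff _ (PowerSeries.C_injective)).mpr Polynomial.X_ne_zero
  exact mul_left_cancel₀ hu (by rw [C_X_mul_Lam, h])

theorem map_evalZeroC_w : PowerSeries.map evalZeroC w = 1 := by
  simp [w, evalZeroC]

theorem map_evalZeroC_of_w_mul_eq_one {wi : PowerSeries ℚ[X]} (hwi : w * wi = 1) :
    PowerSeries.map evalZeroC wi = 1 := by
  simpa [map_evalZeroC_w] using congrArg (PowerSeries.map evalZeroC) hwi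

theorem C_one_add_X :
    PowerSeries.C (1 + Polynomial.X : ℚ[X]) = 1 + PowerSeries.C Polynomial.X := by
  rw [map_add, map_one]

theorem Lam_inv_pow {wi : PowerSeries ℚ[X]} (hwi : w * wi = 1) (q : ℕ) :
    Lam (wi ^ (q + 1)) = (1 - PowerSeries.X) * wi ^ q
      - PowerSeries.X * ∑ a ∈ Finset.range q, wi ^ a - w := by
  refine Lam_eq_of_C_X_mul_eq ?_
  rw [map_pow, map_evalZeroC_of_w_mul_eq_one hwi, one_pow, C_one_add_X]
  exact (mul_sub_one_inv_pow_eq rfl hwi q).symm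

theorem Lam_one : Lam 1 = 0 :=
  Lam_eq_of_C_X_mul_eq (by simp)

theorem Lam_w_pow (q : ℕ) :
    Lam (w ^ (q + 1)) = (PowerSeries.X - 1) * w
      + PowerSeries.X * ∑ a ∈ Finset.Icc 2 (q + 1), w ^ a + w ^ (q + 2) := by
  refine Lam_eq_of_C_X_mul_eq ?_
  rw [map_pow, map_evalZeroC_w, one_pow, C_one_add_X]
  exact (mul_sub_one_pow_eq rfl q).symm

/-- The elementary action of Λ on powers of w = 1+zu: for p ≥ 1,
Λ(1/wᵖ) = (1−z)/w^{p−1} − z·Σ_{a=0}^{p−2} 1/wᵃ − w,  Λ(1) = 0, and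
Λ(wᵖ) = (z−1)w + z·Σ_{a=2}^{p} wᵃ + w^{p+1}.  Here `wi` is the inverse series 1/w. -/
theorem Lam_elementary (p : ℕ) (hp : 1 ≤ p)
    (wi : PowerSeries (Polynomial ℚ)) (hwi : w * wi = 1) :
    Lam (wi^p) = (1 - PowerSeries.X) * wi^(p-1)
        - PowerSeries.X * (∑ a ∈ Finset.range (p-1), wi^a) - w
    ∧ Lam 1 = 0
    ∧ Lam (w^p) = (PowerSeries.X - 1) * w
        + PowerSeries.X * (∑ a ∈ Finset.Icc 2 p, w^a) + w^(p+1) := by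
  obtain ⟨q, rfl⟩ : ∃ q, p = q + 1 := ⟨p - 1, by omega⟩
  exact ⟨Lam_inv_pow hwi q, Lam_one, Lam_w_pow q⟩
end

section
/- With w = 1+zu and Λ the operator ΛH = (1+u)(1+zu)(H(z;u)−H(z;0))/u, for all integers 1 ≤ k ≤ m one has Λ^{(k)}(1/w^m) = (1−z)^k/w^{m−k} − Σ_{i=k}^{m−1} Σ_{j=1}^{k} (−1)^{k+j} z^{k−j+1} w^{-(m−i−1)} C(k, j−1) C(i−j+1, k−j) + Σ_{i=1}^{k−1} Σ_{j=1}^{i} (−1)^{j−1} z^j w^{k−i} C(i−1, j−1) C(m−k+j−1, j) − w^k. -/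
open Polynomial PowerSeries

/-!
`Λ` obeys the twisted Leibniz rule `Λ (f H) = f Λ H + H(z;0) Λ f`, and `Λ (1/w) = 1 - z - w`,
`Λ w = w (w - 1 + z)`. Split the claimed value of `Λ^(k) (1/w^m)` into a polynomial in `1/w` of
degree `d = m - k` and a polynomial in `w` of degree `k`. Both are Horner schemes, so the Leibniz
rule computes `Λ` of each by induction on its degree: it sends the part with parameters
`(k, d + 1)` to the part with parameters `(k + 1, d)`, up to multiples of `w` that cancel between
the two parts. All coefficients are differences of the numbers
`Q_k(d) = Σ_j (-z)^j C(k, j) C(d + j, j)`, and the only identity needed is the Pascal-type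
recurrence `Q_{k+1}(d+1) - Q_{k+1}(d) = (1 - z) Q_k(d+1) - Q_k(d)`.
-/

namespace LamIterate

open Finset

section Binomial

variable {R : Type*} [CommRing R] (x : R)

/-- The coefficient of `t ^ d` in `(1 - t - x) ^ k / (1 - t) ^ (k + 1)`. -/
def qSum (k d : ℕ) : R :=
  ∑ j ∈ range (k + 1), (-x) ^ j * k.choose j * (d + j).choose j

/-- The inner sum over `j` of the first double sum, at `i = k + a`, `j = k - c`. -/
def aSum (k a : ℕ) : R :=
  ∑ c ∈ range k, (-1) ^ c * x ^ (c + 1) * k.choose (c + 1) * (a + c + 1).choose c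

/-- The inner sum over `j` of the second double sum, at `i = e + 1`, `j = f + 1`, `d = m - k`. -/
def bSum (d e : ℕ) : R :=
  ∑ f ∈ range (e + 1), (-1) ^ f * x ^ (f + 1) * e.choose f * (d + f).choose (f + 1)

@[simp]
lemma qSum_zero_left (d : ℕ) : qSum x 0 d = 1 := by
  simp [qSum]

lemma qSum_zero_right (k : ℕ) : qSum x k 0 = (1 - x) ^ k := by
  rw [qSum, sub_eq_neg_add, add_pow]
  simp

lemma aSum_eq_sub (k a : ℕ) : aSum x k a = qSum x k a - qSum x k (a + 1) := by
  rw [aSum, qSum, qSum, ← sum_sub_distrib, sum_range_succ']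
  simp only [Nat.choose_zero_right, pow_zero, sub_self, add_zero]
  refine sum_congr rfl fun c _ => ?_
  rw [show a + 1 + (c + 1) = a + c + 1 + 1 by ring, Nat.choose_succ_succ (a + c + 1) c,
    show a + (c + 1) = a + c + 1 by ring]
  push_cast
  ring

lemma qSum_succ_left (k d : ℕ) :
    qSum x (k + 1) d
      = qSum x k d +
          ∑ j ∈ range (k + 1), (-x) ^ (j + 1) * k.choose j * (d + j + 1).choose (j + 1) := by
  have h := sum_choose_succ_mul (fun j _ => (-x) ^ j * ((d + j).choose j : R)) k
  calc qSum x (k + 1) d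
      = ∑ j ∈ range (k + 2), ((k + 1).choose j : R) * ((-x) ^ j * (d + j).choose j) :=
        sum_congr rfl fun _ _ => by ring
    _ = _ := by
        rw [h, qSum]
        congr 1 <;> refine sum_congr rfl fun j _ => ?_
        · ring
        · rw [← add_assoc]; ring

lemma bSum_eq_sub (d e : ℕ) : bSum x d e = (1 - x) * qSum x e d - qSum x (e + 1) d := by
  rw [qSum_succ_left, bSum, qSum, mul_sum, ← sub_sub, ← sum_sub_distrib, ← sum_sub_distrib]
  refine sum_congr rfl fun f _ => ?_
  rw [Nat.choose_succ_succ (d + f) f]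
  push_cast
  ring

lemma bSum_succ_left (d e : ℕ) : bSum x (d + 1) e = bSum x d e + x * qSum x e d := by
  rw [bSum, bSum, qSum, mul_sum, ← sum_add_distrib]
  refine sum_congr rfl fun f _ => ?_
  rw [show d + 1 + f = d + f + 1 by ring, Nat.choose_succ_succ (d + f) f]
  push_cast
  ring

lemma bSum_succ_left_eq_sub (d e : ℕ) : bSum x (d + 1) e = qSum x e d - qSum x (e + 1) d := by
  linear_combination bSum_succ_left x d e + bSum_eq_sub x d e

lemma qSum_succ_succ_sub (k d : ℕ) :
    qSum x (k + 1) (d + 1) - qSum x (k + 1) d = (1 - x) * qSum x k (d + 1) - qSum x k d := by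
  linear_combination bSum_eq_sub x (d + 1) k - bSum_succ_left_eq_sub x d k

variable {S : Type*} [CommRing S] (f : R →+* S)

lemma map_aSum (k a : ℕ) : f (aSum x k a) = aSum (f x) k a := by
  simp [aSum]

lemma map_bSum (d e : ℕ) : f (bSum x d e) = bSum (f x) d e := by
  simp [bSum]

end Binomial

lemma sum_range_mul_pow_sub {R : Type*} [CommSemiring R] (g : ℕ → R) (y : R) {n m : ℕ}
    (h : n ≤ m) :
    ∑ a ∈ range n, g a * y ^ (m - a) = y * ∑ a ∈ range n, g a * y ^ (m - 1 - a) := by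
  rw [mul_sum]
  refine sum_congr rfl fun a ha => ?_
  rw [show m - a = m - 1 - a + 1 by have := mem_range.1 ha; omega, pow_succ]
  ring

section Parts

variable {R : Type*} [CommRing R] (x y : R)

def negPowPart (k d : ℕ) : R :=
  (1 - x) ^ k * y ^ d - ∑ a ∈ range d, aSum x k a * y ^ (d - 1 - a)

/-- Indexed by `d = m - k` and `K = k - 1`. -/
def posPowPart (d K : ℕ) : R :=
  ∑ e ∈ range K, bSum x d e * y ^ (K - e) - y ^ (K + 1)

lemma negPowPart_succ (k d : ℕ) :
    negPowPart x y k (d + 1) = y * negPowPart x y k d - aSum x k d := by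
  rw [negPowPart, negPowPart, sum_range_succ, Nat.add_sub_cancel, Nat.sub_self, pow_zero,
    mul_one, sum_range_mul_pow_sub _ _ le_rfl]
  ring

lemma posPowPart_succ (d K : ℕ) :
    posPowPart x y d (K + 1) = y * posPowPart x y d K + bSum x d K * y := by
  rw [posPowPart, posPowPart, sum_range_succ, sum_range_mul_pow_sub _ _ (K.le_add_right 1),
    Nat.add_sub_cancel, Nat.add_sub_cancel_left, pow_one]
  ring

@[simp]
lemma negPowPart_zero_left (d : ℕ) : negPowPart x y 0 d = y ^ d := by
  simp [negPowPart, aSum]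

@[simp]
lemma negPowPart_zero_right (k : ℕ) : negPowPart x y k 0 = (1 - x) ^ k := by
  simp [negPowPart]

@[simp]
lemma posPowPart_zero (d : ℕ) : posPowPart x y d 0 = -y := by
  simp [posPowPart]

lemma negPowPart_one (k d : ℕ) : negPowPart x 1 k d = qSum x k d := by
  simp only [negPowPart, one_pow, mul_one, aSum_eq_sub, sum_range_sub', qSum_zero_right]
  ring

lemma posPowPart_one (d K : ℕ) : posPowPart x 1 (d + 1) K = -qSum x K d := by
  simp only [posPowPart, one_pow, mul_one, bSum_succ_left_eq_sub, sum_range_sub', qSum_zero_left]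
  ring

variable {S : Type*} [CommRing S] (f : R →+* S)

lemma map_negPowPart (k d : ℕ) : f (negPowPart x y k d) = negPowPart (f x) (f y) k d := by
  simp [negPowPart, map_aSum]

lemma map_posPowPart (d K : ℕ) : f (posPowPart x y d K) = posPowPart (f x) (f y) d K := by
  simp [posPowPart, map_bSum]

end Parts

section Reindex

lemma sum_Icc_one_eq_sum_range {M : Type*} [AddCommMonoid M] (f : ℕ → M) (n : ℕ) :
    ∑ i ∈ Icc 1 n, f i = ∑ i ∈ range n, f (i + 1) := by
  rw [← Ico_add_one_right_eq_Icc, sum_Ico_eq_sum_range, Nat.add_sub_cancel]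
  simp only [add_comm]

variable {R : Type*} [CommRing R] (x y : R)

lemma sum_Icc_Icc_eq_sum_aSum {k : ℕ} (hk : 1 ≤ k) (m : ℕ) :
    ∑ i ∈ Icc k (m - 1), ∑ j ∈ Icc 1 k,
        (-1 : R) ^ (k + j) * x ^ (k - j + 1) * y ^ (m - i - 1) * (k.choose (j - 1) : R) *
          ((i - j + 1).choose (k - j) : R)
      = ∑ a ∈ range (m - k), aSum x k a * y ^ (m - k - 1 - a) := by
  rw [show Icc k (m - 1) = Ico k m by ext; simp; omega, sum_Ico_eq_sum_range]
  refine sum_congr rfl fun a _ => ?_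
  rw [sum_Icc_one_eq_sum_range, ← sum_range_reflect, aSum, sum_mul]
  refine sum_congr rfl fun c hc => ?_
  rw [mem_range] at hc
  obtain ⟨K, rfl⟩ : ∃ K, k = K + 1 := ⟨k - 1, by omega⟩
  rw [show K + 1 + (K + 1 - 1 - c + 1) = c + 2 * (K + 1 - c) by omega, pow_add, pow_mul,
    neg_one_sq, one_pow, mul_one, show K + 1 - (K + 1 - 1 - c + 1) = c by omega,
    show K + 1 - 1 - c + 1 - 1 = K + 1 - (c + 1) by omega, Nat.choose_symm (by omega),
    show K + 1 + a - (K + 1 - 1 - c + 1) + 1 = a + c + 1 by omega,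
    show m - (K + 1 + a) - 1 = m - (K + 1) - 1 - a by omega]
  ring

lemma sum_Icc_Icc_eq_sum_bSum (k m : ℕ) :
    ∑ i ∈ Icc 1 (k - 1), ∑ j ∈ Icc 1 i,
        (-1 : R) ^ (j - 1) * x ^ j * y ^ (k - i) * ((i - 1).choose (j - 1) : R) *
          ((m - k + j - 1).choose j : R)
      = ∑ e ∈ range (k - 1), bSum x (m - k) e * y ^ (k - 1 - e) := by
  rw [sum_Icc_one_eq_sum_range]
  refine sum_congr rfl fun e he => ?_
  rw [sum_Icc_one_eq_sum_range, bSum, sum_mul]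
  refine sum_congr rfl fun f _ => ?_
  rw [mem_range] at he
  simp only [Nat.add_sub_cancel]
  rw [show k - (e + 1) = k - 1 - e by omega, show m - k + (f + 1) - 1 = m - k + f by omega]
  ring

end Reindex

section Lam

local notation "z" => (PowerSeries.X : PowerSeries ℚ[X])

variable {wi : PowerSeries ℚ[X]}

noncomputable def evalUZero : PowerSeries ℚ[X] →+* PowerSeries ℚ[X] :=
  PowerSeries.map (Polynomial.C.comp (Polynomial.evalRingHom 0))

lemma evalUZero_X : evalUZero z = z :=
  PowerSeries.map_X _

lemma evalUZero_w : evalUZero w = 1 := by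
  simp [evalUZero, w]

lemma evalUZero_w_inv (hwi : w * wi = 1) : evalUZero wi = 1 := by
  simpa [evalUZero_w] using congrArg evalUZero hwi

lemma C_X_mul_Lam (H : PowerSeries ℚ[X]) :
    PowerSeries.C Polynomial.X * Lam H
      = PowerSeries.C (1 + Polynomial.X) * w * (H - evalUZero H) := by
  have hdiv : PowerSeries.C Polynomial.X * PowerSeries.mk (fun n =>
      (PowerSeries.coeff n H - Polynomial.C ((PowerSeries.coeff n H).eval 0)) /ₘ Polynomial.X)
      = H - evalUZero H := by
    refine PowerSeries.ext fun n => ?_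
    have h := Polynomial.modByMonic_add_div
      (PowerSeries.coeff n H - Polynomial.C ((PowerSeries.coeff n H).eval 0)) Polynomial.X
    rw [Polynomial.modByMonic_X] at h
    simp only [eval_sub, eval_C, sub_self, map_zero, zero_add] at h
    simp [PowerSeries.coeff_C_mul, h, evalUZero, PowerSeries.coeff_map]
  rw [Lam, ← hdiv]
  ring

lemma Lam_eq_of_C_X_mul {H Y : PowerSeries ℚ[X]}
    (h : PowerSeries.C (1 + Polynomial.X) * w * (H - evalUZero H)
      = PowerSeries.C Polynomial.X * Y) :
    Lam H = Y :=
  mul_left_cancel₀ ((map_ne_zero_iff _ PowerSeries.C_injective).mpr Polynomial.X_ne_zero)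
    (by rw [C_X_mul_Lam, h])

lemma Lam_add (A B : PowerSeries ℚ[X]) : Lam (A + B) = Lam A + Lam B :=
  Lam_eq_of_C_X_mul (by
    rw [map_add evalUZero]; linear_combination -C_X_mul_Lam A - C_X_mul_Lam B)

lemma Lam_sub (A B : PowerSeries ℚ[X]) : Lam (A - B) = Lam A - Lam B :=
  Lam_eq_of_C_X_mul (by
    rw [map_sub evalUZero]; linear_combination -C_X_mul_Lam A + C_X_mul_Lam B)

lemma Lam_neg (A : PowerSeries ℚ[X]) : Lam (-A) = -Lam A :=
  Lam_eq_of_C_X_mul (by rw [map_neg evalUZero]; linear_combination C_X_mul_Lam A)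

lemma Lam_mul (f H : PowerSeries ℚ[X]) : Lam (f * H) = f * Lam H + evalUZero H * Lam f :=
  Lam_eq_of_C_X_mul (by
    rw [map_mul evalUZero]; linear_combination -f * C_X_mul_Lam H - evalUZero H * C_X_mul_Lam f)

lemma Lam_eq_zero_of_evalUZero_eq {f : PowerSeries ℚ[X]} (hf : evalUZero f = f) : Lam f = 0 :=
  Lam_eq_of_C_X_mul (by rw [hf]; ring)

lemma Lam_w : Lam w = w * (w - 1 + z) :=
  Lam_eq_of_C_X_mul (by rw [evalUZero_w]; simp only [w, map_add, map_one]; ring)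

lemma Lam_w_inv (hwi : w * wi = 1) : Lam wi = 1 - z - w := by
  have hw : w = 1 + z * PowerSeries.C Polynomial.X := rfl
  refine Lam_eq_of_C_X_mul ?_
  rw [evalUZero_w_inv hwi, map_add, map_one]
  linear_combination (1 + PowerSeries.C Polynomial.X) * hwi - hw

lemma Lam_negPowPart (hwi : w * wi = 1) (k d : ℕ) :
    Lam (negPowPart z wi k (d + 1)) = negPowPart z wi (k + 1) d - qSum z k d * w := by
  have hA (n : ℕ) : Lam (aSum z k n) = 0 :=
    Lam_eq_zero_of_evalUZero_eq (by rw [map_aSum, evalUZero_X])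
  induction d with
  | zero =>
    have hE : evalUZero ((1 - z) ^ k) = (1 - z) ^ k := by simp [evalUZero_X]
    rw [negPowPart_succ, Lam_sub, hA, Lam_mul, negPowPart_zero_right,
      Lam_eq_zero_of_evalUZero_eq hE, hE, Lam_w_inv hwi, negPowPart_zero_right, qSum_zero_right]
    ring
  | succ d ih =>
    have hE : evalUZero (negPowPart z wi k (d + 1)) = qSum z k (d + 1) := by
      rw [map_negPowPart, evalUZero_X, evalUZero_w_inv hwi, negPowPart_one]
    rw [negPowPart_succ, Lam_sub, hA, Lam_mul, ih, hE, Lam_w_inv hwi, negPowPart_succ _ _ (k + 1),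
      aSum_eq_sub]
    linear_combination -qSum z k d * hwi - qSum_succ_succ_sub z k d

lemma Lam_posPowPart (K d : ℕ) :
    Lam (posPowPart z w (d + 1) K) = posPowPart z w d (K + 1) + qSum z (K + 1) d * w := by
  induction K with
  | zero =>
    rw [posPowPart_zero, Lam_neg, Lam_w, posPowPart_succ, posPowPart_zero, bSum_eq_sub,
      qSum_zero_left]
    ring
  | succ K ih =>
    have hB : Lam (bSum z (d + 1) K) = 0 :=
      Lam_eq_zero_of_evalUZero_eq (by rw [map_bSum, evalUZero_X])
    have hE : evalUZero (posPowPart z w (d + 1) K) = -qSum z K d := by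
      rw [map_posPowPart, evalUZero_X, evalUZero_w, posPowPart_one]
    rw [posPowPart_succ, Lam_add, Lam_mul, Lam_mul, ih, hB, hE, Lam_w, evalUZero_w,
      posPowPart_succ _ _ d (K + 1)]
    linear_combination (w * (w - 1 + z)) * bSum_succ_left_eq_sub z d K
      - w * bSum_eq_sub z d (K + 1)

lemma Lam_iterate_w_inv_pow (hwi : w * wi = 1) (K d : ℕ) :
    Lam^[K + 1] (wi ^ (K + 1 + d)) = negPowPart z wi (K + 1) d + posPowPart z w d K := by
  induction K generalizing d with
  | zero =>
    rw [zero_add, add_comm, Function.iterate_one, ← negPowPart_zero_left z wi (d + 1),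
      Lam_negPowPart hwi, posPowPart_zero, qSum_zero_left]
    ring
  | succ K ih =>
    rw [Function.iterate_succ_apply', show K + 1 + 1 + d = K + 1 + (d + 1) by ring, ih, Lam_add,
      Lam_negPowPart hwi, Lam_posPowPart]
    ring

end Lam

end LamIterate

/-- For 1 ≤ k ≤ m, the explicit expansion of Λ^{(k)}(1/w^m), where w = 1+zu and `wi` = 1/w:
Λ^{(k)}(1/w^m) = (1−z)^k/w^{m−k}
  − Σ_{i=k}^{m−1} Σ_{j=1}^{k} (−1)^{k+j} z^{k−j+1} w^{−(m−i−1)} C(k,j−1) C(i−j+1,k−j)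
  + Σ_{i=1}^{k−1} Σ_{j=1}^{i} (−1)^{j−1} z^j w^{k−i} C(i−1,j−1) C(m−k+j−1,j) − w^k. -/
theorem Lam_iterate_expansion (m k : ℕ) (hk : 1 ≤ k) (hkm : k ≤ m)
    (wi : PowerSeries (Polynomial ℚ)) (hwi : w * wi = 1) :
    Lam^[k] (wi^m)
      = (1 - PowerSeries.X)^k * wi^(m-k)
        - ∑ i ∈ Finset.Icc k (m-1), ∑ j ∈ Finset.Icc 1 k,
            (-1 : PowerSeries (Polynomial ℚ))^(k+j) * PowerSeries.X^(k-j+1) * wi^(m-i-1) *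
              (Nat.choose k (j-1) : PowerSeries (Polynomial ℚ)) *
              (Nat.choose (i-j+1) (k-j) : PowerSeries (Polynomial ℚ))
        + ∑ i ∈ Finset.Icc 1 (k-1), ∑ j ∈ Finset.Icc 1 i,
            (-1 : PowerSeries (Polynomial ℚ))^(j-1) * PowerSeries.X^j * w^(k-i) *
              (Nat.choose (i-1) (j-1) : PowerSeries (Polynomial ℚ)) *
              (Nat.choose (m-k+j-1) j : PowerSeries (Polynomial ℚ))
        - w^k := by
  rw [LamIterate.sum_Icc_Icc_eq_sum_aSum _ _ hk, LamIterate.sum_Icc_Icc_eq_sum_bSum]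
  obtain ⟨K, rfl⟩ : ∃ K, k = K + 1 := ⟨k - 1, by omega⟩
  obtain ⟨d, rfl⟩ : ∃ d, m = K + 1 + d := ⟨m - (K + 1), by omega⟩
  rw [LamIterate.Lam_iterate_w_inv_pow hwi, LamIterate.negPowPart, LamIterate.posPowPart]
  simp only [Nat.add_sub_cancel_left, Nat.add_sub_cancel]
  ring
end

section
/- Let H(z;u,v) be a formal power series in z with coefficients in ℚ[u,v] that is symmetric in u and v, and let Λ act on the variable u by ΛH(z;u,v) = (1+u)(1+zu)(H(z;u,v)−H(z;0,v))/u. Then ΛH(z;u,v) is symmetric in u and v if and only if H satisfies H(u,v) = [u(1+v)(1+zv)H(u,0) − v(1+u)(1+zu)H(v,0)] / [(u−v)(1−zuv)]. Moreover, if H satisfies this relation then so does ΛH. -/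
open PowerSeries

noncomputable section

abbrev M := MvPolynomial (Fin 2) ℚ

/-- u -/
def u : M := MvPolynomial.X 0
/-- v -/
def v : M := MvPolynomial.X 1

/-- Exchange of the variables u and v, extended to power series in z. -/
def swapUV : PowerSeries M → PowerSeries M :=
  PowerSeries.map (MvPolynomial.rename (Equiv.swap (0 : Fin 2) 1)).toRingHom

/-- Substitution u := 0 (keeping v), extended to power series in z:  H(z;u,v) ↦ H(z;0,v). -/
def subU0 : PowerSeries M → PowerSeries M :=
  PowerSeries.map (MvPolynomial.aeval fun i : Fin 2 =>
    if i = 0 then (0 : M) else MvPolynomial.X 1).toRingHom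

/-- Substitution v := 0 (keeping u):  H(z;u,v) ↦ H(z;u,0). -/
def subV0 : PowerSeries M → PowerSeries M :=
  PowerSeries.map (MvPolynomial.aeval fun i : Fin 2 =>
    if i = 0 then MvPolynomial.X 0 else (0 : M)).toRingHom

/-- Substitution (u,v) := (v,0):  H(z;u,v) ↦ H(z;v,0). -/
def subV0' : PowerSeries M → PowerSeries M :=
  PowerSeries.map (MvPolynomial.aeval fun i : Fin 2 =>
    if i = 0 then MvPolynomial.X 1 else (0 : M)).toRingHom

/-- The relation H(u,v) = [u(1+v)(1+zv)H(u,0) − v(1+u)(1+zu)H(v,0)] / [(u−v)(1−zuv)],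
stated with denominators cleared. -/
def SymRel (H : PowerSeries M) : Prop :=
  PowerSeries.C (R := M) (u - v) * (1 - PowerSeries.X * PowerSeries.C (R := M) (u*v)) * H
    = PowerSeries.C (R := M) u * PowerSeries.C (R := M) (1 + v) * (1 + PowerSeries.X * PowerSeries.C (R := M) v) *
        subV0 H
      - PowerSeries.C (R := M) v * PowerSeries.C (R := M) (1 + u) * (1 + PowerSeries.X * PowerSeries.C (R := M) u) *
        subV0' H

/-!
Write `a(t) = (1 + t)(1 + z t)`. By symmetry `H(0,v) = H(v,0)`, so `u G = a(u) (H - H(v,0))`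
and, swapping, `v G(v,u) = a(v) (H - H(u,0))`. Since `u a(v) - v a(u) = (u - v)(1 - z u v)`,
`u v (G(v,u) - G)` is exactly the defect of the relation for `H`; cancelling `u v` in the domain
`ℚ[u,v][[z]]` gives the equivalence. Substituting `v := 0` and `(u,v) := (v,0)` in the equation
for `G` expresses `G(u,0)` and `G(v,0)` through `H(u,0)`, `H(v,0)`, `H(0,0)`, and the same
identity turns the relation for `H` into the relation for `G`, again after multiplying by `u v`.
-/

namespace LamSymmetry

section Algebra

/- Here `x * G = (1 + x) * (1 + z * x) * (H - K)` encodes `G = Λ H`, with `x = u` and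
`K = H(z;0,v)`. -/

variable {R : Type*} [CommRing R] [IsDomain R] {x y z H G G' Gu Gv K K' L : R}

theorem eq_iff_rel_of_lam (hx : x ≠ 0) (hy : y ≠ 0)
    (hG : x * G = (1 + x) * (1 + z * x) * (H - K))
    (hG' : y * G' = (1 + y) * (1 + z * y) * (H - K')) :
    G' = G ↔ (x - y) * (1 - z * (x * y)) * H
      = x * (1 + y) * (1 + z * y) * K' - y * (1 + x) * (1 + z * x) * K := by
  have hdefect : x * y * (G' - G) = (x - y) * (1 - z * (x * y)) * H
      - (x * (1 + y) * (1 + z * y) * K' - y * (1 + x) * (1 + z * x) * K) := by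
    linear_combination x * hG' - y * hG
  rw [← sub_eq_zero, ← sub_eq_zero (a := (x - y) * _ * H), ← hdefect, mul_eq_zero,
    or_iff_right (mul_ne_zero hx hy)]

theorem rel_of_lam_of_rel (hx : x ≠ 0) (hy : y ≠ 0)
    (hrel : (x - y) * (1 - z * (x * y)) * H
      = x * (1 + y) * (1 + z * y) * K' - y * (1 + x) * (1 + z * x) * K)
    (hG : x * G = (1 + x) * (1 + z * x) * (H - K))
    (hGu : x * Gu = (1 + x) * (1 + z * x) * (K' - L))
    (hGv : y * Gv = (1 + y) * (1 + z * y) * (K - L)) :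
    (x - y) * (1 - z * (x * y)) * G
      = x * (1 + y) * (1 + z * y) * Gu - y * (1 + x) * (1 + z * x) * Gv := by
  have hrel' : (x - y) * (1 - z * (x * y)) * (H - K) = x * (1 + y) * (1 + z * y) * (K' - K) := by
    linear_combination hrel
  refine mul_left_cancel₀ (mul_ne_zero hx hy) ?_
  linear_combination (y * (x - y) * (1 - z * (x * y))) * hG
    - (x * y * (1 + y) * (1 + z * y)) * hGu + (x * y * (1 + x) * (1 + z * x)) * hGv
    + (y * (1 + x) * (1 + z * x)) * hrel'


end Algebra

def substUV (a b : M) : M →ₐ[ℚ] M := MvPolynomial.aeval ![a, b]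

@[simp] theorem substUV_u (a b : M) : substUV a b u = a := by simp [substUV, u]

@[simp] theorem substUV_v (a b : M) : substUV a b v = b := by simp [substUV, v]

theorem substUV_comp_substUV (a b c d : M) :
    (substUV c d).comp (substUV a b) = substUV (substUV c d a) (substUV c d b) :=
  MvPolynomial.algHom_ext fun i => by fin_cases i <;> simp [substUV]

def mapUV (a b : M) : PowerSeries M →+* PowerSeries M := PowerSeries.map (substUV a b)

@[simp] theorem mapUV_mapUV (a b c d : M) (H : PowerSeries M) :
    mapUV c d (mapUV a b H) = mapUV (substUV c d a) (substUV c d b) H := by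
  rw [mapUV, mapUV, mapUV, ← substUV_comp_substUV, AlgHom.comp_toRingHom, PowerSeries.map_comp]
  rfl

@[simp] theorem mapUV_C (a b p : M) : mapUV a b (C p) = C (substUV a b p) :=
  PowerSeries.map_C _ _

@[simp] theorem mapUV_X (a b : M) : mapUV a b X = X :=
  PowerSeries.map_X _

theorem map_eq_mapUV (φ : M →ₐ[ℚ] M) : PowerSeries.map φ.toRingHom = mapUV (φ u) (φ v) := by
  have hφ : MvPolynomial.aeval ![φ u, φ v] = φ :=
    MvPolynomial.algHom_ext fun i => by fin_cases i <;> simp [u, v]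
  rw [mapUV, substUV, hφ]
  rfl

theorem swapUV_eq : swapUV = mapUV v u := by
  rw [swapUV, map_eq_mapUV]
  simp [u, v]

theorem subU0_eq : subU0 = mapUV 0 v := by
  rw [subU0, map_eq_mapUV]
  simp [u, v]

theorem subV0_eq : subV0 = mapUV u 0 := by
  rw [subV0, map_eq_mapUV]
  simp [u, v]

theorem subV0'_eq : subV0' = mapUV v 0 := by
  rw [subV0', map_eq_mapUV]
  simp [u, v]

theorem symRel_iff (H : PowerSeries M) :
    SymRel H ↔ (C u - C v) * (1 - X * (C u * C v)) * H
      = C u * (1 + C v) * (1 + X * C v) * mapUV u 0 H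
        - C v * (1 + C u) * (1 + X * C u) * mapUV v 0 H := by
  rw [SymRel, subV0_eq, subV0'_eq]
  simp only [map_sub, map_add, map_mul, map_one]

theorem mapUV_lam_eq {G H K : PowerSeries M} (a b : M)
    (hG : C u * G = (1 + C u) * (1 + X * C u) * (H - K)) :
    C a * mapUV a b G = (1 + C a) * (1 + X * C a) * (mapUV a b H - mapUV a b K) := by
  simpa using congrArg (mapUV a b) hG

end LamSymmetry

open LamSymmetry in
/-- Let H(z;u,v) ∈ ℚ[u,v][[z]] be symmetric in u and v, and let G = ΛH where Λ acts on u by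
ΛH = (1+u)(1+zu)(H(z;u,v)−H(z;0,v))/u (G is characterized by u·G = (1+u)(1+zu)(H−H(0,v))).
Then ΛH is symmetric in u and v iff H satisfies `SymRel`, and if H satisfies `SymRel`
then so does ΛH. -/
theorem Lam_symmetry (H G : PowerSeries M)
    (hsym : swapUV H = H)
    (hG : PowerSeries.C (R := M) u * G
        = PowerSeries.C (R := M) (1 + u) * (1 + PowerSeries.X * PowerSeries.C (R := M) u) * (H - subU0 H)) :
    (swapUV G = G ↔ SymRel H) ∧ (SymRel H → SymRel G) := by
  rw [swapUV_eq] at hsym ⊢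
  have hHv0 : subU0 H = mapUV v 0 H := by
    simpa [subU0_eq] using (congrArg (mapUV 0 v) hsym).symm
  rw [hHv0, map_add, map_one] at hG
  have hGswap := mapUV_lam_eq v u hG
  have hGu0 := mapUV_lam_eq u 0 hG
  have hGv0 := mapUV_lam_eq v 0 hG
  simp only [mapUV_mapUV, substUV_v, map_zero, hsym] at hGswap hGu0 hGv0
  have hu : (C u : PowerSeries M) ≠ 0 := (map_ne_zero_iff _ C_injective).mpr (MvPolynomial.X_ne_zero 0)
  have hv : (C v : PowerSeries M) ≠ 0 := (map_ne_zero_iff _ C_injective).mpr (MvPolynomial.X_ne_zero 1)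
  rw [symRel_iff, symRel_iff]
  exact ⟨eq_iff_rel_of_lam hu hv hG hGswap, fun hrel => rel_of_lam_of_rel hu hv hrel hG hGu0 hGv0⟩

end
end

section
/- Define F(z) = (1−(m+1)z)/(1−z)^{m+2} and t = z(1−z)^{m²+2m}, both as formal power series in ℚ[[z]] (with z expressed implicitly as a power series in t). Then for every n ≥ 1 the coefficient of tⁿ in F, viewed as a power series in t, equals ((m+1)/(n(mn+1)))·C((m+1)²n+m, n−1). -/
/-!
Put `w = 1 - Z`, a unit with `(1 - w) * w ^ a = X` for `a = m ^ 2 + 2 * m`, and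
`G = (1 - (m + 1) * Z) / w ^ (m + 2)`. Differentiating `G * w ^ (m + 2) = (m + 1) * w - m` and
`(1 - w) * w ^ a = X` gives `G' = w ^ (-((m + 1) * (m + 2)))`.
Since `w ^ e - w ^ (e + 1) = X * w ^ (e - a)`, the coefficients of all integer powers of `w` obey
`[X^(n+1)] w^e = [X^(n+1)] w^(e+1) + [X^n] w^(e-a)`; this recursion in `(n, e)` is solved by the
Lagrange-inversion value `[Xⁿ] w^(-c) = c / n * C(n (a + 1) + c - 1, n - 1)`, and
`n [Xⁿ] G = [X^(n-1)] G'` gives the claim.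
-/

open PowerSeries

namespace PowerSeries

variable {K : Type*} [Field K]

section

open Polynomial

/-- `zpowCoeff a c n = c / n * C(n (a + 1) + c - 1, n - 1)` for `n ≥ 1` (a generalised binomial
coefficient), the value of `[Xⁿ] w ^ (-c)` when `(1 - w) * w ^ a = X`. -/
noncomputable def zpowCoeff (a : ℕ) (c : K) : ℕ → K
  | 0 => 1
  | n + 1 => c * (descPochhammer K n).eval ((n + 1) * (a + 1) + c - 1) / (n + 1).factorial

@[simp] theorem zpowCoeff_zero (a : ℕ) (c : K) : zpowCoeff a c 0 = 1 := rfl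

@[simp] theorem zpowCoeff_zero_succ (a n : ℕ) : zpowCoeff a (0 : K) (n + 1) = 0 := by
  simp [zpowCoeff]

theorem zpowCoeff_succ [CharZero K] (a n : ℕ) (c : K) :
    zpowCoeff a c (n + 1) = zpowCoeff a (c - 1) (n + 1) + zpowCoeff a (c + a) n := by
  cases n with
  | zero => simp [zpowCoeff]
  | succ n =>
    simp only [zpowCoeff]
    set x : K := (n + 1 + 1) * (a + 1) + c - 1
    have hD : (descPochhammer K (n + 1)).eval x = x * (descPochhammer K n).eval (x - 1) := by
      rw [descPochhammer_succ_left, eval_mul, eval_X, eval_comp, eval_sub, eval_X, eval_one]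
    push_cast
    rw [show (n + 1 + 1) * (a + 1) + (c - 1) - 1 = x - 1 by ring,
      show (n + 1) * (a + 1) + (c + a) - 1 = x - 1 by ring, hD, descPochhammer_succ_eval,
      Nat.factorial_succ (n + 1)]
    generalize (descPochhammer K n).eval (x - 1) = D
    have hfac : ((n + 1).factorial : K) ≠ 0 := Nat.cast_ne_zero.mpr (Nat.factorial_ne_zero _)
    have hn : (n : K) + 1 + 1 ≠ 0 := by exact_mod_cast Nat.succ_ne_zero (n + 1)
    simp only [x]
    push_cast
    field_simp
    ring

theorem zpowCoeff_natCast_succ [CharZero K] (a c n : ℕ) :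
    zpowCoeff a (c : K) (n + 1) = c * ((n + 1) * (a + 1) + c - 1).choose n / (n + 1) := by
  have harg : ((n + 1) * (a + 1) + c - 1 : K) = (((n + 1) * (a + 1) + c - 1 : ℕ) : K) := by
    rw [Nat.cast_sub (Nat.one_le_iff_ne_zero.mpr (by positivity))]
    push_cast
    ring
  have hfac : (n.factorial : K) ≠ 0 := Nat.cast_ne_zero.mpr (Nat.factorial_ne_zero _)
  simp only [zpowCoeff]
  rw [harg, descPochhammer_eval_eq_descFactorial, Nat.descFactorial_eq_factorial_mul_choose,
    Nat.factorial_succ]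
  push_cast
  field_simp

end

theorem mul_derivative_pow (f : K⟦X⟧) (n : ℕ) :
    f * d⁄dX K (f ^ n) = n * f ^ n * d⁄dX K f := by
  rw [derivative_pow]
  cases n <;> simp only [pow_succ, Nat.cast_zero, zero_mul, mul_zero, Nat.add_sub_cancel]
  ring

theorem derivative_mul_pow_eq_one {w G : K⟦X⟧} {m : ℕ} (hw : w ≠ 0)
    (hX : (1 - w) * w ^ (m ^ 2 + 2 * m) = X) (hG : G * w ^ (m + 2) = (m + 1) * w - m) :
    d⁄dX K G * w ^ ((m + 1) * (m + 2)) = 1 := by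
  have hdX := congrArg (d⁄dX K) hX
  have hdG := congrArg (d⁄dX K) hG
  rw [derivative_X, sub_mul, one_mul, ← pow_succ', map_sub] at hdX
  rw [Derivation.leibniz, smul_eq_mul, smul_eq_mul] at hdG
  simp only [Derivation.leibniz_pow, Nat.add_one_sub_one, smul_eq_mul, nsmul_eq_mul, Nat.cast_add,
    Nat.cast_ofNat, map_sub, Derivation.leibniz, map_add, Derivation.map_natCast,
    Derivation.map_one_eq_zero, add_zero, mul_zero, sub_zero] at hdG
  have h1 := mul_derivative_pow w (m ^ 2 + 2 * m)
  have h2 := mul_derivative_pow w (m ^ 2 + 2 * m + 1)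
  push_cast at h1 h2
  refine mul_left_cancel₀ hw ?_
  linear_combination w ^ (m ^ 2 + 2 * m) * w * hdG
    - (m + 2) * d⁄dX K w * w ^ (m ^ 2 + 2 * m) * hG + w * hdX - h1 + h2

variable {u : K⟦X⟧ˣ} {a : ℕ}

theorem constantCoeff_zpow (hu : constantCoeff (u : K⟦X⟧) = 1) (e : ℤ) :
    constantCoeff (↑(u ^ e) : K⟦X⟧) = 1 := by
  let f : K⟦X⟧ →* K := (constantCoeff (R := K)).toMonoidHom
  have h1 : Units.map f u = 1 := Units.ext hu
  change f ↑(u ^ e) = 1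
  rw [← Units.coe_map f, map_zpow, h1, one_zpow, Units.val_one]

theorem coeff_succ_zpow (hX : (1 - (u : K⟦X⟧)) * (u : K⟦X⟧) ^ a = X) (n : ℕ) (e : ℤ) :
    coeff (n + 1) (↑(u ^ e) : K⟦X⟧) =
      coeff (n + 1) (↑(u ^ (e + 1)) : K⟦X⟧) + coeff n (↑(u ^ (e - a)) : K⟦X⟧) := by
  have hsplit : ∀ k : ℕ, (↑(u ^ (e - a + k)) : K⟦X⟧) = ↑(u ^ (e - a)) * (u : K⟦X⟧) ^ k := fun k => by
    rw [zpow_add, zpow_natCast, Units.val_mul, Units.val_pow_eq_pow_val]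
  have hrec : (↑(u ^ e) : K⟦X⟧) = (↑(u ^ (e + 1)) : K⟦X⟧) + X * (↑(u ^ (e - a)) : K⟦X⟧) := by
    have h0 := hsplit a
    have h1 := hsplit (a + 1)
    rw [sub_add_cancel] at h0
    rw [show e - a + ((a + 1 : ℕ) : ℤ) = e + 1 by push_cast; ring] at h1
    rw [h0, h1, ← hX]
    ring
  rw [hrec, map_add, coeff_succ_X_mul]

theorem coeff_zpow [CharZero K] (hu : constantCoeff (u : K⟦X⟧) = 1)
    (hX : (1 - (u : K⟦X⟧)) * (u : K⟦X⟧) ^ a = X) (n : ℕ) (e : ℤ) :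
    coeff n (↑(u ^ e) : K⟦X⟧) = zpowCoeff a (-e : K) n := by
  induction n generalizing e with
  | zero => simp [constantCoeff_zpow hu]
  | succ n ih =>
    have hstep : ∀ e : ℤ, coeff (n + 1) (↑(u ^ (e + 1)) : K⟦X⟧) - zpowCoeff a (-(e + 1 : ℤ) : K) (n + 1)
        = coeff (n + 1) (↑(u ^ e) : K⟦X⟧) - zpowCoeff a (-e : K) (n + 1) := fun e => by
      rw [coeff_succ_zpow hX n e, ih, zpowCoeff_succ a n (-e : K)]
      push_cast
      ring_nf
    induction e using Int.induction_on with
    | zero => simp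
    | succ i hi => rw [← sub_eq_zero, hstep, sub_eq_zero, hi]
    | pred i hi => rw [← sub_eq_zero, ← hstep, sub_add_cancel, sub_eq_zero, hi]

end PowerSeries

theorem zpowCoeff_intervals (m k : ℕ) :
    zpowCoeff (m ^ 2 + 2 * m) (((m + 1) * (m + 2) : ℕ) : ℚ) k
      = (m + 1) / ((k + 1) * (m * (k + 1) + 1)) * ((m + 1) ^ 2 * (k + 1) + m).choose k * (k + 1) := by
  cases k with
  | zero =>
    simp only [zpowCoeff_zero, Nat.choose_zero_right]
    push_cast
    field_simp
    ring
  | succ j =>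
    have hT : (j + 1) * (m ^ 2 + 2 * m + 1) + (m + 1) * (m + 2) - 1
        = (m + 1) ^ 2 * (j + 1 + 1) + m := Nat.sub_eq_of_eq_add (by ring)
    set T := (m + 1) ^ 2 * (j + 1 + 1) + m
    have hjT : j ≤ T := by
      have : j + 1 + 1 ≤ (m + 1) ^ 2 * (j + 1 + 1) := Nat.le_mul_of_pos_left _ (by positivity)
      omega
    have hTj : ((T - j : ℕ) : ℚ) = (m + 2) * (m * (j + 2) + 1) := by
      rw [Nat.cast_sub hjT]; push_cast [T]; ring
    have hchoose : (T.choose (j + 1) : ℚ) * (j + 1) = T.choose j * ((m + 2) * (m * (j + 2) + 1)) := by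
      rw [← hTj]; exact_mod_cast Nat.choose_succ_right_eq T j
    rw [zpowCoeff_natCast_succ, hT]
    push_cast
    field_simp
    linear_combination -hchoose

theorem coeff_intervals_general (m : ℕ) (Z : PowerSeries ℚ)
    (hZ0 : PowerSeries.constantCoeff Z = 0)
    (hZ : Z * (1 - Z)^(m^2 + 2*m) = PowerSeries.X)
    (n : ℕ) (hn : 1 ≤ n) :
    PowerSeries.coeff n ((1 - PowerSeries.C ((m : ℚ)+1) * Z) * ((1 - Z)^(m+2))⁻¹)
      = ((m : ℚ)+1)/((n : ℚ)*((m : ℚ)*(n : ℚ)+1)) * (Nat.choose ((m+1)^2*n + m) (n-1) : ℚ) := by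
  set G := (1 - PowerSeries.C ((m : ℚ)+1) * Z) * ((1 - Z)^(m+2))⁻¹
  have hw0 : constantCoeff (1 - Z) = 1 := by simp [hZ0]
  obtain ⟨u, hu⟩ : IsUnit (1 - Z) := isUnit_iff_constantCoeff.mpr (by simp [hw0])
  have hu0 : constantCoeff (u : ℚ⟦X⟧) = 1 := hu ▸ hw0
  have hX : (1 - (u : ℚ⟦X⟧)) * (u : ℚ⟦X⟧) ^ (m ^ 2 + 2 * m) = X := by rw [hu, sub_sub_cancel, hZ]
  have hGw : G * (u : ℚ⟦X⟧) ^ (m + 2) = (m + 1) * u - m := by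
    rw [mul_assoc, hu, PowerSeries.inv_mul_cancel _ (by simp [hw0])]
    rw [map_add, map_natCast, map_one, mul_one]
    ring
  have hG' : d⁄dX ℚ G = ↑(u ^ (-(((m + 1) * (m + 2) : ℕ) : ℤ))) := by
    rw [zpow_neg, zpow_natCast]
    refine Units.eq_inv_of_mul_eq_one_right ?_
    rw [Units.val_pow_eq_pow_val]
    exact derivative_mul_pow_eq_one u.ne_zero hX hGw
  obtain ⟨k, rfl⟩ : ∃ k, n = k + 1 := ⟨n - 1, by omega⟩
  have h := coeff_derivative G k
  rw [hG', coeff_zpow hu0 hX, Int.cast_neg, neg_neg, Int.cast_natCast, zpowCoeff_intervals] at h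
  rw [Nat.add_sub_cancel]
  push_cast
  exact (mul_right_cancel₀ (by positivity) h).symm

/-- Let z(t) be the formal power series inverse of t = z(1−z)^{m²+2m} with z(0)=0, and
F = (1−(m+1)z)/(1−z)^{m+2} viewed as a power series in t. Then for n ≥ 1,
[tⁿ]F = ((m+1)/(n(mn+1)))·C((m+1)²n+m, n−1). Here `Z` plays the role of z(t) and the
ambient variable `PowerSeries.X` plays the role of t. -/
theorem coeff_intervals (m : ℕ) (hm : 1 ≤ m) (Z : PowerSeries ℚ)
    (hZ0 : PowerSeries.constantCoeff Z = 0)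
    (hZ : Z * (1 - Z)^(m^2 + 2*m) = PowerSeries.X)
    (n : ℕ) (hn : 1 ≤ n) :
    PowerSeries.coeff n ((1 - PowerSeries.C ((m : ℚ)+1) * Z) * ((1 - Z)^(m+2))⁻¹)
      = ((m : ℚ)+1)/((n : ℚ)*((m : ℚ)*(n : ℚ)+1)) * (Nat.choose ((m+1)^2*n + m) (n-1) : ℚ) :=
  coeff_intervals_general m Z hZ0 hZ n hn
end

section
/- For every integer n ≥ 1, (1/n)·[t^{n−1}] (1−4t)/(1−t)^{3n+4} = (2/(n(n+1)))·C(4n+1, n−1), where [t^{n−1}] denotes coefficient extraction from the formal power series expansion. -/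
/-!
Writing `1 - 4t = 4(1 - t) - 3` splits the series into `4/(1-t)^(3n+3) - 3/(1-t)^(3n+4)`, whose
coefficient of `t^(n-1)` is `4·C(4n+1, n-1) - 3·C(4n+2, n-1)`. The absorption identity
`(3n+3)·C(4n+2, n-1) = (4n+2)·C(4n+1, n-1)` turns this into `2/(n+1)·C(4n+1, n-1)`.
-/

open PowerSeries

namespace PowerSeries

variable {K : Type*} [Field K]

theorem inv_one_sub_pow_succ_eq_mk_choose (d : ℕ) :
    ((1 - X : K⟦X⟧) ^ (d + 1))⁻¹ = mk fun j ↦ ((d + j).choose j : K) := by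
  rw [PowerSeries.inv_eq_iff_mul_eq_one (by simp)]
  simp_rw [← Nat.choose_symm_add]
  exact mk_add_choose_mul_one_sub_pow_eq_one K d

theorem one_sub_C_mul_X_mul_inv_one_sub_pow_succ (a : K) (d : ℕ) :
    (1 - C a * X) * ((1 - X : K⟦X⟧) ^ (d + 1))⁻¹
      = C a * ((1 - X) ^ d)⁻¹ - C (a - 1) * ((1 - X) ^ (d + 1))⁻¹ := by
  have h : ((1 - X : K⟦X⟧) ^ d)⁻¹ = (1 - X) * ((1 - X) ^ (d + 1))⁻¹ := by
    rw [pow_succ, PowerSeries.mul_inv_rev, ← mul_assoc,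
      PowerSeries.mul_inv_cancel _ (by simp), one_mul]
  rw [h, map_sub, map_one]
  ring

theorem coeff_one_sub_C_mul_X_mul_inv_one_sub_pow (a : K) (d j : ℕ) :
    coeff j ((1 - C a * X) * ((1 - X : K⟦X⟧) ^ (d + 2))⁻¹)
      = a * (d + j).choose j - (a - 1) * (d + 1 + j).choose j := by
  rw [one_sub_C_mul_X_mul_inv_one_sub_pow_succ, map_sub, coeff_C_mul, coeff_C_mul,
    inv_one_sub_pow_succ_eq_mk_choose, inv_one_sub_pow_succ_eq_mk_choose, coeff_mk, coeff_mk]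

end PowerSeries

/-- For n ≥ 1, (1/n)·[t^{n−1}] (1−4t)/(1−t)^{3n+4} = (2/(n(n+1)))·C(4n+1, n−1). -/
theorem chapoton_coeff (n : ℕ) (hn : 1 ≤ n) :
    (1/(n : ℚ)) * PowerSeries.coeff (R := ℚ) (n-1)
        ((1 - 4*PowerSeries.X) * ((1 - PowerSeries.X)^(3*n+4))⁻¹)
      = 2/((n : ℚ)*((n : ℚ)+1)) * (Nat.choose (4*n+1) (n-1) : ℚ) := by
  obtain ⟨k, rfl⟩ : ∃ k, n = k + 1 := ⟨n - 1, by omega⟩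
  rw [← map_ofNat C 4, show 3 * (k + 1) + 4 = (3 * k + 5) + 2 by ring,
    coeff_one_sub_C_mul_X_mul_inv_one_sub_pow, Nat.add_sub_cancel,
    show 3 * k + 5 + k = 4 * k + 5 by ring, show 3 * k + 5 + 1 + k = 4 * k + 6 by ring,
    show 4 * (k + 1) + 1 = 4 * k + 5 by ring]
  have absorption :
      ((4 * k + 5).choose k : ℚ) * (4 * k + 6) = (4 * k + 6).choose k * (3 * k + 6) := by
    have h := Nat.choose_mul_succ_eq (4 * k + 5) k
    rw [show 4 * k + 5 + 1 - k = 3 * k + 6 by omega] at h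
    exact_mod_cast h
  push_cast
  field_simp
  linear_combination absorption
end

section
/- Fix m ≥ 1 and indeterminates z, x, and let u = u(z) ∈ ℚ[x][[z]] be the unique solution with u(0) = x−1 of x = (1+u)/(1+zu)^{m+1}. Then for all integers i ≥ 1 and p ≥ −m, the coefficient of xⁱ in (1+zu)^p, as a formal power series in z whose coefficients are functions expanded around x, equals (p/i)·C(i(m+1)+p−1, i−1)·zⁱ(1−z)^{im+p}. -/
open PowerSeries

/-- Binomial coefficient with arbitrary rational upper argument. -/
noncomputable def ratChoose (x : ℚ) (b : ℕ) : ℚ :=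
  (∏ i ∈ Finset.range b, (x - i)) / (Nat.factorial b)

lemma ratChoose_zero (x : ℚ) : ratChoose x 0 = 1 := by simp [ratChoose]

lemma ratChoose_succ (x : ℚ) (k : ℕ) :
    ratChoose x (k + 1) = ratChoose x k * (x - k) / (k + 1) := by
  unfold ratChoose
  rw [Finset.prod_range_succ, Nat.factorial_succ]
  push_cast
  rw [div_mul_eq_mul_div, div_div, div_eq_div_iff (by positivity) (by positivity)]
  ring

lemma ratChoose_pascal (x : ℚ) (k : ℕ) :
    ratChoose (x + 1) (k + 1) = ratChoose x (k + 1) + ratChoose x k := by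
  have hprod : ∏ j ∈ Finset.range (k + 1), (x + 1 - j) = (∏ j ∈ Finset.range k, (x - j)) * (x + 1) := by
    rw [Finset.prod_range_succ']
    congr 1
    · refine Finset.prod_congr rfl fun j _ => ?_
      push_cast; ring
    · simp
  unfold ratChoose
  rw [hprod, Finset.prod_range_succ, Nat.factorial_succ]
  have h1 : ((Nat.factorial k : ℚ)) ≠ 0 := by exact_mod_cast (Nat.factorial_pos k).ne'
  have h2 : ((k : ℚ) + 1) ≠ 0 := by positivity
  field_simp
  push_cast; ring

lemma step_id (k : ℕ) (q μ : ℚ) :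
    (q + 1) / ((k : ℚ) + 2) * ratChoose (((k : ℚ) + 2) * μ + q) (k + 1)
      = q / ((k : ℚ) + 2) * ratChoose (((k : ℚ) + 2) * μ + q - 1) (k + 1)
        + (q + μ) / ((k : ℚ) + 1) * ratChoose (((k : ℚ) + 2) * μ + q - 1) k := by
  set n : ℚ := ((k : ℚ) + 2) * μ + q - 1 with hn
  have hpas : ratChoose (((k : ℚ) + 2) * μ + q) (k + 1) = ratChoose n (k + 1) + ratChoose n k := by
    have : ((k : ℚ) + 2) * μ + q = n + 1 := by rw [hn]; ring
    rw [this, ratChoose_pascal]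
  have habs : ratChoose n (k + 1) = ratChoose n k * (n - k) / (k + 1) := ratChoose_succ n k
  rw [hpas, habs]
  have h1 : ((k : ℚ) + 1) ≠ 0 := by positivity
  have h2 : ((k : ℚ) + 2) ≠ 0 := by positivity
  field_simp
  ring
open PowerSeries

/-- Swap the two variables: `ℚ[x][[z]] → ℚ[[z]][[x]]`. -/
noncomputable def swapPS : PowerSeries (Polynomial ℚ) →+* PowerSeries (PowerSeries ℚ) where
  toFun F := PowerSeries.mk fun i => PowerSeries.mk fun n =>
    (PowerSeries.coeff (R := Polynomial ℚ) n F).coeff i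
  map_one' := by
    apply PowerSeries.ext; intro i
    apply PowerSeries.ext; intro n
    simp only [coeff_mk, coeff_one, apply_ite (fun p : Polynomial ℚ => p.coeff i),
      Polynomial.coeff_one, Polynomial.coeff_zero]
    split_ifs <;> simp_all [coeff_one]
  map_mul' F G := by
    apply PowerSeries.ext; intro i
    apply PowerSeries.ext; intro n
    rw [coeff_mk, coeff_mk]
    rw [PowerSeries.coeff_mul, Polynomial.finset_sum_coeff]
    conv_rhs => rw [PowerSeries.coeff_mul]
    rw [map_sum (PowerSeries.coeff (R := ℚ) n)]
    simp only [Polynomial.coeff_mul, PowerSeries.coeff_mul, coeff_mk]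
    rw [Finset.sum_comm]
  map_zero' := by
    apply PowerSeries.ext; intro i
    apply PowerSeries.ext; intro n
    simp
  map_add' F G := by
    apply PowerSeries.ext; intro i
    apply PowerSeries.ext; intro n
    simp

lemma coeff_swapPS (F : PowerSeries (Polynomial ℚ)) (i : ℕ) :
    PowerSeries.coeff (R := PowerSeries ℚ) i (swapPS F)
      = PowerSeries.mk fun n => (PowerSeries.coeff (R := Polynomial ℚ) n F).coeff i := by
  simp [swapPS, coeff_mk]

lemma swapPS_X : swapPS PowerSeries.X = PowerSeries.C PowerSeries.X := by
  apply PowerSeries.ext; intro i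
  apply PowerSeries.ext; intro n
  rw [coeff_swapPS, coeff_mk]
  simp only [coeff_X, coeff_C, apply_ite (fun p : Polynomial ℚ => p.coeff i),
    Polynomial.coeff_one, Polynomial.coeff_zero]
  split_ifs <;> simp_all [coeff_X]

lemma swapPS_CX : swapPS (PowerSeries.C (R := Polynomial ℚ) Polynomial.X) = PowerSeries.X := by
  apply PowerSeries.ext; intro i
  apply PowerSeries.ext; intro n
  rw [coeff_swapPS, coeff_mk]
  simp only [coeff_X, coeff_C, apply_ite (fun p : Polynomial ℚ => p.coeff i),
    Polynomial.coeff_X, Polynomial.coeff_zero]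
  split_ifs <;> simp_all [coeff_one]
section Main
open PowerSeries

noncomputable def Gf (m : ℕ) (q : ℤ) (i : ℕ) : PowerSeries ℚ :=
  PowerSeries.C (R := ℚ) (((q : ℚ)/(i : ℚ)) * ratChoose ((i : ℚ)*((m : ℚ)+1) + (q : ℚ) - 1) (i-1)) *
    PowerSeries.X^i * (1 - PowerSeries.X)^(((i : ℤ)*(m : ℤ) + q).toNat)

noncomputable def Gf' (m : ℕ) (q : ℤ) (i : ℕ) : PowerSeries ℚ :=
  if i = 0 then (1 - PowerSeries.X)^(q.toNat) else Gf m q i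

lemma Gf_step (m : ℕ) (i : ℕ) (q : ℤ) (hq : -((m:ℤ)*(i+1)) ≤ q) :
    Gf m (q+1) (i+1)
      = (1 - PowerSeries.X) * Gf m q (i+1) + PowerSeries.X * Gf' m (q+(m:ℤ)+1) i := by
  have he0 : (0:ℤ) ≤ ((i:ℤ)+1)*(m:ℤ) + q := by nlinarith [hq]
  cases i with
  | zero =>
    have hA : ((1:ℕ) : ℤ)*(m:ℤ) + (q+1) = ((m:ℤ) + q) + 1 := by push_cast; ring
    have hB : ((1:ℕ) : ℤ)*(m:ℤ) + q = (m:ℤ) + q := by push_cast; ring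
    have hC : q+(m:ℤ)+1 = ((m:ℤ) + q) + 1 := by ring
    have hmq : (0:ℤ) ≤ (m:ℤ) + q := by push_cast at he0; linarith
    have hT : (((m:ℤ) + q) + 1).toNat = ((m:ℤ)+q).toNat + 1 := by omega
    simp only [Gf, Gf', Nat.zero_add, reduceIte]
    rw [hA, hB, hC, hT]
    simp only [Nat.sub_self, ratChoose_zero, mul_one, Nat.cast_one, div_one, pow_one]
    have hQ : (((q+1 : ℤ)) : ℚ) = (q:ℚ) + 1 := by push_cast; ring
    rw [hQ, map_add (PowerSeries.C (R := ℚ)), map_one (PowerSeries.C (R := ℚ)), pow_succ (1 - PowerSeries.X)]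
    ring
  | succ k =>
    have hij : (k+1+1) - 1 = k + 1 := rfl
    have hij2 : (k+1) - 1 = k := rfl
    simp only [Gf, Gf', if_neg (Nat.succ_ne_zero k), hij, hij2]
    have harg1 : ((k+1+1 : ℕ) : ℚ)*((m:ℚ)+1) + ((q+1 : ℤ) : ℚ) - 1
        = ((k:ℚ)+2)*((m:ℚ)+1) + (q:ℚ) := by push_cast; ring
    have harg2 : ((k+1+1 : ℕ) : ℚ)*((m:ℚ)+1) + ((q : ℤ) : ℚ) - 1
        = ((k:ℚ)+2)*((m:ℚ)+1) + (q:ℚ) - 1 := by push_cast; ring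
    have harg3 : ((k+1 : ℕ) : ℚ)*((m:ℚ)+1) + ((q+(m:ℤ)+1 : ℤ) : ℚ) - 1
        = ((k:ℚ)+2)*((m:ℚ)+1) + (q:ℚ) - 1 := by push_cast; ring
    have hc1 : (((q+1 : ℤ)) : ℚ)/((k+1+1 : ℕ) : ℚ) = ((q:ℚ)+1)/((k:ℚ)+2) := by push_cast; ring
    have hc2 : (((q : ℤ)) : ℚ)/((k+1+1 : ℕ) : ℚ) = (q:ℚ)/((k:ℚ)+2) := by push_cast; ring
    have hc3 : (((q+(m:ℤ)+1 : ℤ)) : ℚ)/((k+1 : ℕ) : ℚ) = ((q:ℚ)+((m:ℚ)+1))/((k:ℚ)+1) := by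
      push_cast; ring
    rw [harg1, harg2, harg3, hc1, hc2, hc3]
    have hkey : ((q:ℚ)+1)/((k:ℚ)+2) * ratChoose (((k:ℚ)+2)*((m:ℚ)+1) + (q:ℚ)) (k+1)
        = (q:ℚ)/((k:ℚ)+2) * ratChoose (((k:ℚ)+2)*((m:ℚ)+1) + (q:ℚ) - 1) (k+1)
          + ((q:ℚ)+((m:ℚ)+1))/((k:ℚ)+1) * ratChoose (((k:ℚ)+2)*((m:ℚ)+1) + (q:ℚ) - 1) k :=
      step_id k (q:ℚ) ((m:ℚ)+1)
    have hE1 : (((k+1+1 : ℕ) : ℤ)*(m:ℤ) + (q+1)).toNat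
        = (((k+1+1 : ℕ) : ℤ)*(m:ℤ) + q).toNat + 1 := by
      have : (0:ℤ) ≤ ((k+1+1 : ℕ) : ℤ)*(m:ℤ) + q := by push_cast at he0 ⊢; nlinarith
      omega
    have hE2 : (((k+1 : ℕ) : ℤ)*(m:ℤ) + (q+(m:ℤ)+1)).toNat
        = (((k+1+1 : ℕ) : ℤ)*(m:ℤ) + q).toNat + 1 := by
      have h1 : ((k+1 : ℕ) : ℤ)*(m:ℤ) + (q+(m:ℤ)+1) = ((k+1+1 : ℕ) : ℤ)*(m:ℤ) + q + 1 := by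
        push_cast; ring
      have : (0:ℤ) ≤ ((k+1+1 : ℕ) : ℤ)*(m:ℤ) + q := by push_cast at he0 ⊢; nlinarith
      omega
    rw [hE1, hE2, hkey, map_add (PowerSeries.C (R := ℚ))]
    rw [pow_succ (1 - PowerSeries.X) ((((k+1+1 : ℕ) : ℤ)*(m:ℤ) + q).toNat),
        show (k+1+1 : ℕ) = (k+1)+1 from rfl, pow_succ PowerSeries.X (k+1)]
    ring

end Main
section Units
open PowerSeries

abbrev BB := PowerSeries (PowerSeries ℚ)

lemma unit_rec (m : ℕ) (w : BBˣ)
    (hw : (w : BB) = PowerSeries.C (R := PowerSeries ℚ) (1 - PowerSeries.X)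
        + PowerSeries.C (R := PowerSeries ℚ) PowerSeries.X * PowerSeries.X * (w : BB)^(m+1))
    (q : ℤ) :
    ((w^(q+1) : BBˣ) : BB)
      = PowerSeries.C (R := PowerSeries ℚ) (1 - PowerSeries.X) * ((w^q : BBˣ) : BB)
        + PowerSeries.C (R := PowerSeries ℚ) PowerSeries.X * PowerSeries.X
            * ((w^(q+(m:ℤ)+1) : BBˣ) : BB) := by
  have h3 : ((w^q : BBˣ) : BB) * ((w : BB))^(m+1) = ((w^(q+(m:ℤ)+1) : BBˣ) : BB) := by
    have hcast : q+(m:ℤ)+1 = q + ((m+1 : ℕ) : ℤ) := by push_cast; ring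
    rw [hcast, zpow_add, zpow_natCast, Units.val_mul, Units.val_pow_eq_pow_val]
  have h1 : ((w^(q+1) : BBˣ) : BB) = ((w^q : BBˣ) : BB) * (w : BB) := by
    rw [zpow_add_one, Units.val_mul]
  rw [h1]
  conv_lhs => rw [hw]
  rw [← h3]
  ring

lemma unit_base (m : ℕ) (w : BBˣ)
    (hw : (w : BB) = PowerSeries.C (R := PowerSeries ℚ) (1 - PowerSeries.X)
        + PowerSeries.C (R := PowerSeries ℚ) PowerSeries.X * PowerSeries.X * (w : BB)^(m+1))
    (n : ℕ) :
    constantCoeff (R := PowerSeries ℚ) ((w^(n:ℤ) : BBˣ) : BB) = (1 - PowerSeries.X)^n := by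
  rw [zpow_natCast, Units.val_pow_eq_pow_val, map_pow]
  congr 1
  rw [hw]
  simp [constantCoeff_X]

lemma main_formula (m : ℕ) (hm : 1 ≤ m) (w : BBˣ)
    (hw : (w : BB) = PowerSeries.C (R := PowerSeries ℚ) (1 - PowerSeries.X)
        + PowerSeries.C (R := PowerSeries ℚ) PowerSeries.X * PowerSeries.X * (w : BB)^(m+1)) :
    ∀ i : ℕ, ∀ q : ℤ, -((m:ℤ)*i) ≤ q →
      PowerSeries.coeff (R := PowerSeries ℚ) i ((w^q : BBˣ) : BB) = Gf' m q i := by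
  have hXunit : IsUnit (1 - PowerSeries.X : PowerSeries ℚ) := by
    rw [PowerSeries.isUnit_iff_constantCoeff]
    simp [constantCoeff_X]
  have hmi0 : (0:ℤ) ≤ (m:ℤ) := Int.natCast_nonneg m
  intro i
  induction i with
  | zero =>
    intro q hq
    have h0 : 0 ≤ q := by simpa using hq
    obtain ⟨n, rfl⟩ : ∃ n : ℕ, q = (n : ℤ) := ⟨q.toNat, (Int.toNat_of_nonneg h0).symm⟩
    rw [coeff_zero_eq_constantCoeff_apply, unit_base m w hw n]
    simp [Gf']
  | succ i ih =>
    have hii0 : (0:ℤ) ≤ (i:ℤ) := Int.natCast_nonneg i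
    have hmimul : (0:ℤ) ≤ (m:ℤ)*(i:ℤ) := mul_nonneg hmi0 hii0
    have hGfp : ∀ r : ℤ, Gf' m r (i+1) = Gf m r (i+1) := fun r => by
      rw [Gf', if_neg (Nat.succ_ne_zero i)]
    have crec : ∀ q : ℤ,
        PowerSeries.coeff (R := PowerSeries ℚ) (i+1) ((w^(q+1) : BBˣ) : BB)
          = (1 - PowerSeries.X) * PowerSeries.coeff (R := PowerSeries ℚ) (i+1) ((w^q : BBˣ) : BB)
            + PowerSeries.X * PowerSeries.coeff (R := PowerSeries ℚ) i ((w^(q+(m:ℤ)+1) : BBˣ) : BB) := by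
      intro q
      rw [unit_rec m w hw q, map_add, coeff_C_mul, mul_assoc, coeff_C_mul, coeff_succ_X_mul]
    have up : ∀ n : ℕ, PowerSeries.coeff (R := PowerSeries ℚ) (i+1) ((w^((n:ℕ):ℤ) : BBˣ) : BB)
        = Gf' m (n:ℤ) (i+1) := by
      intro n
      induction n with
      | zero =>
        simp [Gf', Gf, Nat.succ_ne_zero]
      | succ n ihn =>
        have hn0 : (0:ℤ) ≤ (n:ℤ) := Int.natCast_nonneg n
        have hcast : ((n+1 : ℕ) : ℤ) = (n : ℤ) + 1 := by push_cast; ring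
        rw [hcast, crec (n:ℤ), ihn]
        have hih := ih ((n:ℤ)+(m:ℤ)+1) (by linarith)
        rw [hih]
        have hstep := Gf_step m i (n:ℤ) (by
          have : (m:ℤ)*((i:ℤ)+1) = (m:ℤ)*(i:ℤ) + m := by ring
          linarith)
        rw [hGfp, hGfp, hstep]
    have down : ∀ n : ℕ, (n:ℤ) ≤ (m:ℤ)*(i+1) →
        PowerSeries.coeff (R := PowerSeries ℚ) (i+1) ((w^(-(n:ℤ)) : BBˣ) : BB)
          = Gf' m (-(n:ℤ)) (i+1) := by
      intro n
      induction n with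
      | zero =>
        intro _
        have := up 0
        simpa using this
      | succ n ihn =>
        intro hle
        have hexp : (m:ℤ)*((i:ℤ)+1) = (m:ℤ)*(i:ℤ) + m := by ring
        have hle2 : ((n:ℤ)+1) ≤ (m:ℤ)*((i:ℤ)+1) := by push_cast at hle; linarith
        have hle' : (n:ℤ) ≤ (m:ℤ)*(i+1) := by push_cast; linarith
        have hrec := crec (-(n:ℤ)-1)
        rw [show -(n:ℤ)-1+1 = -(n:ℤ) by ring] at hrec
        rw [ihn hle'] at hrec
        have hih := ih (-(n:ℤ)-1+(m:ℤ)+1) (by linarith)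
        rw [hih] at hrec
        have hstep := Gf_step m i (-(n:ℤ)-1) (by linarith)
        rw [show -(n:ℤ)-1+1 = -(n:ℤ) by ring] at hstep
        rw [hGfp] at hrec
        rw [hstep] at hrec
        have heq : (1 - PowerSeries.X) * Gf m (-(n:ℤ)-1) (i+1)
            = (1 - PowerSeries.X)
              * PowerSeries.coeff (R := PowerSeries ℚ) (i+1) ((w^(-(n:ℤ)-1) : BBˣ) : BB) := by
          linear_combination hrec
        have hcancel := hXunit.mul_left_cancel heq
        rw [show -((n+1 : ℕ) : ℤ) = -(n:ℤ)-1 by push_cast; ring]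
        rw [hGfp]
        exact hcancel.symm
    intro q hq
    rcases le_or_gt 0 q with h0 | h0
    · obtain ⟨n, rfl⟩ : ∃ n : ℕ, q = (n : ℤ) := ⟨q.toNat, (Int.toNat_of_nonneg h0).symm⟩
      exact up n
    · obtain ⟨n, rfl⟩ : ∃ n : ℕ, q = -(n : ℤ) := ⟨(-q).toNat, by omega⟩
      refine down n ?_
      have hexp : (m:ℤ)*((i:ℤ)+1) = (m:ℤ)*(i:ℤ) + m := by ring
      push_cast at hq ⊢
      linarith

end Units
/-- Fix m ≥ 1 and let u = u(z) ∈ ℚ[x][[z]] be the unique series with u(0) = x−1 satisfying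
x = (1+u)/(1+zu)^{m+1} (hypotheses `hU0`, `hU`). For i ≥ 1 and integer p ≥ −m, writing
W = 1+zu and letting V = Wᵖ (characterized by V·W^m = W^{p+m}, hypothesis `hV`),
the coefficient of xⁱ in Wᵖ, as a power series in z, equals
(p/i)·C(i(m+1)+p−1, i−1)·zⁱ(1−z)^{im+p}. -/
theorem coeff_x_pow_w (m : ℕ) (hm : 1 ≤ m)
    (U : PowerSeries (Polynomial ℚ))
    (hU0 : PowerSeries.constantCoeff (R := Polynomial ℚ) U = Polynomial.X - 1)
    (hU : PowerSeries.C (R := Polynomial ℚ) Polynomial.X * (1 + PowerSeries.X * U)^(m+1) = 1 + U)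
    (p : ℤ) (hp : -(m : ℤ) ≤ p) (i : ℕ) (hi : 1 ≤ i)
    (V : PowerSeries (Polynomial ℚ))
    (hV : V * (1 + PowerSeries.X * U)^m = (1 + PowerSeries.X * U)^((p + m).toNat)) :
    PowerSeries.mk (fun n => (PowerSeries.coeff (R := Polynomial ℚ) n V).coeff i)
      = PowerSeries.C (R := ℚ)
          (((p : ℚ)/(i : ℚ)) * ratChoose ((i : ℚ)*((m : ℚ)+1) + (p : ℚ) - 1) (i-1)) *
        PowerSeries.X^i * (1 - PowerSeries.X)^(((i : ℤ)*(m : ℤ) + p).toNat) := by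
  classical
  set W : PowerSeries (Polynomial ℚ) := 1 + PowerSeries.X * U with hWdef
  -- functional equation for W
  have hWeq : W = 1 - PowerSeries.X
      + PowerSeries.X * PowerSeries.C (R := Polynomial ℚ) Polynomial.X * W^(m+1) := by
    rw [hWdef]
    linear_combination (-(PowerSeries.X : PowerSeries (Polynomial ℚ))) * hU
  -- transfer to ℚ[[z]][[x]]
  set W' : BB := swapPS W with hW'def
  have hw'eq : W' = PowerSeries.C (R := PowerSeries ℚ) (1 - PowerSeries.X)
      + PowerSeries.C (R := PowerSeries ℚ) PowerSeries.X * PowerSeries.X * W'^(m+1) := by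
    rw [hW'def]
    conv_lhs => rw [hWeq]
    rw [map_add, map_sub, map_one, map_mul, map_mul, map_pow, swapPS_X, swapPS_CX]
    rw [map_sub, map_one]
  have hWunit : IsUnit W' := by
    rw [PowerSeries.isUnit_iff_constantCoeff]
    have : PowerSeries.constantCoeff (R := PowerSeries ℚ) W' = 1 - PowerSeries.X := by
      conv_lhs => rw [hw'eq]
      simp [PowerSeries.constantCoeff_X]
    rw [this, PowerSeries.isUnit_iff_constantCoeff]
    simp [PowerSeries.constantCoeff_X]
  set w : BBˣ := hWunit.unit with hwdef
  have hwW : (w : BB) = W' := hWunit.unit_spec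
  have hw : (w : BB) = PowerSeries.C (R := PowerSeries ℚ) (1 - PowerSeries.X)
      + PowerSeries.C (R := PowerSeries ℚ) PowerSeries.X * PowerSeries.X * (w : BB)^(m+1) := by
    rw [hwW]; exact hw'eq
  -- identify swapPS V with w^p
  have hpm : ((p + (m:ℤ)).toNat : ℤ) = p + m := Int.toNat_of_nonneg (by linarith)
  have hVW : swapPS V * ((w : BB))^m = ((w : BB))^((p + (m:ℤ)).toNat) := by
    rw [hwW, hW'def, ← map_pow, ← map_pow, ← map_mul]
    exact congrArg swapPS hV
  have hswapV : swapPS V = ((w^p : BBˣ) : BB) := by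
    have h1 : ((w : BB))^m = ((w^((m:ℕ):ℤ) : BBˣ) : BB) := by
      rw [zpow_natCast, Units.val_pow_eq_pow_val]
    have h2 : ((w : BB))^((p + (m:ℤ)).toNat) = ((w^(p+(m:ℤ)) : BBˣ) : BB) := by
      have hcg := congrArg (fun t : ℤ => ((w^t : BBˣ) : BB)) hpm
      rw [← hcg, zpow_natCast, Units.val_pow_eq_pow_val]
    have h3 : ((w^p : BBˣ) : BB) * ((w^((m:ℕ):ℤ) : BBˣ) : BB)
        = ((w^(p+(m:ℤ)) : BBˣ) : BB) := by
      rw [← Units.val_mul, ← zpow_add]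
    have hc : IsUnit (((w^((m:ℕ):ℤ) : BBˣ)) : BB) := (w^((m:ℕ):ℤ)).isUnit
    apply hc.mul_left_cancel
    rw [mul_comm _ (swapPS V), mul_comm _ (((w^p : BBˣ)) : BB)]
    rw [← h1, hVW, h2, ← h3, h1]
  -- apply the main formula
  have hrange : -((m:ℤ)*(i:ℤ)) ≤ p := by
    have h1 : (m:ℤ) ≤ (m:ℤ)*(i:ℤ) := by
      have h2 : (1:ℤ) ≤ (i:ℤ) := by exact_mod_cast hi
      nlinarith [Int.natCast_nonneg m]
    linarith
  have hmain := main_formula m hm w hw i p hrange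
  have hlhs : PowerSeries.mk (fun n => (PowerSeries.coeff (R := Polynomial ℚ) n V).coeff i)
      = PowerSeries.coeff (R := PowerSeries ℚ) i (swapPS V) := (coeff_swapPS V i).symm
  rw [hlhs, hswapV, hmain]
  unfold Gf' Gf
  rw [if_neg (by omega : ¬ i = 0)]
end

section
/- Let F(t;x) ∈ ℚ[x][[t]] be the unique formal power series satisfying F(x) = x + x·t·F(x)·(F(x)−F(1))/(x−1) (the case m=1). Then the specialization f = F(t;1) satisfies the algebraic equation 1 − 16t − (1−20t)f − (3t+8t²)f² − 3t²f³ − t³f⁴ = 0, and admits the rational parametrization t = z(1−z)³, f = (1−2z)/(1−z)³. -/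
open Polynomial PowerSeries

/-- The specialization x := 1 of coefficients, followed by re-inclusion. -/
noncomputable def atOne : PowerSeries (Polynomial ℚ) → PowerSeries (Polynomial ℚ) :=
  PowerSeries.map ((Polynomial.C : ℚ →+* Polynomial ℚ).comp (Polynomial.evalRingHom 1))

/-- The specialization x := 1, landing in ℚ[[t]]. -/
noncomputable def specOne : PowerSeries (Polynomial ℚ) → PowerSeries ℚ :=
  PowerSeries.map (Polynomial.evalRingHom 1)

/-!
Instead of solving the catalytic equation we write down its solution. Let `z` be the series with
`t = z (1 - z)³` and let `W` be the Catalan series evaluated at `u = x z (1 - z)`, so that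
`W = 1 + u W²`. Then `G = (1 - (1 - x (1 - z)) W) / (1 - z)²` satisfies the equation: at `x = 1`
the Catalan equation is solved by `W = 1 / (1 - z)`, whence `G(1) = (1 - 2z) / (1 - z)³`, and with
this value of `G(1)` the equation becomes a polynomial consequence of `W = 1 + u W²`.
The solution is unique, because `x - 1` is a non-zero-divisor in `ℚ[x]` and the coefficient of `tⁿ`
on the right-hand side only involves lower coefficients. Hence `F(1) = (1 - 2z) / (1 - z)³`, and
eliminating `z` between this and `t = z (1 - z)³` gives the quartic equation.
-/

namespace PowerSeries

variable {R : Type*} [CommRing R]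

def IsXContraction (Φ : R⟦X⟧ → R⟦X⟧) : Prop :=
  ∀ A B, X * (A - B) ∣ Φ A - Φ B

theorem IsXContraction.coeff_eq {Φ : R⟦X⟧ → R⟦X⟧} (hΦ : IsXContraction Φ) {n : ℕ}
    {A B : R⟦X⟧} (h : ∀ k < n, coeff k A = coeff k B) : coeff n (Φ A) = coeff n (Φ B) := by
  have hAB : X ^ n ∣ A - B := X_pow_dvd_iff.mpr fun k hk => by rw [map_sub, h k hk, sub_self]
  have hΦAB : X ^ (n + 1) ∣ Φ A - Φ B := by
    rw [pow_succ']
    exact (mul_dvd_mul_left X hAB).trans (hΦ A B)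
  exact sub_eq_zero.mp (by simpa using X_pow_dvd_iff.mp hΦAB n n.lt_succ_self)

noncomputable def fixedPointCoeff (Φ : R⟦X⟧ → R⟦X⟧) (n : ℕ) : R :=
  coeff n (Φ (mk fun k => if k < n then fixedPointCoeff Φ k else 0))
decreasing_by assumption

noncomputable def fixedPoint (Φ : R⟦X⟧ → R⟦X⟧) : R⟦X⟧ :=
  mk (fixedPointCoeff Φ)

theorem IsXContraction.isFixedPt_fixedPoint {Φ : R⟦X⟧ → R⟦X⟧} (hΦ : IsXContraction Φ) :
    Function.IsFixedPt Φ (fixedPoint Φ) := by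
  ext n
  rw [fixedPoint, coeff_mk, fixedPointCoeff]
  exact hΦ.coeff_eq fun k hk => by simp [hk]

theorem IsXContraction.eq_of_isFixedPt {Φ : R⟦X⟧ → R⟦X⟧} (hΦ : IsXContraction Φ)
    {A B : R⟦X⟧} (hA : Function.IsFixedPt Φ A) (hB : Function.IsFixedPt Φ B) : A = B := by
  ext n
  induction n using Nat.strong_induction_on with
  | _ n ih => rw [← hA, ← hB]; exact hΦ.coeff_eq ih

/-- `Z = X * B` where `B (1 - X B)³ = 1`, i.e. `B` is the fixed point of the contraction
`B ↦ 1 + X B² (3 - 3 X B + X² B²)`. -/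
theorem exists_mul_one_sub_pow_three_eq_X :
    ∃ Z : R⟦X⟧, constantCoeff Z = 0 ∧ Z * (1 - Z) ^ 3 = X := by
  set Φ : R⟦X⟧ → R⟦X⟧ := fun B => 1 + X * B ^ 2 * (3 - 3 * X * B + X ^ 2 * B ^ 2)
  have hΦ : IsXContraction Φ := fun A B =>
    ⟨3 * (A + B) - 3 * X * (A ^ 2 + A * B + B ^ 2) + X ^ 2 * (A + B) * (A ^ 2 + B ^ 2), by
      simp only [Φ]; ring⟩
  have hB : 1 + X * fixedPoint Φ ^ 2 * (3 - 3 * X * fixedPoint Φ + X ^ 2 * fixedPoint Φ ^ 2) =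
      fixedPoint Φ := hΦ.isFixedPt_fixedPoint
  refine ⟨X * fixedPoint Φ, by simp, ?_⟩
  linear_combination -X * hB

theorem isXContraction_one_add_mul_sq {u : R⟦X⟧} (hu : constantCoeff u = 0) :
    IsXContraction fun A => 1 + u * A ^ 2 := by
  obtain ⟨v, rfl⟩ := X_dvd_iff.mpr hu
  exact fun A B => ⟨v * (A + B), by ring⟩

noncomputable def catalanAt (u : R⟦X⟧) : R⟦X⟧ :=
  fixedPoint fun A => 1 + u * A ^ 2

theorem one_add_mul_catalanAt_sq {u : R⟦X⟧} (hu : constantCoeff u = 0) :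
    1 + u * catalanAt u ^ 2 = catalanAt u :=
  (isXContraction_one_add_mul_sq hu).isFixedPt_fixedPoint

theorem catalanAt_eq {u A : R⟦X⟧} (hu : constantCoeff u = 0) (hA : 1 + u * A ^ 2 = A) :
    catalanAt u = A :=
  (isXContraction_one_add_mul_sq hu).eq_of_isFixedPt (one_add_mul_catalanAt_sq hu) hA

@[simp]
theorem constantCoeff_map {S : Type*} [CommRing S] (f : R →+* S) (A : R⟦X⟧) :
    constantCoeff (map f A) = f (constantCoeff A) := by
  rw [← coeff_zero_eq_constantCoeff_apply, coeff_map, coeff_zero_eq_constantCoeff_apply]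

theorem map_catalanAt {S : Type*} [CommRing S] (f : R →+* S) {u : R⟦X⟧}
    (hu : constantCoeff u = 0) : map f (catalanAt u) = catalanAt (map f u) := by
  have hfu : constantCoeff (map f u) = 0 := by simp [hu]
  refine (catalanAt_eq hfu ?_).symm
  simpa using congrArg (map f) (one_add_mul_catalanAt_sq hu)

theorem X_pow_dvd_of_X_pow_dvd_C_mul [NoZeroDivisors R] {a : R} (ha : a ≠ 0) {n : ℕ}
    {A : R⟦X⟧} (h : X ^ n ∣ C a * A) : X ^ n ∣ A :=
  X_pow_dvd_iff.mpr fun m hm => by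
    simpa [ha] using X_pow_dvd_iff.mp h m hm

theorem inv_pow {k : Type*} [Field k] (A : k⟦X⟧) (n : ℕ) : (A ^ n)⁻¹ = A⁻¹ ^ n := by
  induction n with
  | zero => simp
  | succ n ih => rw [pow_succ, PowerSeries.mul_inv_rev, ih, pow_succ']

end PowerSeries

theorem tamari_equation_of_catalan {A : Type*} [CommRing A] {ξ t Y V W G : A}
    (ht : Y * (1 - Y) ^ 3 = t) (hV : (1 - Y) * V = 1) (hW : 1 + ξ * Y * (1 - Y) * W ^ 2 = W)
    (hG : G = (1 - (1 - ξ * (1 - Y)) * W) * V ^ 2) :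
    (ξ - 1) * (G - ξ) = ξ * t * G * (G - (1 - 2 * Y) * V ^ 3) := by
  set g := 1 - (1 - ξ * (1 - Y)) * W
  subst hG
  linear_combination -V ^ 2 * (1 - ξ * (1 - Y)) ^ 2 * hW
    + (ξ * (ξ - 1) * ((1 - Y) * V + 1) + ξ * Y * g * V ^ 2 * (-(1 - Y) * g * ((1 - Y) * V + 1)
      + (1 - 2 * Y) * ((1 - Y) ^ 2 * V ^ 2 + (1 - Y) * V + 1))) * hV
    + ξ * g * V ^ 2 * (g * V ^ 2 - (1 - 2 * Y) * V ^ 3) * ht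

theorem tamari_quartic_of_parametrization {R : Type*} [CommRing R] [IsDomain R] {z f : R}
    (hz : z ≠ 1) (hf : (1 - z) ^ 3 * f = 1 - 2 * z) :
    1 - 16 * (z * (1 - z) ^ 3) - (1 - 20 * (z * (1 - z) ^ 3)) * f
      - (3 * (z * (1 - z) ^ 3) + 8 * (z * (1 - z) ^ 3) ^ 2) * f ^ 2
      - 3 * (z * (1 - z) ^ 3) ^ 2 * f ^ 3 - (z * (1 - z) ^ 3) ^ 3 * f ^ 4 = 0 := by
  refine (mul_eq_zero.mp ?_).resolve_left (pow_ne_zero 3 (sub_ne_zero.mpr hz.symm))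
  set g := (1 - z) ^ 3 * f
  set h := 1 - 2 * z
  -- `(1 - z)³ P` is a polynomial `E(g)` in `g` over `ℤ[z]`, and `E(h) = 0`.
  linear_combination (-1 + 20 * z * (1 - z) ^ 3 + (-3 * z - 8 * z ^ 2 * (1 - z) ^ 3) * (g + h)
    - 3 * z ^ 2 * (g ^ 2 + g * h + h ^ 2) - z ^ 3 * (g ^ 3 + g ^ 2 * h + g * h ^ 2 + h ^ 3)) * hf

def IsTamariSolution (F : ℚ[X]⟦X⟧) : Prop :=
  PowerSeries.C (Polynomial.X - 1) * (F - PowerSeries.C Polynomial.X)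
    = PowerSeries.C Polynomial.X * PowerSeries.X * F * (F - atOne F)

theorem atOne_eq_map_specOne (F : ℚ[X]⟦X⟧) :
    atOne F = PowerSeries.map Polynomial.C (specOne F) := by
  rw [atOne, specOne, PowerSeries.map_comp]
  rfl

@[simp]
theorem map_evalRingHom_one_map_C (A : ℚ⟦X⟧) :
    PowerSeries.map (Polynomial.evalRingHom 1) (PowerSeries.map Polynomial.C A) = A := by
  ext n
  simp

theorem IsTamariSolution.unique {F G : ℚ[X]⟦X⟧} (hF : IsTamariSolution F)
    (hG : IsTamariSolution G) : F = G := by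
  set D := F - G
  have hD : PowerSeries.C (Polynomial.X - 1) * D = PowerSeries.X *
      (PowerSeries.C Polynomial.X * (D * (F - atOne F) + G * (D - atOne D))) := by
    rw [show atOne D = atOne F - atOne G from map_sub _ _ _]
    unfold IsTamariSolution at hF hG
    linear_combination hF - hG
  have hdvd : ∀ n, PowerSeries.X ^ n ∣ D := by
    intro n
    induction n with
    | zero => exact one_dvd D
    | succ n ih =>
      have hat : PowerSeries.X ^ n ∣ atOne D := by
        simpa [atOne] using
          map_dvd (PowerSeries.map ((Polynomial.C).comp (Polynomial.evalRingHom 1))) ih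
      refine X_pow_dvd_of_X_pow_dvd_C_mul (by simpa using X_sub_C_ne_zero (1 : ℚ)) ?_
      rw [hD, pow_succ']
      exact mul_dvd_mul_left _ (dvd_mul_of_dvd_right (dvd_add (dvd_mul_of_dvd_left ih _)
        (dvd_mul_of_dvd_right (dvd_sub ih hat) _)) _)
  refine sub_eq_zero.mp (PowerSeries.ext fun n => ?_)
  simpa [D] using X_pow_dvd_iff.mp (hdvd (n + 1)) n n.lt_succ_self

local notation "ξ" => PowerSeries.C (Polynomial.X : ℚ[X])

noncomputable def tamariSol (Z : ℚ⟦X⟧) : ℚ[X]⟦X⟧ :=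
  (1 - (1 - ξ * (1 - PowerSeries.map Polynomial.C Z)) *
      catalanAt (ξ * PowerSeries.map Polynomial.C Z * (1 - PowerSeries.map Polynomial.C Z))) *
    PowerSeries.map Polynomial.C (1 - Z)⁻¹ ^ 2

theorem specOne_tamariSol {Z : ℚ⟦X⟧} (hZ0 : PowerSeries.constantCoeff Z = 0) :
    specOne (tamariSol Z) = (1 - 2 * Z) * (1 - Z)⁻¹ ^ 3 := by
  have hv := PowerSeries.mul_inv_cancel (1 - Z) (by simp [hZ0])
  have hu : PowerSeries.constantCoeff
      (ξ * PowerSeries.map Polynomial.C Z * (1 - PowerSeries.map Polynomial.C Z)) = 0 := by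
    simp [hZ0]
  rw [tamariSol]
  set W := catalanAt (ξ * PowerSeries.map Polynomial.C Z * (1 - PowerSeries.map Polynomial.C Z))
  have hW : PowerSeries.map (Polynomial.evalRingHom 1) W = (1 - Z)⁻¹ := by
    rw [map_catalanAt _ hu]
    refine catalanAt_eq (by simp [hZ0]) ?_
    simp only [map_mul, map_sub, PowerSeries.map_C, coe_evalRingHom, eval_X, map_one, one_mul,
      map_evalRingHom_one_map_C]
    linear_combination (Z * (1 - Z)⁻¹ - 1) * hv
  simp only [specOne, map_mul, map_sub, map_one, map_pow, PowerSeries.map_C, coe_evalRingHom,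
    eval_X, map_evalRingHom_one_map_C, hW, one_mul]
  linear_combination -(1 - Z)⁻¹ ^ 2 * hv

theorem isTamariSolution_tamariSol {Z : ℚ⟦X⟧} (hZ0 : PowerSeries.constantCoeff Z = 0)
    (hZ : Z * (1 - Z) ^ 3 = PowerSeries.X) : IsTamariSolution (tamariSol Z) := by
  set Y := PowerSeries.map Polynomial.C Z
  set V := PowerSeries.map Polynomial.C (1 - Z)⁻¹
  have hu : PowerSeries.constantCoeff (ξ * Y * (1 - Y)) = 0 := by simp [Y, hZ0]
  have hV : (1 - Y) * V = 1 := by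
    have := congrArg (PowerSeries.map Polynomial.C)
      (PowerSeries.mul_inv_cancel (1 - Z) (by simp [hZ0]))
    rwa [map_mul, map_sub, map_one] at this
  have ht : Y * (1 - Y) ^ 3 = PowerSeries.X := by
    simpa using congrArg (PowerSeries.map Polynomial.C) hZ
  have key :=
    tamari_equation_of_catalan (G := tamariSol Z) ht hV (one_add_mul_catalanAt_sq hu) rfl
  rw [IsTamariSolution, atOne_eq_map_specOne, specOne_tamariSol hZ0,
    show PowerSeries.C (Polynomial.X - 1 : ℚ[X]) = ξ - 1 by simp,
    show PowerSeries.map Polynomial.C ((1 - 2 * Z) * (1 - Z)⁻¹ ^ 3) = (1 - 2 * Y) * V ^ 3 by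
      rw [map_mul, map_sub, map_pow, map_mul, map_one, map_ofNat]]
  exact key

/-- Let F(t;x) ∈ ℚ[x][[t]] satisfy the (m=1) Tamari functional equation
F(x) = x + xt·F(x)·(F(x)−F(1))/(x−1) (denominator cleared in `hF`). Then f = F(t;1)
satisfies 1 − 16t − (1−20t)f − (3t+8t²)f² − 3t²f³ − t³f⁴ = 0, and admits the rational
parametrization t = z(1−z)³, f = (1−2z)/(1−z)³: if Z ∈ ℚ[[t]] has Z(0)=0 and
Z(1−Z)³ = t, then f = (1−2Z)/(1−Z)³. -/
theorem tamari_gf_algebraic (F : PowerSeries (Polynomial ℚ))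
    (hF : PowerSeries.C (Polynomial.X - 1) *
            (F - PowerSeries.C Polynomial.X)
        = PowerSeries.C Polynomial.X * PowerSeries.X * F * (F - atOne F)) :
    (1 - 16*PowerSeries.X - (1 - 20*PowerSeries.X) * specOne F
      - (3*PowerSeries.X + 8*PowerSeries.X^2) * (specOne F)^2
      - 3*PowerSeries.X^2 * (specOne F)^3 - PowerSeries.X^3 * (specOne F)^4 = 0)
    ∧ ∀ Z : PowerSeries ℚ, PowerSeries.constantCoeff Z = 0 →
        Z * (1 - Z)^3 = PowerSeries.X →
        specOne F = (1 - 2*Z) * ((1 - Z)^3)⁻¹ := by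
  have hf : ∀ Z : PowerSeries ℚ, PowerSeries.constantCoeff Z = 0 →
      Z * (1 - Z) ^ 3 = PowerSeries.X → specOne F = (1 - 2 * Z) * ((1 - Z) ^ 3)⁻¹ :=
    fun Z hZ0 hZ => by
      rw [IsTamariSolution.unique hF (isTamariSolution_tamariSol hZ0 hZ), specOne_tamariSol hZ0,
        PowerSeries.inv_pow]
  obtain ⟨Z, hZ0, hZ⟩ := exists_mul_one_sub_pow_three_eq_X (R := ℚ)
  refine ⟨?_, hf⟩
  rw [← hZ]
  refine tamari_quartic_of_parametrization (fun h => by simp [h] at hZ0) ?_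
  rw [hf Z hZ0 hZ, mul_left_comm, PowerSeries.mul_inv_cancel _ (by simp [hZ0]), mul_one]
end

section
/- Let m ≥ 1 and define H(u,v) = [(1+u)(1+zu)(1+v)(1+zv)/((u−v)(1−zuv))]·[(1+u)/(1+zu)^{m+1} − (1+v)/(1+zv)^{m+1}], a formal power series in z with coefficients in ℚ[u,v]. Then H is symmetric in u and v, and satisfies the relation (u−v)(1−zuv)·H(u,v) = u(1+v)(1+zv)·H(u,0) − v(1+u)(1+zu)·H(v,0), where H(u,0) = ((1+u)(1+zu)/u)·((1+u)/(1+zu)^{m+1} − 1). -/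
/-!
The cleared identity `hH` determines `H`: its coefficient (u−v)(1−zuv)(1+zu)^{m+1}(1+zv)^{m+1} is
nonzero in the domain ℚ[u,v][[z]]. Any substitution of u, v carries a solution to a solution, and
exchanging u and v only multiplies both sides of the identity by −1, whence the symmetry. Putting
v = 0 gives the formula for H(u,0), and the relation is a linear combination of the identities for
H(u,v), H(u,0) and H(v,0), after cancelling the unit (1+zu)^{m+1}(1+zv)^{m+1}.
-/

open PowerSeries

noncomputable section

/-- wu = 1+zu, wv = 1+zv as power series in z over ℚ[u,v]. -/
def wu : PowerSeries M := 1 + PowerSeries.X * PowerSeries.C (R := M) u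
def wv : PowerSeries M := 1 + PowerSeries.X * PowerSeries.C (R := M) v

namespace PowerSeries

variable {R : Type*} [CommRing R]

theorem isUnit_one_add_X_mul_C (a : R) : IsUnit (1 + X * C a : R⟦X⟧) := by
  simp [isUnit_iff_constantCoeff]

/-- `F` is the series `H` of parameters `a, b` and exponent `n = m + 1`, with denominators cleared. -/
def IsHSeries (n : ℕ) (a b : R) (F : R⟦X⟧) : Prop :=
  C (a - b) * (1 - X * C (a * b)) * (1 + X * C a) ^ n * (1 + X * C b) ^ n * F
    = C (1 + a) * (1 + X * C a) * C (1 + b) * (1 + X * C b) *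
      (C (1 + a) * (1 + X * C b) ^ n - C (1 + b) * (1 + X * C a) ^ n)

namespace IsHSeries

variable {n : ℕ} {a b : R} {F G : R⟦X⟧}

theorem map {S : Type*} [CommRing S] (φ : R →+* S) (h : IsHSeries n a b F) :
    IsHSeries n (φ a) (φ b) (map φ F) := by
  have := congrArg (PowerSeries.map φ) h
  simpa only [IsHSeries, map_mul, map_sub, map_add, map_one, map_pow, map_C, map_X] using this

theorem symm (h : IsHSeries n a b F) : IsHSeries n b a F := by
  simp only [IsHSeries, map_sub, map_mul, map_add, map_one] at *
  linear_combination -h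

theorem zero_right_iff :
    IsHSeries n a 0 F ↔ C a * (1 + X * C a) ^ n * F
      = C (1 + a) * (1 + X * C a) * (C (1 + a) - (1 + X * C a) ^ n) := by
  simp only [IsHSeries, sub_zero, mul_zero, map_zero, add_zero, mul_one, map_one, one_pow, one_mul]

theorem unique [IsDomain R] (hab : a ≠ b) (hF : IsHSeries n a b F) (hG : IsHSeries n a b G) :
    F = G := by
  unfold IsHSeries at hF hG
  refine mul_left_cancel₀ ?_ (hF.trans (Eq.symm hG))
  exact ne_of_apply_ne constantCoeff (by simp [sub_eq_zero, hab])

theorem relation {G' : R⟦X⟧} (h : IsHSeries n a b F) (ha : IsHSeries n a 0 G)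
    (hb : IsHSeries n b 0 G') :
    C (a - b) * (1 - X * C (a * b)) * F
      = C a * C (1 + b) * (1 + X * C b) * G - C b * C (1 + a) * (1 + X * C a) * G' := by
  rw [zero_right_iff] at ha hb
  unfold IsHSeries at h
  refine (((isUnit_one_add_X_mul_C a).pow n).mul ((isUnit_one_add_X_mul_C b).pow n)).mul_left_cancel ?_
  linear_combination h - C (1 + b) * (1 + X * C b) * (1 + X * C b) ^ n * ha
    + C (1 + a) * (1 + X * C a) * (1 + X * C a) ^ n * hb

end IsHSeries
end PowerSeries

section Substitutions

variable {n : ℕ} {F : M⟦X⟧}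

theorem isHSeries_swapUV (h : IsHSeries n u v F) : IsHSeries n v u (swapUV F) := by
  convert h.map (MvPolynomial.rename (Equiv.swap (0 : Fin 2) 1)).toRingHom using 1 <;>
    simp [u, v, swapUV]

theorem isHSeries_subV0 (h : IsHSeries n u v F) : IsHSeries n u 0 (subV0 F) := by
  convert h.map (MvPolynomial.aeval fun i : Fin 2 =>
    if i = 0 then MvPolynomial.X 0 else (0 : M)).toRingHom using 1 <;> simp [u, v, subV0]

theorem isHSeries_subV0' (h : IsHSeries n u v F) : IsHSeries n v 0 (subV0' F) := by
  convert h.map (MvPolynomial.aeval fun i : Fin 2 =>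
    if i = 0 then MvPolynomial.X 1 else (0 : M)).toRingHom using 1 <;> simp [u, v, subV0']

end Substitutions

theorem H_symmetric_and_relation_general (m : ℕ) (H : PowerSeries M)
    (hH : PowerSeries.C (R := M) (u - v) * (1 - PowerSeries.X * PowerSeries.C (R := M) (u*v)) *
            wu^(m+1) * wv^(m+1) * H
        = PowerSeries.C (R := M) (1 + u) * wu * PowerSeries.C (R := M) (1 + v) * wv *
            (PowerSeries.C (R := M) (1 + u) * wv^(m+1) - PowerSeries.C (R := M) (1 + v) * wu^(m+1))) :
    swapUV H = H
    ∧ (PowerSeries.C (R := M) (u - v) * (1 - PowerSeries.X * PowerSeries.C (R := M) (u*v)) * H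
        = PowerSeries.C (R := M) u * PowerSeries.C (R := M) (1 + v) * wv * subV0 H
          - PowerSeries.C (R := M) v * PowerSeries.C (R := M) (1 + u) * wu * subV0' H)
    ∧ (PowerSeries.C (R := M) u * wu^(m+1) * subV0 H
        = PowerSeries.C (R := M) (1 + u) * wu * (PowerSeries.C (R := M) (1 + u) - wu^(m+1))) := by
  have hH : IsHSeries (m + 1) u v H := hH
  have huv : u ≠ v := MvPolynomial.X_injective.ne (by decide)
  exact ⟨(isHSeries_swapUV hH).symm.unique huv hH,
    hH.relation (isHSeries_subV0 hH) (isHSeries_subV0' hH),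
    IsHSeries.zero_right_iff.mp (isHSeries_subV0 hH)⟩

/-- Let m ≥ 1 and let H = [(1+u)(1+zu)(1+v)(1+zv)/((u−v)(1−zuv))]·
[(1+u)/(1+zu)^{m+1} − (1+v)/(1+zv)^{m+1}] ∈ ℚ[u,v][[z]], characterized by the
denominator-cleared identity `hH`. Then H is symmetric in u and v, satisfies
(u−v)(1−zuv)H(u,v) = u(1+v)(1+zv)H(u,0) − v(1+u)(1+zu)H(v,0), and
H(u,0) = ((1+u)(1+zu)/u)·((1+u)/(1+zu)^{m+1} − 1) (stated with denominators cleared). -/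
theorem H_symmetric_and_relation (m : ℕ) (hm : 1 ≤ m) (H : PowerSeries M)
    (hH : PowerSeries.C (R := M) (u - v) * (1 - PowerSeries.X * PowerSeries.C (R := M) (u*v)) *
            wu^(m+1) * wv^(m+1) * H
        = PowerSeries.C (R := M) (1 + u) * wu * PowerSeries.C (R := M) (1 + v) * wv *
            (PowerSeries.C (R := M) (1 + u) * wv^(m+1) - PowerSeries.C (R := M) (1 + v) * wu^(m+1))) :
    swapUV H = H
    ∧ (PowerSeries.C (R := M) (u - v) * (1 - PowerSeries.X * PowerSeries.C (R := M) (u*v)) * H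
        = PowerSeries.C (R := M) u * PowerSeries.C (R := M) (1 + v) * wv * subV0 H
          - PowerSeries.C (R := M) v * PowerSeries.C (R := M) (1 + u) * wu * subV0' H)
    ∧ (PowerSeries.C (R := M) u * wu^(m+1) * subV0 H
        = PowerSeries.C (R := M) (1 + u) * wu * (PowerSeries.C (R := M) (1 + u) - wu^(m+1))) :=
  H_symmetric_and_relation_general m H hH

end
end

section
/- Let P and Q be Dyck paths of the same size n, encoded as sequences in {U, D}^{2n} with equal numbers of U's and D's and all prefixes having at least as many U's as D's. For each up step u of P, let ℓ_P(u) be the size (number of up steps) of the shortest factor of P starting at u that is itself a Dyck path (the 'excursion' of u), and define D_P: {1,…,n} → {1,…,n} by D_P(i) = ℓ_P(u_i) where u_i is the i-th up step. If D obtained from P by a Tamari rotation — i.e., Q is obtained from P by swapping a down step d of P with the excursion S of the up step u immediately following d — then D_Q(i) = D_P(i) for all i except the rank i₀ of the up step matched with d in P, where D_Q(i₀) = D_P(i₀) + ℓ_P(u). -/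
/-- A Dyck word: a list over Bool (`true` = up step U, `false` = down step D) with equally
many U's and D's, every prefix having at least as many U's as D's. -/
def IsDyckWord (w : List Bool) : Prop :=
  w.count true = w.count false ∧ ∀ k, (w.take k).count false ≤ (w.take k).count true

/-- The length (number of steps) of the excursion of the up step at position j of w:
the length of the shortest nonempty factor of w starting at position j that is a Dyck word. -/
noncomputable def excLen (w : List Bool) (j : ℕ) : ℕ :=
  sInf {L | 0 < L ∧ IsDyckWord ((w.drop j).take L)}

/-- The positions of the up steps of w, in increasing order. -/
def upPos (w : List Bool) : List ℕ :=
  (List.range w.length).filter fun j => w.getD j false = true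

/-- The distance function: `distFn w i` is the size (number of up steps, i.e. half the
length) of the excursion of the (i+1)-st up step of w. -/
noncomputable def distFn (w : List Bool) (i : ℕ) : ℕ :=
  excLen w ((upPos w).getD i 0) / 2

/-!
The excursion of an up step is the first return of the height profile to the level before
that step. Moving `S` in front of `d` raises the profile by one along `S` and changes nothing
before `S` or after `d`. Because `S` is a Dyck word, the profile along `S` stays at or above the
level just after `d`. So an excursion that ends before `d`, or passes beyond `S`, keeps its end,
and an excursion that starts inside `S` stays inside `S`. The only excursion that changes is the
one ending at `d`: in `Q` it ends at the moved `d`, after `S`.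
-/

def netHeight (w : List Bool) : ℤ := w.count true - w.count false

def prefixHeight (w : List Bool) (k : ℕ) : ℤ := netHeight (w.take k)

def IsFirstReturn (v : List Bool) (L : ℕ) : Prop :=
  0 < L ∧ prefixHeight v L = 0 ∧ ∀ k, 0 < k → k < L → 0 < prefixHeight v k

@[simp] lemma netHeight_nil : netHeight [] = 0 := by simp [netHeight]

@[simp] lemma netHeight_append (u v : List Bool) :
    netHeight (u ++ v) = netHeight u + netHeight v := by
  simp only [netHeight, List.count_append]; push_cast; ring

@[simp] lemma netHeight_cons (b : Bool) (w : List Bool) :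
    netHeight (b :: w) = (if b then 1 else -1) + netHeight w := by
  cases b <;> simp [netHeight] <;> ring

lemma length_eq_two_mul_count_of_netHeight_eq_zero {w : List Bool} (h : netHeight w = 0) :
    w.length = 2 * w.count true := by
  have := List.length_eq_countP_add_countP (· = true) (l := w)
  simp only [netHeight, List.count_eq_countP] at h ⊢
  simp at this h ⊢
  omega

@[simp] lemma prefixHeight_zero (w : List Bool) : prefixHeight w 0 = 0 := by
  simp [prefixHeight]

lemma prefixHeight_of_length_le {w : List Bool} {k : ℕ} (h : w.length ≤ k) :
    prefixHeight w k = netHeight w := by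
  rw [prefixHeight, List.take_of_length_le h]

lemma prefixHeight_append_of_le {u v : List Bool} {k : ℕ} (h : k ≤ u.length) :
    prefixHeight (u ++ v) k = prefixHeight u k := by
  rw [prefixHeight, List.take_append_of_le_length h, prefixHeight]

lemma prefixHeight_append_length_add (u v : List Bool) (m : ℕ) :
    prefixHeight (u ++ v) (u.length + m) = netHeight u + prefixHeight v m := by
  rw [prefixHeight, List.take_length_add_append, netHeight_append, prefixHeight]

@[simp] lemma prefixHeight_cons_succ (b : Bool) (w : List Bool) (k : ℕ) :
    prefixHeight (b :: w) (k + 1) = (if b then 1 else -1) + prefixHeight w k := by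
  rw [prefixHeight, List.take_succ_cons, netHeight_cons, prefixHeight]

lemma prefixHeight_drop (w : List Bool) (j k : ℕ) :
    prefixHeight (w.drop j) k = prefixHeight w (j + k) - prefixHeight w j := by
  rw [prefixHeight, prefixHeight, List.take_add, netHeight_append, prefixHeight]; ring

lemma prefixHeight_succ_ge (w : List Bool) (k : ℕ) :
    prefixHeight w k - 1 ≤ prefixHeight w (k + 1) := by
  rw [prefixHeight, prefixHeight, List.take_add_one, netHeight_append]
  rcases w[k]? with _ | _ | _ <;> simp
  linarith

lemma isDyckWord_iff (w : List Bool) :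
    IsDyckWord w ↔ netHeight w = 0 ∧ ∀ k, 0 ≤ prefixHeight w k := by
  simp only [IsDyckWord, prefixHeight, netHeight]
  refine ⟨fun ⟨h, hk⟩ => ⟨by omega, fun k => by have := hk k; omega⟩,
    fun ⟨h, hk⟩ => ⟨by omega, fun k => by have := hk k; omega⟩⟩

lemma isDyckWord_take_iff (v : List Bool) (L : ℕ) :
    IsDyckWord (v.take L) ↔ prefixHeight v L = 0 ∧ ∀ k ≤ L, 0 ≤ prefixHeight v k := by
  simp only [isDyckWord_iff, prefixHeight, List.take_take]
  refine ⟨fun ⟨h, hk⟩ => ⟨h, fun k hk' => ?_⟩, fun ⟨h, hk⟩ => ⟨h, fun k => hk _ (min_le_right _ _)⟩⟩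
  simpa [min_eq_left hk'] using hk k

lemma excLen_eq_of_isFirstReturn {w : List Bool} {j L : ℕ} (h : IsFirstReturn (w.drop j) L) :
    excLen w j = L := by
  obtain ⟨hL, hret, hpos⟩ := h
  have hdyck : IsDyckWord ((w.drop j).take L) := by
    refine (isDyckWord_take_iff _ _).2 ⟨hret, fun k hk => ?_⟩
    rcases Nat.eq_zero_or_pos k with rfl | hk0
    · simp
    rcases hk.lt_or_eq with hk | rfl
    exacts [(hpos k hk0 hk).le, hret.ge]
  refine le_antisymm (Nat.sInf_le ⟨hL, hdyck⟩) (le_csInf ⟨L, hL, hdyck⟩ ?_)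
  rintro L' ⟨hL', hdyck'⟩
  by_contra! hlt
  exact (hpos L' hL' hlt).ne' ((isDyckWord_take_iff _ _).1 hdyck').1

lemma isFirstReturn_excLen {w : List Bool} {j : ℕ} (h : 0 < excLen w j) :
    IsFirstReturn (w.drop j) (excLen w j) := by
  have hne : {L | 0 < L ∧ IsDyckWord ((w.drop j).take L)}.Nonempty := by
    by_contra hempty
    rw [Set.not_nonempty_iff_eq_empty] at hempty
    simp [excLen, hempty] at h
  obtain ⟨-, hdyck⟩ := Nat.sInf_mem hne
  obtain ⟨hret, hnonneg⟩ := (isDyckWord_take_iff _ _).1 hdyck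
  refine ⟨h, hret, fun k hk0 hk => (hnonneg k hk.le).lt_of_ne' fun hk' => ?_⟩
  refine Nat.notMem_of_lt_sInf hk ⟨hk0, (isDyckWord_take_iff _ _).2 ⟨hk', fun k' hk'' => ?_⟩⟩
  exact hnonneg k' (hk''.trans hk.le)

lemma mem_upPos {w : List Bool} {j : ℕ} :
    j ∈ upPos w ↔ j < w.length ∧ w.getD j false = true := by
  simp [upPos]

lemma drop_eq_true_cons_of_mem_upPos {w : List Bool} {j : ℕ} (hj : j ∈ upPos w) :
    w.drop j = true :: w.drop (j + 1) := by
  obtain ⟨hlt, hup⟩ := mem_upPos.1 hj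
  rw [List.getD_eq_getElem _ _ hlt] at hup
  rw [List.drop_eq_getElem_cons hlt, hup]

lemma exists_isFirstReturn {w : List Bool} (hw : IsDyckWord w) {j : ℕ} (hj : j ∈ upPos w) :
    ∃ L, IsFirstReturn (w.drop j) L := by
  classical
  obtain ⟨hbal, hnonneg⟩ := (isDyckWord_iff w).1 hw
  set v := w.drop j with hv
  have hstart : prefixHeight v 1 = 1 := by
    rw [hv, drop_eq_true_cons_of_mem_upPos hj, prefixHeight_cons_succ]; simp
  have hex : ∃ k, 0 < k ∧ prefixHeight v k ≤ 0 := by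
    refine ⟨v.length, by simp [hv, (mem_upPos.1 hj).1], ?_⟩
    rw [hv, prefixHeight_drop, prefixHeight_of_length_le (by simp; omega), hbal]
    linarith [hnonneg j]
  -- the height moves by `±1`, so at the first positive time it is `≤ 0` it is `0`
  obtain ⟨hL0, hL⟩ := Nat.find_spec hex
  have hbelow : ∀ k, 0 < k → k < Nat.find hex → 0 < prefixHeight v k := fun k hk0 hk => by
    simpa [hk0] using Nat.find_min hex hk
  have hL1 : Nat.find hex ≠ 1 := fun h => by rw [h, hstart] at hL; omega
  have hstep := prefixHeight_succ_ge v (Nat.find hex - 1)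
  rw [Nat.sub_add_cancel hL0] at hstep
  have := hbelow (Nat.find hex - 1) (by omega) (by omega)
  exact ⟨Nat.find hex, hL0, by omega, hbelow⟩

lemma excLen_pos {w : List Bool} (hw : IsDyckWord w) {j : ℕ} (hj : j ∈ upPos w) :
    0 < excLen w j := by
  obtain ⟨L, hL⟩ := exists_isFirstReturn hw hj
  exact excLen_eq_of_isFirstReturn hL ▸ hL.1

lemma not_isFirstReturn_false_cons (v : List Bool) (L : ℕ) : ¬ IsFirstReturn (false :: v) L := by
  rintro ⟨hL, hret, hpos⟩
  have h1 : prefixHeight (false :: v) 1 = -1 := by simp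
  rcases Nat.lt_or_ge 1 L with hL | hL
  · linarith [hpos 1 one_pos hL]
  · obtain rfl : L = 1 := by omega
    omega

lemma isFirstReturn_append_iff_of_le {u v : List Bool} {L : ℕ} (h : L ≤ u.length) :
    IsFirstReturn (u ++ v) L ↔ IsFirstReturn u L := by
  have hk : ∀ k ≤ L, prefixHeight (u ++ v) k = prefixHeight u k :=
    fun k hk => prefixHeight_append_of_le (hk.trans h)
  simp only [IsFirstReturn, hk L le_rfl]
  exact and_congr_right fun _ => and_congr_right fun _ =>
    forall_congr' fun k => imp_congr_right fun _ => imp_congr_right fun hkL => by rw [hk k hkL.le]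

lemma IsFirstReturn.le_length {u v : List Bool} {L : ℕ} (h : IsFirstReturn (u ++ v) L)
    (hu : u ≠ []) (hn : netHeight u ≤ 0) : L ≤ u.length := by
  by_contra! hlt
  have := h.2.2 u.length (List.length_pos_of_ne_nil hu) hlt
  rw [prefixHeight_append_of_le le_rfl, prefixHeight_of_length_le le_rfl] at this
  omega

lemma eq_of_isFirstReturn_drop {w : List Bool} {j j' L L' : ℕ}
    (h : IsFirstReturn (w.drop j) L) (h' : IsFirstReturn (w.drop j') L') (he : j + L = j' + L') :
    j = j' := by
  wlog hlt : j < j' generalizing j j' L L'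
  · rcases (not_lt.1 hlt).lt_or_eq with hlt' | heq
    exacts [(this h' h he.symm hlt').symm, heq.symm]
  have hin := h.2.2 (j' - j) (by omega) (by have := h'.1; omega)
  have hret := h.2.1
  have hret' := h'.2.1
  rw [prefixHeight_drop] at hin hret hret'
  rw [Nat.add_sub_cancel' hlt.le] at hin
  rw [he] at hret
  linarith

section HeightProfile

variable (v S B : List Bool)

lemma prefixHeight_rotation_of_le {k : ℕ} (hk : k ≤ v.length) :
    prefixHeight (v ++ (S ++ false :: B)) k = prefixHeight (v ++ false :: (S ++ B)) k := by
  rw [prefixHeight_append_of_le hk, prefixHeight_append_of_le hk]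

lemma prefixHeight_rotation_source_mid {t : ℕ} (ht : t ≤ S.length) :
    prefixHeight (v ++ false :: (S ++ B)) (v.length + (t + 1)) =
      netHeight v - 1 + prefixHeight S t := by
  rw [prefixHeight_append_length_add, prefixHeight_cons_succ, prefixHeight_append_of_le ht]
  simp only [Bool.false_eq_true, if_false]; ring

lemma prefixHeight_rotation_target_mid {t : ℕ} (ht : t ≤ S.length) :
    prefixHeight (v ++ (S ++ false :: B)) (v.length + t) = netHeight v + prefixHeight S t := by
  rw [prefixHeight_append_length_add, prefixHeight_append_of_le ht]

lemma prefixHeight_rotation_of_ge {k : ℕ} (hk : v.length + S.length + 1 ≤ k) :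
    prefixHeight (v ++ (S ++ false :: B)) k = prefixHeight (v ++ false :: (S ++ B)) k := by
  obtain ⟨r, rfl⟩ := Nat.exists_eq_add_of_le hk
  have hsrc : prefixHeight (v ++ false :: (S ++ B)) (v.length + ((S.length + r) + 1)) =
      netHeight v + (netHeight S + prefixHeight B r - 1) := by
    rw [prefixHeight_append_length_add, prefixHeight_cons_succ, prefixHeight_append_length_add]
    simp only [Bool.false_eq_true, if_false]; ring
  have htgt : prefixHeight (v ++ (S ++ false :: B)) (v.length + (S.length + (r + 1))) =
      netHeight v + (netHeight S + prefixHeight B r - 1) := by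
    rw [prefixHeight_append_length_add, prefixHeight_append_length_add, prefixHeight_cons_succ]
    simp only [Bool.false_eq_true, if_false]; ring
  rw [show v.length + S.length + 1 + r = v.length + (S.length + (r + 1)) by ring, htgt,
    show v.length + (S.length + (r + 1)) = v.length + ((S.length + r) + 1) by ring, hsrc]

variable {v S B}

lemma IsFirstReturn.rotation_matched (hS : IsDyckWord S)
    (h : IsFirstReturn (v ++ false :: (S ++ B)) (v.length + 1)) :
    IsFirstReturn (v ++ (S ++ false :: B)) (v.length + 1 + S.length) := by
  obtain ⟨hSbal, hSnonneg⟩ := (isDyckWord_iff S).1 hS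
  have hv : netHeight v = 1 := by
    have := prefixHeight_rotation_source_mid v S B (Nat.zero_le _)
    rw [h.2.1] at this
    simp at this; linarith
  refine ⟨by omega, ?_, fun k hk0 hk => ?_⟩
  · rw [prefixHeight_rotation_of_ge v S B (by omega),
      show v.length + 1 + S.length = v.length + (S.length + 1) by ring,
      prefixHeight_rotation_source_mid v S B le_rfl, prefixHeight_of_length_le le_rfl, hv, hSbal]
    ring
  · rcases Nat.lt_or_ge v.length k with hkv | hkv
    · obtain ⟨t, rfl⟩ := Nat.exists_eq_add_of_le hkv.le
      rw [prefixHeight_rotation_target_mid v S B (by omega), hv]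
      linarith [hSnonneg t]
    · rw [prefixHeight_rotation_of_le v S B hkv]
      exact h.2.2 k hk0 (by omega)

lemma IsFirstReturn.rotation_unmatched (hS : IsDyckWord S) {L : ℕ}
    (h : IsFirstReturn (v ++ false :: (S ++ B)) L) (hL : L ≠ v.length + 1) :
    IsFirstReturn (v ++ (S ++ false :: B)) L := by
  rcases Nat.lt_or_ge v.length L with hvL | hLv
  swap
  · exact (isFirstReturn_append_iff_of_le hLv).2 ((isFirstReturn_append_iff_of_le hLv).1 h)
  obtain ⟨hSbal, hSnonneg⟩ := (isDyckWord_iff S).1 hS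
  have hv : 1 < netHeight v := by
    have := h.2.2 (v.length + (0 + 1)) (by omega) (by omega)
    rw [prefixHeight_rotation_source_mid v S B (Nat.zero_le _), prefixHeight_zero] at this
    linarith
  have hSL : v.length + S.length + 1 ≤ L := by
    by_contra! hlt
    have := h.2.1
    rw [show L = v.length + ((L - v.length - 1) + 1) by omega,
      prefixHeight_rotation_source_mid v S B (by omega)] at this
    linarith [hSnonneg (L - v.length - 1)]
  refine ⟨h.1, by rw [prefixHeight_rotation_of_ge v S B hSL]; exact h.2.1, fun k hk0 hk => ?_⟩
  rcases Nat.lt_or_ge v.length k with hkv | hkv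
  · rcases Nat.lt_or_ge (v.length + S.length) k with hkS | hkS
    · rw [prefixHeight_rotation_of_ge v S B hkS]; exact h.2.2 k hk0 hk
    · obtain ⟨t, rfl⟩ := Nat.exists_eq_add_of_le hkv.le
      rw [prefixHeight_rotation_target_mid v S B (by omega)]
      linarith [hSnonneg t]
  · rw [prefixHeight_rotation_of_le v S B hkv]; exact h.2.2 k hk0 hk

end HeightProfile

lemma upPos_cons (b : Bool) (w : List Bool) :
    upPos (b :: w) = (if b then [0] else []) ++ (upPos w).map (· + 1) := by
  unfold upPos
  rw [List.length_cons, List.range_succ_eq_map, List.filter_cons, List.filter_map]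
  have hfilter : List.filter ((fun j => decide ((b :: w).getD j false = true)) ∘ Nat.succ)
      (List.range w.length) = List.filter (fun j => decide (w.getD j false = true))
      (List.range w.length) :=
    List.filter_congr fun a _ => by simp
  rw [hfilter]
  cases b <;> rfl

lemma upPos_append (u v : List Bool) :
    upPos (u ++ v) = upPos u ++ (upPos v).map (· + u.length) := by
  induction u with
  | nil => simp [upPos]
  | cons b u ih =>
    rw [List.cons_append, upPos_cons, upPos_cons, ih, List.map_append, List.map_map]
    cases b <;> simp [Function.comp_def, Nat.add_assoc]

lemma length_upPos (w : List Bool) : (upPos w).length = w.count true := by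
  induction w with
  | nil => simp [upPos]
  | cons b w ih => cases b <;> simp [upPos_cons, ih]

lemma nodup_upPos (w : List Bool) : (upPos w).Nodup :=
  (List.pairwise_lt_range.filter _).nodup

lemma distFn_eq_excLen_getElem {w : List Bool} {i : ℕ} (hi : i < (upPos w).length) :
    distFn w i = excLen w (upPos w)[i] / 2 := by
  rw [distFn, List.getD_eq_getElem _ _ hi]

/-- The position in `A ++ S ++ false :: B` of the step at position `j ≠ a` of
`A ++ false :: (S ++ B)`, where `a = A.length` and `s = S.length`. -/
def rotatedPos (a s j : ℕ) : ℕ := if a < j ∧ j ≤ a + s then j - 1 else j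

section Rotation

variable (A S B : List Bool)

lemma upPos_rotation : upPos (A ++ S ++ false :: B) =
    (upPos (A ++ false :: (S ++ B))).map (rotatedPos A.length S.length) := by
  simp only [List.append_assoc, upPos_append, upPos_cons, Bool.false_eq_true, if_false,
    List.nil_append, List.map_append, List.map_map]
  have hA : (upPos A).map (rotatedPos A.length S.length) = upPos A :=
    List.map_congr_left (fun j hj => by
      rw [rotatedPos, if_neg (by have := (mem_upPos.1 hj).1; omega), id]) |>.trans (List.map_id _)
  rw [hA]
  congr 2
  all_goals refine List.map_congr_left fun j hj => ?_
  all_goals have hj_lt := (mem_upPos.1 hj).1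
  all_goals simp only [Function.comp_apply, rotatedPos]; split_ifs <;> omega

variable {A S B}

lemma excLen_rotation_matched (hS : IsDyckWord S) {j : ℕ}
    (hpos : 0 < excLen (A ++ false :: (S ++ B)) j)
    (hm : j + excLen (A ++ false :: (S ++ B)) j = A.length + 1) :
    excLen (A ++ S ++ false :: B) (rotatedPos A.length S.length j) =
      excLen (A ++ false :: (S ++ B)) j + S.length := by
  have h := isFirstReturn_excLen hpos
  have hjA : j < A.length := by
    refine lt_of_le_of_ne (by omega) fun hj => ?_
    rw [hj, List.drop_left' rfl] at h
    exact not_isFirstReturn_false_cons _ _ h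
  have hlen : excLen (A ++ false :: (S ++ B)) j = (A.drop j).length + 1 := by simp; omega
  rw [List.drop_append_of_le_length hjA.le, hlen] at h
  have hQ := h.rotation_matched hS
  rw [← List.drop_append_of_le_length hjA.le, ← List.append_assoc] at hQ
  rw [rotatedPos, if_neg (by omega), excLen_eq_of_isFirstReturn hQ, hlen]

lemma netHeight_drop_nonpos (hS : IsDyckWord S) (t : ℕ) : netHeight (S.drop t) ≤ 0 := by
  obtain ⟨hbal, hnonneg⟩ := (isDyckWord_iff S).1 hS
  rw [← prefixHeight_of_length_le (le_refl (S.drop t).length), prefixHeight_drop,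
    prefixHeight_of_length_le (by simp; omega), hbal]
  linarith [hnonneg t]

lemma excLen_rotation_of_lt (hS : IsDyckWord S) {j : ℕ} (hjA : j < A.length)
    (hpos : 0 < excLen (A ++ false :: (S ++ B)) j)
    (hm : j + excLen (A ++ false :: (S ++ B)) j ≠ A.length + 1) :
    excLen (A ++ S ++ false :: B) j = excLen (A ++ false :: (S ++ B)) j := by
  have h := isFirstReturn_excLen hpos
  rw [List.drop_append_of_le_length hjA.le] at h
  have hQ := h.rotation_unmatched hS (by simp; omega)
  rw [← List.drop_append_of_le_length hjA.le, ← List.append_assoc] at hQ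
  exact excLen_eq_of_isFirstReturn hQ

lemma excLen_rotation_of_lt_length (hS : IsDyckWord S) {t : ℕ} (ht : t < S.length)
    (hpos : 0 < excLen (A ++ false :: (S ++ B)) (A.length + (t + 1))) :
    excLen (A ++ S ++ false :: B) (A.length + t) =
      excLen (A ++ false :: (S ++ B)) (A.length + (t + 1)) := by
  have h := isFirstReturn_excLen hpos
  rw [List.drop_length_add_append, List.drop_succ_cons, List.drop_append_of_le_length ht.le] at h
  have hL := h.le_length (by simp; omega) (netHeight_drop_nonpos hS t)
  have hQ := (isFirstReturn_append_iff_of_le (v := false :: B) hL).2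
    ((isFirstReturn_append_iff_of_le hL).1 h)
  rw [← List.drop_append_of_le_length ht.le, ← List.drop_length_add_append (l₁ := A),
    ← List.append_assoc] at hQ
  exact excLen_eq_of_isFirstReturn hQ

lemma excLen_rotation_of_ge {j : ℕ} (hj : A.length + 1 + S.length ≤ j) :
    excLen (A ++ S ++ false :: B) j = excLen (A ++ false :: (S ++ B)) j := by
  obtain ⟨r, rfl⟩ := Nat.exists_eq_add_of_le hj
  rw [excLen, excLen, ← List.drop_drop (j := A.length + 1 + S.length),
    ← List.drop_drop (j := A.length + 1 + S.length) (l := A ++ false :: (S ++ B)),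
    show A ++ false :: (S ++ B) = (A ++ false :: S) ++ B by simp,
    show A ++ S ++ false :: B = (A ++ S ++ [false]) ++ B by simp,
    List.drop_left' (l₁ := A ++ S ++ [false]) (by simp; omega),
    List.drop_left' (l₁ := A ++ false :: S) (by simp; omega)]

lemma excLen_rotation_unmatched (hS : IsDyckWord S) {j : ℕ}
    (hpos : 0 < excLen (A ++ false :: (S ++ B)) j)
    (hm : j + excLen (A ++ false :: (S ++ B)) j ≠ A.length + 1) :
    excLen (A ++ S ++ false :: B) (rotatedPos A.length S.length j) =
      excLen (A ++ false :: (S ++ B)) j := by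
  rcases lt_trichotomy j A.length with hjA | rfl | hjA
  · rw [rotatedPos, if_neg (by omega)]
    exact excLen_rotation_of_lt hS hjA hpos hm
  · have h := isFirstReturn_excLen hpos
    rw [List.drop_left' rfl] at h
    exact absurd h (not_isFirstReturn_false_cons _ _)
  rcases Nat.lt_or_ge j (A.length + 1 + S.length) with hjS | hjS
  · obtain ⟨t, rfl⟩ : ∃ t, j = A.length + (t + 1) := ⟨j - A.length - 1, by omega⟩
    rw [rotatedPos, if_pos (by omega), show A.length + (t + 1) - 1 = A.length + t by omega]
    exact excLen_rotation_of_lt_length hS (by omega) hpos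
  · rw [rotatedPos, if_neg (by omega)]
    exact excLen_rotation_of_ge hjS

end Rotation

theorem distFn_rotation_general (n : ℕ) (P Q A S B : List Bool)
    (hP : IsDyckWord P) (hPn : P.length = 2*n)
    (hS : IsDyckWord S)
    (hPdec : P = A ++ false :: (S ++ B))
    (hQdec : Q = A ++ S ++ false :: B)
    (i₀ : ℕ) (hi₀ : i₀ < n)
    (hmatch : (upPos P).getD i₀ 0 + excLen P ((upPos P).getD i₀ 0) = A.length + 1) :
    (∀ i < n, i ≠ i₀ → distFn Q i = distFn P i)
    ∧ distFn Q i₀ = distFn P i₀ + S.count true := by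
  have hlen : (upPos P).length = n := by
    have := length_eq_two_mul_count_of_netHeight_eq_zero ((isDyckWord_iff P).1 hP).1
    rw [length_upPos]; omega
  have hup : upPos Q = (upPos P).map (rotatedPos A.length S.length) := by
    rw [hPdec, hQdec, upPos_rotation]
  have hdistQ (i : ℕ) (hi : i < n) :
      distFn Q i = excLen Q (rotatedPos A.length S.length (upPos P)[i]) / 2 := by
    rw [distFn_eq_excLen_getElem (by simp [hup, hlen, hi])]; simp [hup]
  have hdistP (i : ℕ) (hi : i < n) : distFn P i = excLen P (upPos P)[i] / 2 :=
    distFn_eq_excLen_getElem (hlen ▸ hi)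
  have hpos (i : ℕ) (hi : i < n) : 0 < excLen P (upPos P)[i] :=
    excLen_pos hP (List.getElem_mem _)
  rw [List.getD_eq_getElem _ _ (hlen ▸ hi₀)] at hmatch
  refine ⟨fun i hi hne => ?_, ?_⟩
  · have hunmatched : (upPos P)[i] + excLen P (upPos P)[i] ≠ A.length + 1 := fun h =>
      hne <| (nodup_upPos P).getElem_inj_iff.1 <| eq_of_isFirstReturn_drop
        (isFirstReturn_excLen (hpos i hi)) (isFirstReturn_excLen (hpos i₀ hi₀)) (h.trans hmatch.symm)
    subst hPdec hQdec
    rw [hdistQ i hi, hdistP i hi, excLen_rotation_unmatched hS (hpos i hi) hunmatched]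
  · have hSlen := length_eq_two_mul_count_of_netHeight_eq_zero ((isDyckWord_iff S).1 hS).1
    subst hPdec hQdec
    rw [hdistQ i₀ hi₀, hdistP i₀ hi₀, excLen_rotation_matched hS (hpos i₀ hi₀) hmatch, hSlen,
      Nat.add_mul_div_left _ _ two_pos]

/-- Let P be a Dyck path of size n and let Q be obtained from P by a Tamari rotation:
P = A ++ D ++ S ++ B and Q = A ++ S ++ D ++ B, where the down step d = D sits at position
A.length, and S is the excursion of the up step u following d (a nonempty Dyck word none of
whose proper nonempty prefixes is a Dyck word). Let i₀ be the rank (0-indexed) of the up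
step matched with d in P, i.e. whose excursion ends exactly at d. Then D_Q(i) = D_P(i) for
all i ≠ i₀, and D_Q(i₀) = D_P(i₀) + ℓ_P(u), where ℓ_P(u) = (number of up steps of S). -/
theorem distFn_rotation (n : ℕ) (P Q A S B : List Bool)
    (hP : IsDyckWord P) (hPn : P.length = 2*n)
    (hS : IsDyckWord S) (hSne : S ≠ [])
    (hSmin : ∀ k, 0 < k → k < S.length → ¬ IsDyckWord (S.take k))
    (hPdec : P = A ++ false :: (S ++ B))
    (hQdec : Q = A ++ S ++ false :: B)
    (i₀ : ℕ) (hi₀ : i₀ < n)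
    (hmatch : (upPos P).getD i₀ 0 + excLen P ((upPos P).getD i₀ 0) = A.length + 1) :
    (∀ i < n, i ≠ i₀ → distFn Q i = distFn P i)
    ∧ distFn Q i₀ = distFn P i₀ + S.count true :=
  distFn_rotation_general n P Q A S B hP hPn hS hPdec hQdec i₀ hi₀ hmatch
end

section
/- Let P and Q be Dyck paths of size n with distance functions D_P and D_Q (where D_P(i) is the size of the excursion of the i-th up step of P). Then P ≤ Q in the Tamari lattice T_n if and only if D_P(i) ≤ D_Q(i) for all i in {1,…,n}, where the Tamari order is the reflexive-transitive closure of the rotation relation: Q covers P when Q is obtained from P by swapping some down step d with the excursion of the up step immediately following d. -/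
/-- The Tamari rotation (covering relation): Q is obtained from P by swapping a down step d
with the excursion S of the up step immediately following d.  The excursion is the shortest
Dyck factor starting there, i.e. a nonempty Dyck word none of whose proper nonempty prefixes
is a Dyck word. -/
def Rotation (P Q : List Bool) : Prop :=
  ∃ A S B : List Bool, IsDyckWord S ∧ S ≠ [] ∧
    (∀ k, 0 < k → k < S.length → ¬ IsDyckWord (S.take k)) ∧
    P = A ++ false :: (S ++ B) ∧ Q = A ++ S ++ false :: B

/-!
Encode a word by its height function (number of up steps minus number of down steps in each
prefix). The excursion of an up step ends at the first later return of the height to its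
starting level, so excursions are nested or disjoint, and `distFn` determines the word: the down
steps before the `i`-th up step are the last steps of the excursions of the earlier up steps that
close before it.

A rotation `A d S B ↦ A S d B` leaves the heights outside the moved factor unchanged and, inside
it, shifts them one step back and one unit up. Hence it lengthens exactly one excursion, the one
closed by `d`, by the size of `S`, and leaves all others unchanged. This gives the forward
implication. Conversely, if `D_P ≤ D_Q` pointwise and `P ≠ Q`, let `i` be the first rank with
`D_P(i) < D_Q(i)`. Nesting of excursions in `Q` forces the excursion of the `i`-th up step of `P`
to be followed by an up step `j`, and rotating there replaces `D_P(i)` by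
`D_P(i) + D_P(j) ≤ D_Q(i)`; iterating increases `∑ D_P` until `P = Q`.
-/

namespace Tamari

def ups (w : List Bool) (m : ℕ) : ℕ := (w.take m).count true

def downs (w : List Bool) (m : ℕ) : ℕ := (w.take m).count false

def height (w : List Bool) (m : ℕ) : ℤ := ups w m - downs w m

section Height

variable (w : List Bool)

lemma ups_add_downs (m : ℕ) : ups w m + downs w m = min m w.length := by
  have h := List.count_true_add_count_false (w.take m)
  simp only [List.length_take] at h
  unfold ups downs
  omega

lemma count_drop_take (b : Bool) (j t : ℕ) :
    ((w.drop j).take t).count b = (w.take (j + t)).count b - (w.take j).count b := by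
  have h := congrArg (List.count b) (List.take_append_drop j (w.take (j + t)))
  rw [List.count_append, List.take_take, Nat.min_eq_left (Nat.le_add_right j t)] at h
  rw [List.take_drop]
  omega

lemma ups_succ {m : ℕ} (hm : m < w.length) :
    ups w (m + 1) = ups w m + if w.getD m false then 1 else 0 := by
  simp only [ups, List.take_add_one, List.getElem?_eq_getElem hm, List.getD_eq_getElem w false hm]
  cases w[m] <;> simp

lemma downs_succ {m : ℕ} (hm : m < w.length) :
    downs w (m + 1) = downs w m + if w.getD m false then 0 else 1 := by
  simp only [downs, List.take_add_one, List.getElem?_eq_getElem hm,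
    List.getD_eq_getElem w false hm]
  cases w[m] <;> simp

lemma ups_of_length_le {m : ℕ} (hm : w.length ≤ m) : ups w m = w.count true := by
  simp [ups, List.take_of_length_le hm]

lemma ups_mono : Monotone (ups w) := fun _ _ h =>
  (List.take_prefix_take_left h).sublist.count_le _

lemma downs_mono : Monotone (downs w) := fun _ _ h =>
  (List.take_prefix_take_left h).sublist.count_le _

lemma ups_le_count (m : ℕ) : ups w m ≤ w.count true :=
  (List.take_sublist m w).count_le _

lemma height_zero : height w 0 = 0 := by simp [height, ups, downs]

lemma height_succ {m : ℕ} (hm : m < w.length) :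
    height w (m + 1) = height w m + if w.getD m false then 1 else -1 := by
  simp only [height, ups_succ w hm, downs_succ w hm]
  split <;> push_cast <;> ring

lemma height_of_length_le {m : ℕ} (hm : w.length ≤ m) : height w m = height w w.length := by
  simp [height, ups, downs, List.take_of_length_le hm]

lemma height_eq_two_mul_ups_sub {m : ℕ} (hm : m ≤ w.length) :
    height w m = 2 * (ups w m : ℤ) - m := by
  have h := ups_add_downs w m
  rw [Nat.min_eq_left hm] at h
  simp only [height]
  omega

lemma height_succ_of_up {m : ℕ} (hm : m < w.length) (hu : w.getD m false = true) :
    height w (m + 1) = height w m + 1 := by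
  rw [height_succ w hm, if_pos hu]

lemma height_succ_of_down {m : ℕ} (hm : m < w.length) (hd : w.getD m false = false) :
    height w (m + 1) = height w m - 1 := by
  rw [height_succ w hm, hd]
  rfl

lemma abs_height_succ_sub_le_one (m : ℕ) : |height w (m + 1) - height w m| ≤ 1 := by
  by_cases hm : m < w.length
  · rw [height_succ w hm]
    split <;> simp
  · rw [height_of_length_le w (m := m + 1) (by omega), height_of_length_le w (m := m) (by omega)]
    simp

lemma up_of_height_lt_succ {m : ℕ} (h : height w m < height w (m + 1)) :
    m < w.length ∧ w.getD m false = true := by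
  by_cases hm : m < w.length
  · refine ⟨hm, ?_⟩
    by_contra hd
    rw [height_succ w hm, if_neg hd] at h
    omega
  · rw [height_of_length_le w (m := m + 1) (by omega),
      height_of_length_le w (m := m) (by omega)] at h
    omega

lemma down_of_height_succ_lt {m : ℕ} (h : height w (m + 1) < height w m) :
    m < w.length ∧ w.getD m false = false := by
  by_cases hm : m < w.length
  · refine ⟨hm, ?_⟩
    by_contra hu
    rw [height_succ w hm, if_pos (by simpa using hu)] at h
    omega
  · rw [height_of_length_le w (m := m + 1) (by omega),
      height_of_length_le w (m := m) (by omega)] at h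
    omega

lemma isDyckWord_iff_height :
    IsDyckWord w ↔ height w w.length = 0 ∧ ∀ m, 0 ≤ height w m := by
  simp only [IsDyckWord, height, ups, downs, List.take_length]
  refine ⟨fun ⟨h₁, h₂⟩ => ⟨by omega, fun m => by have := h₂ m; omega⟩,
    fun ⟨h₁, h₂⟩ => ⟨by omega, fun m => by have := h₂ m; omega⟩⟩

lemma isDyckWord_drop_take_iff (j L : ℕ) :
    IsDyckWord ((w.drop j).take L) ↔
      height w (j + L) = height w j ∧ ∀ t ≤ L, height w j ≤ height w (j + t) := by
  have key : ∀ t, ((w.drop j).take t).count true - ((w.drop j).take t).count false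
      = (height w (j + t) - height w j : ℤ) := fun t => by
    rw [count_drop_take, count_drop_take]
    have := ups_mono w (Nat.le_add_right j t)
    have := downs_mono w (Nat.le_add_right j t)
    simp only [height, ups, downs] at *
    omega
  simp only [IsDyckWord, List.take_take]
  constructor
  · rintro ⟨h₁, h₂⟩
    refine ⟨by have := key L; omega, fun t ht => ?_⟩
    have := h₂ t
    rw [Nat.min_eq_left ht] at this
    have := key t
    omega
  · rintro ⟨h₁, h₂⟩
    refine ⟨by have := key L; omega, fun k => ?_⟩
    have := h₂ (min k L) (min_le_right _ _)
    have := key (min k L)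
    omega

lemma two_mul_count_true {w : List Bool} (hw : IsDyckWord w) : 2 * w.count true = w.length := by
  have := List.count_true_add_count_false w
  have := hw.1
  omega

end Height

section UpSteps

variable (w : List Bool)

def nthUp (i : ℕ) : ℕ := (upPos w).getD i 0

variable {w}

lemma lt_length_of_getD {p : ℕ} (hp : w.getD p false = true) : p < w.length :=
  lt_of_not_ge fun h => by
    rw [List.getD_eq_default _ _ h] at hp
    cases hp

lemma ups_succ_of_up {p : ℕ} (hp : w.getD p false = true) : ups w (p + 1) = ups w p + 1 := by
  rw [ups_succ w (lt_length_of_getD hp), if_pos hp]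

lemma ups_succ_le (m : ℕ) : ups w (m + 1) ≤ ups w m + 1 := by
  by_cases hm : m < w.length
  · rw [ups_succ w hm]
    split <;> omega
  · rw [ups_of_length_le w (by omega), ups_of_length_le w (m := m) (by omega)]
    omega

lemma length_filter_range (m : ℕ) :
    ((List.range m).filter fun j => w.getD j false).length = ups w m := by
  induction m with
  | zero => simp [ups]
  | succ m ih =>
    rw [List.range_succ, List.filter_append, List.length_append, ih, List.filter_singleton]
    by_cases hm : m < w.length
    · rw [ups_succ w hm]
      cases w.getD m false <;> simp
    · rw [List.getD_eq_default _ _ (by omega), ups_of_length_le w (m := m + 1) (by omega),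
        ups_of_length_le w (m := m) (by omega)]
      simp

lemma nthUp_ups {p : ℕ} (hp : w.getD p false = true) : nthUp w (ups w p) = p := by
  have hlen := lt_length_of_getD hp
  set f : ℕ → Bool := fun j => w.getD j false
  have hpre : (List.range (p + 1)).filter f <+: upPos w := by
    have : upPos w = (List.range w.length).filter f := by simp [upPos, f]
    rw [this, ← Nat.min_eq_left (show p + 1 ≤ w.length from hlen), ← List.take_range]
    exact (List.take_prefix _ _).filter f
  have hsplit : (List.range (p + 1)).filter f = (List.range p).filter f ++ [p] := by
    rw [List.range_succ, List.filter_append, List.filter_singleton, show f p = true from hp]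
    rfl
  have hidx : ((List.range p).filter f).length < ((List.range (p + 1)).filter f).length := by
    rw [hsplit, List.length_append]
    simp
  rw [nthUp, ← length_filter_range,
    List.getD_eq_getElem _ _ (lt_of_lt_of_le hidx hpre.length_le), ← hpre.getElem hidx,
    ← List.getD_eq_getElem _ 0 hidx, hsplit, List.getD_append_right _ _ _ _ le_rfl, Nat.sub_self,
    List.getD_cons_zero]

lemma exists_up_of_lt_count {i : ℕ} (hi : i < w.count true) :
    ∃ p, w.getD p false = true ∧ ups w p = i := by
  classical
  have hex : ∃ m, i < ups w (m + 1) := ⟨w.length, by rwa [ups_of_length_le w (by omega)]⟩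
  set m := Nat.find hex
  have hm : i < ups w (m + 1) := Nat.find_spec hex
  have hle : ups w m ≤ i := by
    rcases Nat.eq_zero_or_pos m with h0 | hpos
    · simp [h0, ups]
    · have := Nat.find_min hex (show m - 1 < m by omega)
      rwa [Nat.sub_add_cancel hpos, not_lt] at this
  have hstep := ups_succ_le (w := w) m
  refine ⟨m, ?_, by omega⟩
  by_contra hd
  by_cases hlen : m < w.length
  · rw [ups_succ w hlen, if_neg hd] at hm
    omega
  · rw [ups_of_length_le w (m := m + 1) (by omega),
      ← ups_of_length_le w (m := m) (by omega)] at hm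
    omega

lemma nthUp_spec {i : ℕ} (hi : i < w.count true) :
    w.getD (nthUp w i) false = true ∧ ups w (nthUp w i) = i := by
  obtain ⟨p, hp, rfl⟩ := exists_up_of_lt_count hi
  rw [nthUp_ups hp]
  exact ⟨hp, rfl⟩

lemma nthUp_lt_iff {i : ℕ} (hi : i < w.count true) (m : ℕ) : nthUp w i < m ↔ i < ups w m := by
  obtain ⟨hup, hups⟩ := nthUp_spec hi
  constructor
  · intro h
    have := ups_mono w (show nthUp w i + 1 ≤ m from h)
    rw [ups_succ_of_up hup] at this
    omega
  · intro h
    by_contra hc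
    have := ups_mono w (not_lt.1 hc)
    omega

lemma nthUp_lt_nthUp {i k : ℕ} (hik : i < k) (hk : k < w.count true) : nthUp w i < nthUp w k := by
  rw [nthUp_lt_iff (hik.trans hk), (nthUp_spec hk).2]
  exact hik

lemma ups_lt_count {p : ℕ} (hp : w.getD p false = true) : ups w p < w.count true := by
  have := ups_le_count w (p + 1)
  rw [ups_succ_of_up hp] at this
  omega

lemma getD_eq_true_iff {p : ℕ} :
    w.getD p false = true ↔ ∃ i < w.count true, nthUp w i = p := by
  constructor
  · intro hp
    exact ⟨ups w p, ups_lt_count hp, nthUp_ups hp⟩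
  · rintro ⟨i, hi, rfl⟩
    exact (nthUp_spec hi).1

end UpSteps

/-- For an up step at position `j`, its excursion is the factor between positions `j` and
`excEnd w j` (exclusive). -/
noncomputable def excEnd (w : List Bool) (j : ℕ) : ℕ :=
  sInf {t | j < t ∧ height w t ≤ height w j}

noncomputable def endRank (w : List Bool) (i : ℕ) : ℕ :=
  ups w (excEnd w (nthUp w i))

section Excursions

variable {w : List Bool}

lemma excEnd_le {j x : ℕ} (hjx : j < x) (hx : height w x ≤ height w j) : excEnd w j ≤ x :=
  Nat.sInf_le ⟨hjx, hx⟩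

lemma excEnd_eq_of {j z : ℕ} (hjz : j < z) (hz : height w z ≤ height w j)
    (hmid : ∀ x, j < x → x < z → height w j < height w x) : excEnd w j = z :=
  le_antisymm (excEnd_le hjz hz) <| le_csInf ⟨z, hjz, hz⟩ fun x ⟨hjx, hx⟩ => by
    by_contra! hxz
    exact absurd (hmid x hjx hxz) (not_lt.2 hx)

lemma excEnd_spec (hw : IsDyckWord w) {j : ℕ} (hu : w.getD j false = true) :
    j + 1 < excEnd w j ∧ excEnd w j ≤ w.length ∧ height w (excEnd w j) = height w j ∧
      ∀ t, j < t → t < excEnd w j → height w j < height w t := by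
  obtain ⟨hzero, hnonneg⟩ := (isDyckWord_iff_height w).1 hw
  have hj := lt_length_of_getD hu
  have hne : w.length ∈ {t | j < t ∧ height w t ≤ height w j} :=
    ⟨hj, by rw [hzero]; exact hnonneg j⟩
  obtain ⟨hgt, hle⟩ : j < excEnd w j ∧ height w (excEnd w j) ≤ height w j :=
    Nat.sInf_mem ⟨_, hne⟩
  have hmid : ∀ t, j < t → t < excEnd w j → height w j < height w t := fun t hjt htz => by
    by_contra! h
    exact absurd (excEnd_le hjt h) (not_le.2 htz)
  have hup := height_succ_of_up w hj hu
  have hgt' : j + 1 < excEnd w j := by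
    rcases Nat.lt_or_ge (j + 1) (excEnd w j) with h | h
    · exact h
    · rw [show excEnd w j = j + 1 by omega] at hle
      omega
  refine ⟨hgt', Nat.sInf_le hne, ?_, hmid⟩
  have hprev := hmid (excEnd w j - 1) (by omega) (by omega)
  have hstep := abs_le.1 (abs_height_succ_sub_le_one w (excEnd w j - 1))
  rw [Nat.sub_add_cancel (by omega)] at hstep
  omega

lemma excEnd_sub_mem (hw : IsDyckWord w) {j : ℕ} (hu : w.getD j false = true) :
    excEnd w j - j ∈ {L | 0 < L ∧ IsDyckWord ((w.drop j).take L)} := by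
  obtain ⟨hgt, -, heq, hmid⟩ := excEnd_spec hw hu
  refine ⟨by omega, (isDyckWord_drop_take_iff w j _).2 ⟨?_, fun t ht => ?_⟩⟩
  · rw [Nat.add_sub_cancel' (by omega), heq]
  · rcases Nat.eq_zero_or_pos t with rfl | ht0
    · simp
    · rcases Nat.lt_or_ge (j + t) (excEnd w j) with h | h
      · exact (hmid _ (by omega) h).le
      · rw [show j + t = excEnd w j by omega, heq]

lemma excLen_eq (hw : IsDyckWord w) {j : ℕ} (hu : w.getD j false = true) :
    excLen w j = excEnd w j - j := by
  obtain ⟨hgt, -, -, hmid⟩ := excEnd_spec hw hu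
  refine le_antisymm (Nat.sInf_le (excEnd_sub_mem hw hu))
    (le_csInf ⟨_, excEnd_sub_mem hw hu⟩ ?_)
  rintro L ⟨hL, hLd⟩
  by_contra! hlt
  have := hmid (j + L) (by omega) (by omega)
  have := ((isDyckWord_drop_take_iff w j L).1 hLd).1
  omega

lemma isDyckWord_drop_take_excLen (hw : IsDyckWord w) {j : ℕ} (hu : w.getD j false = true) :
    IsDyckWord ((w.drop j).take (excLen w j)) :=
  (Nat.sInf_mem ⟨_, excEnd_sub_mem hw hu⟩).2

lemma not_isDyckWord_drop_take_of_lt_excLen {j L : ℕ} (hL : 0 < L) (hlt : L < excLen w j) :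
    ¬ IsDyckWord ((w.drop j).take L) :=
  fun h => Nat.notMem_of_lt_sInf hlt ⟨hL, h⟩

lemma lt_endRank (hw : IsDyckWord w) {i : ℕ} (hi : i < w.count true) : i < endRank w i := by
  obtain ⟨hup, hups⟩ := nthUp_spec hi
  have := ups_mono w (excEnd_spec hw hup).1.le
  rw [ups_succ_of_up hup] at this
  unfold endRank
  omega

lemma endRank_eq_add_distFn (hw : IsDyckWord w) {i : ℕ} (hi : i < w.count true) :
    endRank w i = i + distFn w i := by
  obtain ⟨hup, hups⟩ := nthUp_spec hi
  obtain ⟨hgt, hle, heq, -⟩ := excEnd_spec hw hup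
  have h₁ := height_eq_two_mul_ups_sub w hle
  have h₂ := height_eq_two_mul_ups_sub w (show nthUp w i ≤ w.length by omega)
  have hlt := lt_endRank hw hi
  rw [distFn, ← nthUp, excLen_eq hw hup]
  unfold endRank at *
  omega

lemma endRank_le_of_lt_endRank (hw : IsDyckWord w) {i k : ℕ} (hik : i ≤ k)
    (hk : k < w.count true) (hkN : k < endRank w i) : endRank w k ≤ endRank w i := by
  rcases hik.eq_or_lt with rfl | hik
  · exact le_rfl
  have hi := hik.trans hk
  obtain ⟨-, -, heq, hmid⟩ := excEnd_spec hw (nthUp_spec hi).1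
  have hpk : nthUp w k < excEnd w (nthUp w i) := (nthUp_lt_iff hk _).2 hkN
  have hh := hmid _ (nthUp_lt_nthUp hik hk) hpk
  exact ups_mono w (excEnd_le hpk (by omega))

lemma eq_of_excEnd_nthUp_eq (hw : IsDyckWord w) {i k : ℕ} (hi : i < w.count true)
    (hk : k < w.count true) (h : excEnd w (nthUp w i) = excEnd w (nthUp w k)) : i = k := by
  wlog hik : i < k generalizing i k
  · rcases (not_lt.1 hik).eq_or_lt with hki | hki
    · exact hki.symm
    · exact (this hk hi h.symm hki).symm
  obtain ⟨-, -, heq, hmid⟩ := excEnd_spec hw (nthUp_spec hi).1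
  obtain ⟨hgt, -, heq', -⟩ := excEnd_spec hw (nthUp_spec hk).1
  rw [h] at heq
  have := hmid _ (nthUp_lt_nthUp hik hk) (by omega)
  omega

lemma exists_excEnd_eq_succ (hw : IsDyckWord w) {q : ℕ} (hq : q < w.length)
    (hd : w.getD q false = false) :
    ∃ k < w.count true, nthUp w k ≤ q ∧ excEnd w (nthUp w k) = q + 1 ∧
      height w (nthUp w k) = height w (q + 1) := by
  classical
  obtain ⟨-, hnonneg⟩ := (isDyckWord_iff_height w).1 hw
  have hdown := height_succ_of_down w hq hd
  have hbelow : height w 0 ≤ height w (q + 1) := by rw [height_zero]; exact hnonneg _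
  set v := Nat.findGreatest (fun t => height w t ≤ height w (q + 1)) q
  have hv : height w v ≤ height w (q + 1) :=
    Nat.findGreatest_spec (P := fun t => height w t ≤ height w (q + 1)) (Nat.zero_le q) hbelow
  have hvq : v < q := lt_of_le_of_ne (Nat.findGreatest_le q) fun h => by rw [h] at hv; omega
  have hafter : ∀ t, v < t → t ≤ q → height w (q + 1) < height w t := fun t hvt htq =>
    not_le.1 (Nat.findGreatest_is_greatest hvt htq)
  have hstep := abs_le.1 (abs_height_succ_sub_le_one w v)
  have hv1 := hafter (v + 1) (by omega) (by omega)
  obtain ⟨-, hvu⟩ := up_of_height_lt_succ w (show height w v < height w (v + 1) by omega)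
  obtain ⟨k, hk, hkv⟩ := getD_eq_true_iff.1 hvu
  refine ⟨k, hk, ?_⟩
  rw [hkv]
  refine ⟨hvq.le, excEnd_eq_of (by omega) (by omega) fun x hvx hxq => ?_, by omega⟩
  have := hafter x hvx (by omega)
  omega

end Excursions

section Injectivity

variable {w : List Bool}

lemma downs_eq_card {p : ℕ} (hp : p ≤ w.length) :
    downs w p = ((Finset.range p).filter fun q => w.getD q false = false).card := by
  induction p with
  | zero => simp [downs]
  | succ m ih =>
    rw [Finset.range_add_one, Finset.filter_insert, downs_succ w hp, ih (by omega)]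
    cases w.getD m false <;> simp

/-- The down steps before the `i`-th up step are exactly the last steps of the excursions of
the up steps `k < i` with `endRank w k ≤ i`. -/
lemma nthUp_eq_add_card (hw : IsDyckWord w) {i : ℕ} (hi : i < w.count true) :
    nthUp w i = i + ((Finset.range i).filter fun k => endRank w k ≤ i).card := by
  obtain ⟨hup, hups⟩ := nthUp_spec hi
  have hlen := lt_length_of_getD hup
  have hsum := ups_add_downs w (nthUp w i)
  rw [Nat.min_eq_left hlen.le, downs_eq_card hlen.le, hups] at hsum
  suffices ((Finset.range i).filter fun k => endRank w k ≤ i).card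
      = ((Finset.range (nthUp w i)).filter fun q => w.getD q false = false).card by omega
  refine Finset.card_bij (fun k _ => excEnd w (nthUp w k) - 1) ?_ ?_ ?_
  · intro k hk
    simp only [Finset.mem_filter, Finset.mem_range] at hk ⊢
    have hkc : k < w.count true := by omega
    obtain ⟨hgt, -, heq, hmid⟩ := excEnd_spec hw (nthUp_spec hkc).1
    have hle : excEnd w (nthUp w k) ≤ nthUp w i := by
      by_contra! h
      have := (nthUp_lt_iff hi _).1 h
      unfold endRank at hk
      omega
    have hdrop : height w (excEnd w (nthUp w k) - 1 + 1) < height w (excEnd w (nthUp w k) - 1) := by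
      rw [Nat.sub_add_cancel (by omega), heq]
      exact hmid _ (by omega) (by omega)
    exact ⟨by omega, (down_of_height_succ_lt w hdrop).2⟩
  · intro k₁ hk₁ k₂ hk₂ h
    simp only [Finset.mem_filter, Finset.mem_range] at hk₁ hk₂
    have hk₁c : k₁ < w.count true := by omega
    have hk₂c : k₂ < w.count true := by omega
    have := (excEnd_spec hw (nthUp_spec hk₁c).1).1
    have := (excEnd_spec hw (nthUp_spec hk₂c).1).1
    exact eq_of_excEnd_nthUp_eq hw hk₁c hk₂c (by omega)
  · intro q hq
    simp only [Finset.mem_filter, Finset.mem_range] at hq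
    obtain ⟨k, hk, hkq, hend, -⟩ := exists_excEnd_eq_succ hw (by omega) hq.2
    have hki : k < i := by
      rw [← hups, ← nthUp_lt_iff hk]
      omega
    have hrank : endRank w k ≤ i := by
      rw [endRank, hend, ← hups]
      exact ups_mono w (by omega)
    exact ⟨k, by simp [hki, hrank], by omega⟩

lemma eq_of_distFn_eq {P Q : List Bool} (hP : IsDyckWord P) (hQ : IsDyckWord Q)
    (hlen : P.length = Q.length) (h : ∀ i < P.count true, distFn P i = distFn Q i) : P = Q := by
  have hcount : Q.count true = P.count true := by
    have := two_mul_count_true hP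
    have := two_mul_count_true hQ
    omega
  have hrank : ∀ i < P.count true, endRank P i = endRank Q i := fun i hi => by
    rw [endRank_eq_add_distFn hP hi, endRank_eq_add_distFn hQ (by omega), h i hi]
  have hnthUp : ∀ i < P.count true, nthUp P i = nthUp Q i := fun i hi => by
    rw [nthUp_eq_add_card hP hi, nthUp_eq_add_card hQ (by omega)]
    congr 2
    refine Finset.filter_congr fun k hk => ?_
    rw [hrank k ((Finset.mem_range.1 hk).trans hi)]
  have hgetD : ∀ p, P.getD p false = Q.getD p false := fun p => by
    rw [Bool.eq_iff_iff, getD_eq_true_iff, getD_eq_true_iff, hcount]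
    exact exists_congr fun i => and_congr_right fun hi => by rw [hnthUp i hi]
  refine List.ext_getElem hlen fun p h₁ h₂ => ?_
  rw [← List.getD_eq_getElem P false h₁, ← List.getD_eq_getElem Q false h₂, hgetD]

end Injectivity

section Append

variable (u v : List Bool)

lemma ups_append_of_le {m : ℕ} (hm : m ≤ u.length) : ups (u ++ v) m = ups u m := by
  rw [ups, List.take_append_of_le_length hm, ups]

lemma ups_append_add (t : ℕ) : ups (u ++ v) (u.length + t) = u.count true + ups v t := by
  rw [ups, List.take_length_add_append, List.count_append, ups]

lemma height_append_of_le {m : ℕ} (hm : m ≤ u.length) : height (u ++ v) m = height u m := by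
  simp only [height, ups, downs, List.take_append_of_le_length hm]

lemma height_append_add (t : ℕ) :
    height (u ++ v) (u.length + t) = height u u.length + height v t := by
  simp only [height, ups, downs, List.take_length_add_append, List.count_append, List.take_length]
  push_cast
  ring

lemma ups_length : ups u u.length = u.count true := ups_of_length_le u le_rfl

lemma height_length : height u u.length = u.count true - u.count false := by
  simp [height, ups, downs]

end Append

section Factor

variable {u S : List Bool} (v : List Bool)

lemma ups_append_append {t : ℕ} (ht : t ≤ S.length) :
    ups (u ++ (S ++ v)) (u.length + t) = u.count true + ups S t := by
  rw [ups_append_add, ups_append_of_le _ _ ht]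

lemma height_append_append {t : ℕ} (ht : t ≤ S.length) :
    height (u ++ (S ++ v)) (u.length + t) = height u u.length + height S t := by
  rw [height_append_add, height_append_of_le _ _ ht]

lemma getD_append_append {t : ℕ} (ht : t < S.length) :
    (u ++ (S ++ v)).getD (u.length + t) false = S.getD t false := by
  rw [List.getD_append_right _ _ _ _ (Nat.le_add_right _ _), Nat.add_sub_cancel_left,
    List.getD_append _ _ _ _ ht]

lemma excEnd_append_append (hS : IsDyckWord S) {q : ℕ} (hq : S.getD q false = true) :
    excEnd (u ++ (S ++ v)) (u.length + q) = u.length + excEnd S q := by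
  obtain ⟨hgt, hle, heq, hmid⟩ := excEnd_spec hS hq
  refine excEnd_eq_of (by omega) ?_ fun x hqx hxe => ?_
  · rw [height_append_append v hle, height_append_append v (by omega), heq]
  · obtain ⟨t, rfl⟩ := Nat.exists_eq_add_of_le (show u.length ≤ x by omega)
    rw [height_append_append v (by omega), height_append_append v (by omega)]
    have := hmid t (by omega) (by omega)
    omega

end Factor

section Rotate

variable (A S B : List Bool)

lemma length_rotate : (A ++ S ++ false :: B).length = (A ++ false :: (S ++ B)).length := by
  simp only [List.length_append, List.length_cons]
  omega

lemma count_rotate (b : Bool) :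
    (A ++ S ++ false :: B).count b = (A ++ false :: (S ++ B)).count b := by
  simp only [List.count_append, List.count_cons]
  omega

lemma ups_rotate_of_le {m : ℕ} (hm : m ≤ A.length) :
    ups (A ++ S ++ false :: B) m = ups (A ++ false :: (S ++ B)) m := by
  rw [List.append_assoc, ups_append_of_le _ _ hm, ups_append_of_le _ _ hm]

lemma height_rotate_of_le {m : ℕ} (hm : m ≤ A.length) :
    height (A ++ S ++ false :: B) m = height (A ++ false :: (S ++ B)) m := by
  rw [List.append_assoc, height_append_of_le _ _ hm, height_append_of_le _ _ hm]

lemma getD_rotate_of_lt {m : ℕ} (hm : m < A.length) :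
    (A ++ S ++ false :: B).getD m false = (A ++ false :: (S ++ B)).getD m false := by
  rw [List.append_assoc, List.getD_append _ _ _ _ hm, List.getD_append _ _ _ _ hm]

lemma eq_append_rotate_src : A ++ false :: (S ++ B) = (A ++ false :: S) ++ B := by simp

lemma eq_append_rotate_tgt : A ++ S ++ false :: B = (A ++ S ++ [false]) ++ B := by simp

lemma length_rotate_src_prefix : (A ++ false :: S).length = A.length + S.length + 1 := by
  simp only [List.length_append, List.length_cons]
  omega

lemma length_rotate_tgt_prefix : (A ++ S ++ [false]).length = A.length + S.length + 1 := by
  simp only [List.length_append, List.length_singleton]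

lemma ups_rotate_of_ge {m : ℕ} (hm : A.length + S.length + 1 ≤ m) :
    ups (A ++ S ++ false :: B) m = ups (A ++ false :: (S ++ B)) m := by
  obtain ⟨r, rfl⟩ := Nat.exists_eq_add_of_le hm
  have h₁ := ups_append_add (A ++ false :: S) B r
  have h₂ := ups_append_add (A ++ S ++ [false]) B r
  rw [length_rotate_src_prefix] at h₁
  rw [length_rotate_tgt_prefix] at h₂
  rw [eq_append_rotate_src, eq_append_rotate_tgt, h₁, h₂]
  simp only [List.count_append, List.count_cons, List.count_nil]
  omega

lemma height_rotate_of_ge {m : ℕ} (hm : A.length + S.length + 1 ≤ m) :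
    height (A ++ S ++ false :: B) m = height (A ++ false :: (S ++ B)) m := by
  obtain ⟨r, rfl⟩ := Nat.exists_eq_add_of_le hm
  have h₁ := height_append_add (A ++ false :: S) B r
  have h₂ := height_append_add (A ++ S ++ [false]) B r
  rw [height_length, length_rotate_src_prefix] at h₁
  rw [height_length, length_rotate_tgt_prefix] at h₂
  rw [eq_append_rotate_src, eq_append_rotate_tgt, h₁, h₂]
  simp only [List.count_append, List.count_cons, List.count_nil]
  push_cast
  ring

lemma getD_rotate_of_ge {m : ℕ} (hm : A.length + S.length + 1 ≤ m) :
    (A ++ S ++ false :: B).getD m false = (A ++ false :: (S ++ B)).getD m false := by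
  rw [eq_append_rotate_src, eq_append_rotate_tgt,
    List.getD_append_right _ _ _ _ (by rw [length_rotate_tgt_prefix]; omega),
    List.getD_append_right _ _ _ _ (by rw [length_rotate_src_prefix]; omega)]
  congr 1
  simp only [List.length_append, List.length_cons, List.length_nil]
  omega

lemma height_rotate_src_mid {t : ℕ} (ht : t ≤ S.length) :
    height (A ++ false :: (S ++ B)) (A.length + 1 + t)
      = height (A ++ false :: (S ++ B)) A.length - 1 + height S t := by
  have hcons := height_append_add [false] (S ++ B) t
  rw [List.singleton_append, List.length_singleton, height_append_of_le _ _ ht] at hcons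
  have hdown : height [false] 1 = -1 := by simp [height, ups, downs]
  rw [height_append_of_le _ _ le_rfl, Nat.add_assoc, height_append_add, hcons, hdown]
  ring

lemma height_rotate_mid {t : ℕ} (ht : t ≤ S.length) :
    height (A ++ S ++ false :: B) (A.length + t)
      = height (A ++ false :: (S ++ B)) (A.length + t + 1) + 1 := by
  rw [show A.length + t + 1 = A.length + 1 + t by omega, height_rotate_src_mid A S B ht,
    List.append_assoc, height_append_add, height_append_of_le _ _ ht,
    height_append_of_le _ _ le_rfl]
  ring

lemma height_rotate_of_not_mid {m : ℕ} (hm : m ≤ A.length ∨ A.length + S.length + 1 ≤ m) :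
    height (A ++ S ++ false :: B) m = height (A ++ false :: (S ++ B)) m :=
  hm.elim (height_rotate_of_le A S B) (height_rotate_of_ge A S B)

variable {A S B}

lemma isDyckWord_rotate (hP : IsDyckWord (A ++ false :: (S ++ B))) :
    IsDyckWord (A ++ S ++ false :: B) := by
  obtain ⟨hzero, hnonneg⟩ := (isDyckWord_iff_height _).1 hP
  refine (isDyckWord_iff_height _).2 ⟨?_, fun m => ?_⟩
  · rw [length_rotate,
      height_rotate_of_ge A S B (by simp only [List.length_append, List.length_cons]; omega),
      hzero]
  · by_cases hm : m ≤ A.length ∨ A.length + S.length + 1 ≤ m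
    · rw [height_rotate_of_not_mid A S B hm]
      exact hnonneg m
    · obtain ⟨t, rfl⟩ := Nat.exists_eq_add_of_le (show A.length ≤ m by omega)
      rw [height_rotate_mid A S B (by omega)]
      have := hnonneg (A.length + t + 1)
      omega

lemma excEnd_rotate_of_not_mid (hP : IsDyckWord (A ++ false :: (S ++ B))) {p : ℕ}
    (hu : (A ++ false :: (S ++ B)).getD p false = true)
    (hp : p ≤ A.length ∨ A.length + S.length + 1 ≤ p)
    (hf : excEnd (A ++ false :: (S ++ B)) p ≤ A.length ∨
      A.length + S.length + 1 < excEnd (A ++ false :: (S ++ B)) p) :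
    excEnd (A ++ S ++ false :: B) p = excEnd (A ++ false :: (S ++ B)) p := by
  obtain ⟨hgt, -, heq, hmid⟩ := excEnd_spec hP hu
  refine excEnd_eq_of (by omega) ?_ fun x hpx hxf => ?_
  · rw [height_rotate_of_not_mid A S B hp, height_rotate_of_not_mid A S B (by omega), heq]
  · rw [height_rotate_of_not_mid A S B hp]
    by_cases hx : x ≤ A.length ∨ A.length + S.length + 1 ≤ x
    · rw [height_rotate_of_not_mid A S B hx]
      exact hmid x hpx hxf
    · obtain ⟨t, rfl⟩ := Nat.exists_eq_add_of_le (show A.length ≤ x by omega)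
      rw [height_rotate_mid A S B (by omega)]
      have := hmid (A.length + t + 1) (by omega) (by omega)
      omega

lemma excEnd_rotate_of_eq (hP : IsDyckWord (A ++ false :: (S ++ B))) (hS : IsDyckWord S)
    {p : ℕ} (hu : (A ++ false :: (S ++ B)).getD p false = true)
    (hf : excEnd (A ++ false :: (S ++ B)) p = A.length + 1) :
    excEnd (A ++ S ++ false :: B) p = A.length + S.length + 1 := by
  obtain ⟨hgt, -, heq, hmid⟩ := excEnd_spec hP hu
  obtain ⟨hSzero, hSnonneg⟩ := (isDyckWord_iff_height S).1 hS
  have hA := hmid A.length (by omega) (by omega)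
  have hA1 := height_rotate_src_mid A S B (Nat.zero_le _)
  rw [height_zero, Nat.add_zero] at hA1
  rw [hf] at heq
  refine excEnd_eq_of (by omega) ?_ fun x hpx hxe => ?_
  · rw [height_rotate_of_ge A S B le_rfl, height_rotate_of_le A S B (by omega),
      show A.length + S.length + 1 = A.length + 1 + S.length by omega,
      height_rotate_src_mid A S B le_rfl, hSzero]
    omega
  · rw [height_rotate_of_le A S B (show p ≤ A.length by omega)]
    rcases le_or_gt x A.length with hx | hx
    · rw [height_rotate_of_le A S B hx]
      exact hmid x hpx (by omega)
    · obtain ⟨t, rfl⟩ := Nat.exists_eq_add_of_le hx.le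
      rw [height_rotate_mid A S B (by omega), show A.length + t + 1 = A.length + 1 + t by omega,
        height_rotate_src_mid A S B (by omega)]
      have := hSnonneg t
      omega

lemma lt_excEnd_of_lt_excEnd (hP : IsDyckWord (A ++ false :: (S ++ B))) (hS : IsDyckWord S)
    {p : ℕ} (hu : (A ++ false :: (S ++ B)).getD p false = true) (hpA : p < A.length)
    (hf : A.length + 1 < excEnd (A ++ false :: (S ++ B)) p) :
    A.length + S.length + 1 < excEnd (A ++ false :: (S ++ B)) p := by
  obtain ⟨-, -, heq, hmid⟩ := excEnd_spec hP hu
  by_contra! hle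
  obtain ⟨t, ht⟩ :=
    Nat.exists_eq_add_of_le (show A.length + 1 ≤ excEnd (A ++ false :: (S ++ B)) p by omega)
  have h₁ := hmid (A.length + 1) (by omega) hf
  have h₂ := height_rotate_src_mid A S B (show t ≤ S.length by omega)
  have h₃ := height_rotate_src_mid A S B (Nat.zero_le S.length)
  have := ((isDyckWord_iff_height S).1 hS).2 t
  rw [height_zero, Nat.add_zero] at h₃
  rw [← ht] at h₂
  omega

lemma eq_append_singleton_rotate_src : A ++ false :: (S ++ B) = (A ++ [false]) ++ (S ++ B) := by
  simp

lemma ups_rotate_src_mid {t : ℕ} (ht : t ≤ S.length) :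
    ups (A ++ false :: (S ++ B)) (A.length + 1 + t) = A.count true + ups S t := by
  have h := ups_append_append (u := A ++ [false]) B ht
  simp only [List.length_append, List.length_singleton, List.count_append,
    List.count_singleton, ← eq_append_singleton_rotate_src] at h
  simpa using h

lemma getD_rotate_src_mid {t : ℕ} (ht : t < S.length) :
    (A ++ false :: (S ++ B)).getD (A.length + 1 + t) false = S.getD t false := by
  have h := getD_append_append (u := A ++ [false]) B ht
  simpa only [List.length_append, List.length_singleton, ← eq_append_singleton_rotate_src] using h

lemma getD_rotate_src_length : (A ++ false :: (S ++ B)).getD A.length false = false := by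
  rw [List.getD_append_right _ _ _ _ le_rfl, Nat.sub_self, List.getD_cons_zero]

lemma excEnd_rotate_src_mid (hS : IsDyckWord S) {q : ℕ} (hq : S.getD q false = true) :
    excEnd (A ++ false :: (S ++ B)) (A.length + 1 + q) = A.length + 1 + excEnd S q := by
  have h := excEnd_append_append (u := A ++ [false]) B hS hq
  simpa only [List.length_append, List.length_singleton, ← eq_append_singleton_rotate_src] using h

lemma endRank_rotate_of_lt (hP : IsDyckWord (A ++ false :: (S ++ B))) (hS : IsDyckWord S)
    {k : ℕ} (hk : k < (A ++ false :: (S ++ B)).count true)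
    (hpA : nthUp (A ++ false :: (S ++ B)) k < A.length) :
    endRank (A ++ S ++ false :: B) k = endRank (A ++ false :: (S ++ B)) k +
      if excEnd (A ++ false :: (S ++ B)) (nthUp (A ++ false :: (S ++ B)) k) = A.length + 1
      then S.count true else 0 := by
  obtain ⟨hup, hups⟩ := nthUp_spec hk
  have hQ : nthUp (A ++ S ++ false :: B) k = nthUp (A ++ false :: (S ++ B)) k := by
    conv_lhs => rw [← hups, ← ups_rotate_of_le A S B hpA.le]
    exact nthUp_ups (by rw [getD_rotate_of_lt A S B hpA]; exact hup)
  have hgt := (excEnd_spec hP hup).1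
  unfold endRank
  rw [hQ]
  rcases lt_trichotomy (excEnd _ (nthUp (A ++ false :: (S ++ B)) k)) (A.length + 1)
    with hlt | heq | hgt'
  · rw [if_neg hlt.ne, excEnd_rotate_of_not_mid hP hup (Or.inl hpA.le) (Or.inl (by omega)),
      ups_rotate_of_le A S B (by omega), add_zero]
  · rw [if_pos heq, excEnd_rotate_of_eq hP hS hup heq, heq, ups_rotate_of_ge A S B le_rfl,
      show A.length + S.length + 1 = A.length + 1 + S.length by omega,
      ups_rotate_src_mid le_rfl, ← Nat.add_zero (A.length + 1),
      ups_rotate_src_mid (Nat.zero_le _),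
      ups_length]
    simp [ups]
  · have hout := lt_excEnd_of_lt_excEnd hP hS hup hpA hgt'
    rw [if_neg (by omega), excEnd_rotate_of_not_mid hP hup (Or.inl hpA.le) (Or.inr hout),
      ups_rotate_of_ge A S B hout.le, add_zero]

lemma endRank_rotate_of_mid (hS : IsDyckWord S) {k : ℕ}
    (hk : k < (A ++ false :: (S ++ B)).count true)
    (hAp : A.length < nthUp (A ++ false :: (S ++ B)) k)
    (hpS : nthUp (A ++ false :: (S ++ B)) k ≤ A.length + S.length) :
    endRank (A ++ S ++ false :: B) k = endRank (A ++ false :: (S ++ B)) k := by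
  obtain ⟨hup, hups⟩ := nthUp_spec hk
  obtain ⟨q, hq⟩ := Nat.exists_eq_add_of_le (show A.length + 1 ≤ nthUp _ k from hAp)
  rw [hq] at hup hups hpS
  have hqS : q < S.length := by omega
  rw [getD_rotate_src_mid hqS] at hup
  have hlt := (excEnd_spec hS hup).2.1
  have hQ : nthUp (A ++ S ++ false :: B) k = A.length + q := by
    rw [← hups, ups_rotate_src_mid hqS.le, ← ups_append_append (false :: B) hqS.le,
      ← List.append_assoc]
    exact nthUp_ups (by rw [List.append_assoc, getD_append_append _ hqS]; exact hup)
  unfold endRank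
  rw [hQ, hq, excEnd_rotate_src_mid hS hup, ups_rotate_src_mid hlt, List.append_assoc,
    excEnd_append_append _ hS hup, ups_append_append _ hlt]

lemma endRank_rotate_of_ge (hP : IsDyckWord (A ++ false :: (S ++ B))) {k : ℕ}
    (hk : k < (A ++ false :: (S ++ B)).count true)
    (hSp : A.length + S.length + 1 ≤ nthUp (A ++ false :: (S ++ B)) k) :
    endRank (A ++ S ++ false :: B) k = endRank (A ++ false :: (S ++ B)) k := by
  obtain ⟨hup, hups⟩ := nthUp_spec hk
  have hQ : nthUp (A ++ S ++ false :: B) k = nthUp (A ++ false :: (S ++ B)) k := by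
    conv_lhs => rw [← hups, ← ups_rotate_of_ge A S B hSp]
    exact nthUp_ups (by rw [getD_rotate_of_ge A S B hSp]; exact hup)
  have hgt := (excEnd_spec hP hup).1
  unfold endRank
  rw [hQ, excEnd_rotate_of_not_mid hP hup (Or.inr hSp) (Or.inr (by omega)),
    ups_rotate_of_ge A S B (by omega)]

lemma distFn_rotate (hP : IsDyckWord (A ++ false :: (S ++ B))) (hS : IsDyckWord S) {k : ℕ}
    (hk : k < (A ++ false :: (S ++ B)).count true) :
    distFn (A ++ S ++ false :: B) k = distFn (A ++ false :: (S ++ B)) k +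
      if excEnd (A ++ false :: (S ++ B)) (nthUp (A ++ false :: (S ++ B)) k) = A.length + 1
      then S.count true else 0 := by
  have hrank : endRank (A ++ S ++ false :: B) k = endRank (A ++ false :: (S ++ B)) k +
      if excEnd (A ++ false :: (S ++ B)) (nthUp (A ++ false :: (S ++ B)) k) = A.length + 1
      then S.count true else 0 := by
    obtain ⟨hup, -⟩ := nthUp_spec hk
    have hgt := (excEnd_spec hP hup).1
    rcases lt_trichotomy (nthUp (A ++ false :: (S ++ B)) k) A.length with hpA | hpA | hpA
    · exact endRank_rotate_of_lt hP hS hk hpA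
    · rw [hpA, getD_rotate_src_length] at hup
      exact absurd hup Bool.false_ne_true
    rw [if_neg (by omega)]
    rcases le_or_gt (nthUp (A ++ false :: (S ++ B)) k) (A.length + S.length) with hpS | hpS
    · exact endRank_rotate_of_mid hS hk hpA hpS
    · exact endRank_rotate_of_ge hP hk hpS
  have hkQ : k < (A ++ S ++ false :: B).count true := by rwa [count_rotate]
  rw [endRank_eq_add_distFn hP hk, endRank_eq_add_distFn (isDyckWord_rotate hP) hkQ] at hrank
  omega

lemma distFn_rotate_eq_ite (hP : IsDyckWord (A ++ false :: (S ++ B))) (hS : IsDyckWord S)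
    {i k : ℕ} (hi : i < (A ++ false :: (S ++ B)).count true)
    (hk : k < (A ++ false :: (S ++ B)).count true)
    (hend : excEnd (A ++ false :: (S ++ B)) (nthUp (A ++ false :: (S ++ B)) i) = A.length + 1) :
    distFn (A ++ S ++ false :: B) k =
      distFn (A ++ false :: (S ++ B)) k + if k = i then S.count true else 0 := by
  rw [distFn_rotate hP hS hk]
  congr 1
  exact if_congr ⟨fun h => eq_of_excEnd_nthUp_eq hP hk hi (h.trans hend.symm),
    fun h => h ▸ hend⟩ rfl rfl

end Rotate

section Order

variable {P Q : List Bool}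

lemma isDyckWord_of_rotation (h : Rotation P Q) (hP : IsDyckWord P) : IsDyckWord Q := by
  obtain ⟨A, S, B, -, -, -, rfl, rfl⟩ := h
  exact isDyckWord_rotate hP

lemma count_true_of_rotation (h : Rotation P Q) : Q.count true = P.count true := by
  obtain ⟨A, S, B, -, -, -, rfl, rfl⟩ := h
  exact count_rotate A S B true

lemma length_of_rotation (h : Rotation P Q) : Q.length = P.length := by
  obtain ⟨A, S, B, -, -, -, rfl, rfl⟩ := h
  exact length_rotate A S B

lemma distFn_le_of_rotation (h : Rotation P Q) (hP : IsDyckWord P) {k : ℕ}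
    (hk : k < P.count true) : distFn P k ≤ distFn Q k := by
  obtain ⟨A, S, B, hS, -, -, rfl, rfl⟩ := h
  rw [distFn_rotate hP hS hk]
  exact Nat.le_add_right _ _

lemma distFn_le_of_reflTransGen (h : Relation.ReflTransGen Rotation P Q) (hP : IsDyckWord P)
    {k : ℕ} (hk : k < P.count true) : distFn P k ≤ distFn Q k := by
  induction h using Relation.ReflTransGen.head_induction_on generalizing k with
  | refl => exact le_rfl
  | head hrot _ ih =>
    exact (distFn_le_of_rotation hrot hP hk).trans
      (ih (isDyckWord_of_rotation hrot hP) (by rwa [count_true_of_rotation hrot]))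

lemma exists_rotation_at (hP : IsDyckWord P) {f : ℕ} (hf : 0 < f)
    (hd : P.getD (f - 1) false = false) (hu : P.getD f false = true) :
    ∃ A S B, IsDyckWord S ∧ S ≠ [] ∧
      (∀ k, 0 < k → k < S.length → ¬ IsDyckWord (S.take k)) ∧
      P = A ++ false :: (S ++ B) ∧ A.length + 1 = f ∧ S.count true = distFn P (ups P f) := by
  have hS := isDyckWord_drop_take_excLen hP hu
  obtain ⟨hgt, hle, -, -⟩ := excEnd_spec hP hu
  have hexc := excLen_eq hP hu
  have hlen : ((P.drop f).take (excLen P f)).length = excLen P f := by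
    simp only [List.length_take, List.length_drop]
    omega
  refine ⟨P.take (f - 1), (P.drop f).take (excLen P f), (P.drop f).drop (excLen P f), hS,
    List.ne_nil_of_length_pos (by omega), fun k hk hkS => ?_, ?_,
    by rw [List.length_take]; omega, ?_⟩
  · rw [hlen] at hkS
    rw [List.take_take, Nat.min_eq_left hkS.le]
    exact not_isDyckWord_drop_take_of_lt_excLen hk hkS
  · have hf1 : f - 1 < P.length := by have := lt_length_of_getD hu; omega
    have hdrop := List.drop_eq_getElem_cons hf1
    rw [← List.getD_eq_getElem P false hf1, hd, Nat.sub_add_cancel hf] at hdrop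
    rw [List.take_append_drop, ← hdrop, List.take_append_drop]
  · have := two_mul_count_true hS
    rw [distFn, ← nthUp, nthUp_ups hu]
    omega

lemma getD_excEnd_nthUp_of_first_lt (hP : IsDyckWord P) (hQ : IsDyckWord Q)
    (hcount : Q.count true = P.count true) {i : ℕ} (hi : i < P.count true)
    (heq : ∀ k < i, distFn P k = distFn Q k) (hlt : distFn P i < distFn Q i) :
    P.getD (excEnd P (nthUp P i)) false = true := by
  obtain ⟨hup, hups⟩ := nthUp_spec hi
  obtain ⟨hgt, hle, hheq, hmid⟩ := excEnd_spec hP hup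
  have hrankP := endRank_eq_add_distFn hP hi
  have hrankQ := endRank_eq_add_distFn hQ (show i < Q.count true by omega)
  have hrankQ_le : endRank Q i ≤ Q.count true := ups_le_count Q _
  have hf : excEnd P (nthUp P i) < P.length := by
    refine lt_of_le_of_ne hle fun h => ?_
    have : endRank P i = P.count true := by rw [endRank, h, ups_length]
    omega
  by_contra hd
  rw [Bool.not_eq_true] at hd
  -- the down step after the excursion closes the excursion of an earlier up step `k`
  obtain ⟨k, hk, hkf, hkend, hkh⟩ := exists_excEnd_eq_succ hP hf hd
  have hdown := height_succ_of_down P hf hd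
  have hkp : nthUp P k < nthUp P i := by
    by_contra! h
    rcases h.eq_or_lt with h | h
    · rw [← h] at hkh
      omega
    rcases hkf.eq_or_lt with h' | h'
    · have := (nthUp_spec hk).1
      rw [h', hd] at this
      exact Bool.false_ne_true this
    · have := hmid _ h h'
      omega
  have hki : k < i := by rwa [nthUp_lt_iff hk, hups] at hkp
  have hrank_k : endRank P k = endRank P i := by
    rw [endRank, hkend, endRank, ups_succ P hf, hd]
    rfl
  have hrankPk := endRank_eq_add_distFn hP hk
  have hrankQk := endRank_eq_add_distFn hQ (show k < Q.count true by omega)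
  have := heq k hki
  have := lt_endRank hP hi
  -- `i` lies in the excursion of `k` in `Q` too, so its excursion there ends no later
  have hnest := endRank_le_of_lt_endRank hQ hki.le (show i < Q.count true by omega)
    (show i < endRank Q k by omega)
  omega

lemma exists_first_distFn_lt (hP : IsDyckWord P) (hQ : IsDyckWord Q)
    (hlen : P.length = Q.length) (hle : ∀ i < P.count true, distFn P i ≤ distFn Q i)
    (hne : P ≠ Q) :
    ∃ i < P.count true, distFn P i < distFn Q i ∧ ∀ k < i, distFn P k = distFn Q k := by
  classical
  have hex : ∃ i, i < P.count true ∧ distFn P i < distFn Q i := by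
    by_contra! h
    exact hne (eq_of_distFn_eq hP hQ hlen fun i hi => le_antisymm (hle i hi) (h i hi))
  obtain ⟨hi, hlt⟩ := Nat.find_spec hex
  refine ⟨Nat.find hex, hi, hlt, fun k hk => le_antisymm (hle k (by omega)) ?_⟩
  exact not_lt.1 fun h => Nat.find_min hex hk ⟨by omega, h⟩

lemma distFn_add_distFn_le (hP : IsDyckWord P) (hQ : IsDyckWord Q)
    (hcount : Q.count true = P.count true) (hle : ∀ i < P.count true, distFn P i ≤ distFn Q i)
    {i : ℕ} (hi : i < P.count true) (hlt : distFn P i < distFn Q i)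
    (hu : P.getD (excEnd P (nthUp P i)) false = true) :
    distFn P i + distFn P (endRank P i) ≤ distFn Q i := by
  have hj := ups_lt_count hu
  rw [← endRank] at hj
  have hrankP := endRank_eq_add_distFn hP hi
  have hrankQ := endRank_eq_add_distFn hQ (show i < Q.count true by omega)
  have hrankQj := endRank_eq_add_distFn hQ (show endRank P i < Q.count true by omega)
  -- the up step right after the excursion of `i` in `P` lies inside its excursion in `Q`
  have hnest := endRank_le_of_lt_endRank hQ (show i ≤ endRank P i by omega)
    (show endRank P i < Q.count true by omega) (by omega)
  have := hle _ hj
  omega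

lemma exists_rotation_toward (hP : IsDyckWord P) (hQ : IsDyckWord Q)
    (hlen : P.length = Q.length) (hle : ∀ i < P.count true, distFn P i ≤ distFn Q i)
    (hne : P ≠ Q) :
    ∃ P', Rotation P P' ∧ (∀ i < P.count true, distFn P' i ≤ distFn Q i) ∧
      ∑ i ∈ Finset.range (P.count true), distFn P i <
        ∑ i ∈ Finset.range (P.count true), distFn P' i := by
  have hcount : Q.count true = P.count true := by
    have := two_mul_count_true hP
    have := two_mul_count_true hQ
    omega
  obtain ⟨i, hi, hlt, heq⟩ := exists_first_distFn_lt hP hQ hlen hle hne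
  have hu := getD_excEnd_nthUp_of_first_lt hP hQ hcount hi heq hlt
  have hgain := distFn_add_distFn_le hP hQ hcount hle hi hlt hu
  obtain ⟨hgt, -, hheq, hmid⟩ := excEnd_spec hP (nthUp_spec hi).1
  have hd : P.getD (excEnd P (nthUp P i) - 1) false = false := by
    refine (down_of_height_succ_lt P ?_).2
    rw [Nat.sub_add_cancel (by omega), hheq]
    exact hmid _ (by omega) (by omega)
  obtain ⟨A, S, B, hS, hSne, hprim, rfl, hAf, hSsize⟩ := exists_rotation_at hP (by omega) hd hu
  have heffect := fun k (hk : k < _) => distFn_rotate_eq_ite hP hS hi hk hAf.symm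
  refine ⟨_, ⟨A, S, B, hS, hSne, hprim, rfl, rfl⟩, fun k hk => ?_, ?_⟩
  · rw [heffect k hk]
    split_ifs with hki
    · rw [hki, hSsize]
      exact hgain
    · simpa using hle k hk
  · refine Finset.sum_lt_sum (fun k hk => ?_) ⟨i, Finset.mem_range.2 hi, ?_⟩
    · rw [heffect k (Finset.mem_range.1 hk)]
      exact Nat.le_add_right _ _
    · have := two_mul_count_true hS
      have := List.length_pos_of_ne_nil hSne
      rw [heffect i hi, if_pos rfl]
      omega

lemma reflTransGen_of_distFn_le (hP : IsDyckWord P) (hQ : IsDyckWord Q)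
    (hlen : P.length = Q.length) (hle : ∀ i < P.count true, distFn P i ≤ distFn Q i) :
    Relation.ReflTransGen Rotation P Q := by
  induction hm : ∑ i ∈ Finset.range (P.count true), distFn Q i -
      ∑ i ∈ Finset.range (P.count true), distFn P i
    using Nat.strong_induction_on generalizing P with
  | _ m ih =>
    by_cases hne : P = Q
    · exact hne ▸ Relation.ReflTransGen.refl
    obtain ⟨P', hrot, hle', hsum⟩ := exists_rotation_toward hP hQ hlen hle hne
    have hcount := count_true_of_rotation hrot
    have hbound : ∑ i ∈ Finset.range (P.count true), distFn P' i ≤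
        ∑ i ∈ Finset.range (P.count true), distFn Q i :=
      Finset.sum_le_sum fun i hi => hle' i (Finset.mem_range.1 hi)
    refine .head hrot (ih _ ?_ (isDyckWord_of_rotation hrot hP)
      ((length_of_rotation hrot).trans hlen) (by rwa [hcount]) rfl)
    rw [hcount]
    omega

end Order

end Tamari

/-- For Dyck paths P, Q of size n, P ≤ Q in the Tamari lattice (the reflexive-transitive
closure of the rotation relation) iff D_P(i) ≤ D_Q(i) for all ranks i. -/
theorem tamari_le_iff_distFn_le (n : ℕ) (P Q : List Bool)
    (hP : IsDyckWord P) (hQ : IsDyckWord Q)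
    (hPn : P.length = 2*n) (hQn : Q.length = 2*n) :
    Relation.ReflTransGen Rotation P Q ↔ ∀ i < n, distFn P i ≤ distFn Q i := by
  obtain rfl : P.count true = n := by
    have := Tamari.two_mul_count_true hP
    omega
  exact ⟨fun h _ hi => Tamari.distFn_le_of_reflTransGen h hP hi,
    Tamari.reflTransGen_of_distFn_le hP hQ (hPn.trans hQn.symm)⟩
end
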